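/- arXiv:2511.05046 — 5 statements merged into one kernel-verified Lean document; each statement's English description precedes it below -/
import Mathlib

section
/- Let Ω ⊂ ℂ be a finite set, d ≥ 1, and let f₀, f₁, g₀, g₁ : ℂ → ℂ^d satisfy fⱼᵀ(ξ)gₖ(ξ) = 0 for all ξ ∈ Ω and j, k ∈ {0,1}. Let K(ξ,η) be the 2×2 kernel defined by K(ξ,ξ) = 0 and, for ξ ≠ η, K₁₁ = f₀ᵀ(ξ)g₀(η)/(ξ−η), K₁₂ = f₀ᵀ(ξ)g₁(η)/(ξ−η) + f₀ᵀ(ξ)g₀(η)/(ξ−η)², K₂₁ = f₁ᵀ(ξ)g₀(η)/(ξ−η) − f₀ᵀ(ξ)g₀(η)/(ξ−η)², K₂₂ = f₁ᵀ(ξ)g₁(η)/(ξ−η) + (f₁ᵀ(ξ)g₀(η) − f₀ᵀ(ξ)g₁(η))/(ξ−η)² − 2f₀ᵀ(ξ)g₀(η)/(ξ−η)³. Suppose F₀, F₁ : Ω → ℂ^d satisfy, for every ξ ∈ Ω: F₀(ξ) = f₀(ξ) + Σ_{η∈Ω}[K₁₁(ξ,η)F₁(η) + K₁₂(ξ,η)F₀(η)]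 and F₁(ξ) = f₁(ξ) + Σ_{η∈Ω}[K₂₁(ξ,η)F₁(η) + K₂₂(ξ,η)F₀(η)]. Define, for ξ ∈ ℂ∖Ω, the d×d matrix function M(ξ) = I + Σ_{η∈Ω}[F₀(η)g₀ᵀ(η)/(ξ−η)² + (F₁(η)g₀ᵀ(η) + F₀(η)g₁ᵀ(η))/(ξ−η)]. Then for every κ ∈ Ω: (a) M(ξ)·f₀(κ) tends to F₀(κ) as ξ → κ with ξ ∈ ℂ∖Ω; and (b) M(ξ)·f₁(κ) + M′(ξ)·f₀(κ) tends to F₁(κ) as ξ → κ with ξ ∈ ℂ∖Ω, where M′ denotes the entrywise derivative of M with respect to ξ and M·v denotes matrix–vector multiplication. -/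
open Matrix Topology Filter

private lemma sum_mulVec' {d : ℕ} (s : Finset ℂ) (A : ℂ → Matrix (Fin d) (Fin d) ℂ)
    (v : Fin d → ℂ) : (∑ η ∈ s, A η) *ᵥ v = ∑ η ∈ s, A η *ᵥ v := by
  ext i
  simp [mulVec, dotProduct, Matrix.sum_apply, Finset.sum_mul]
  rw [Finset.sum_comm]

private lemma vecMulVec_mulVec' {d : ℕ} (w u v : Fin d → ℂ) :
    Matrix.vecMulVec w u *ᵥ v = (u ⬝ᵥ v) • w := by
  ext i
  simp only [mulVec, dotProduct, vecMulVec_apply, Pi.smul_apply, smul_eq_mul]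
  rw [Finset.sum_mul]
  exact Finset.sum_congr rfl fun j _ => by ring

theorem M_residue_limits
    (Ω : Finset ℂ) (d : ℕ) (hd : 1 ≤ d)
    (f₀ f₁ g₀ g₁ : ℂ → Fin d → ℂ)
    (horth : ∀ ξ ∈ Ω, f₀ ξ ⬝ᵥ g₀ ξ = 0 ∧ f₀ ξ ⬝ᵥ g₁ ξ = 0 ∧
      f₁ ξ ⬝ᵥ g₀ ξ = 0 ∧ f₁ ξ ⬝ᵥ g₁ ξ = 0)
    (K : ℂ → ℂ → Matrix (Fin 2) (Fin 2) ℂ)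
    (hKdiag : ∀ ξ, K ξ ξ = 0)
    (hK11 : ∀ ξ η, ξ ≠ η → K ξ η 0 0 = (f₀ ξ ⬝ᵥ g₀ η) / (ξ - η))
    (hK12 : ∀ ξ η, ξ ≠ η → K ξ η 0 1 =
      (f₀ ξ ⬝ᵥ g₁ η) / (ξ - η) + (f₀ ξ ⬝ᵥ g₀ η) / (ξ - η) ^ 2)
    (hK21 : ∀ ξ η, ξ ≠ η → K ξ η 1 0 =
      (f₁ ξ ⬝ᵥ g₀ η) / (ξ - η) - (f₀ ξ ⬝ᵥ g₀ η) / (ξ - η) ^ 2)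
    (hK22 : ∀ ξ η, ξ ≠ η → K ξ η 1 1 =
      (f₁ ξ ⬝ᵥ g₁ η) / (ξ - η) +
        ((f₁ ξ ⬝ᵥ g₀ η) - (f₀ ξ ⬝ᵥ g₁ η)) / (ξ - η) ^ 2 -
        2 * (f₀ ξ ⬝ᵥ g₀ η) / (ξ - η) ^ 3)
    (F₀ F₁ : ℂ → Fin d → ℂ)
    (hF₀ : ∀ ξ ∈ Ω, F₀ ξ = f₀ ξ + ∑ η ∈ Ω, (K ξ η 0 0 • F₁ η + K ξ η 0 1 • F₀ η))
    (hF₁ : ∀ ξ ∈ Ω, F₁ ξ = f₁ ξ + ∑ η ∈ Ω, (K ξ η 1 0 • F₁ η + K ξ η 1 1 • F₀ η))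
    (M : ℂ → Matrix (Fin d) (Fin d) ℂ)
    (hM : ∀ ξ, M ξ = 1 + ∑ η ∈ Ω,
      ((1 / (ξ - η) ^ 2) • Matrix.vecMulVec (F₀ η) (g₀ η) +
        (1 / (ξ - η)) • (Matrix.vecMulVec (F₁ η) (g₀ η) +
          Matrix.vecMulVec (F₀ η) (g₁ η)))) :
    ∀ κ ∈ Ω,
      Tendsto (fun ξ => M ξ *ᵥ f₀ κ) (𝓝[(↑Ω : Set ℂ)ᶜ] κ) (𝓝 (F₀ κ)) ∧
      Tendsto (fun ξ => M ξ *ᵥ f₁ κ +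
          (Matrix.of fun i j => deriv (fun z => M z i j) ξ) *ᵥ f₀ κ)
        (𝓝[(↑Ω : Set ℂ)ᶜ] κ) (𝓝 (F₁ κ)) := by
  intro κ hκ
  obtain ⟨h00, h01, h10, h11⟩ := horth κ hκ
  -- convenient dot-product facts
  have hg00 : g₀ κ ⬝ᵥ f₀ κ = 0 := by rw [dotProduct_comm]; exact h00
  have hg10 : g₁ κ ⬝ᵥ f₀ κ = 0 := by rw [dotProduct_comm]; exact h01
  have hg01 : g₀ κ ⬝ᵥ f₁ κ = 0 := by rw [dotProduct_comm]; exact h10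
  have hg11 : g₁ κ ⬝ᵥ f₁ κ = 0 := by rw [dotProduct_comm]; exact h11
  -- expansion of M ξ *ᵥ v
  have hMv : ∀ (v : Fin d → ℂ) (ξ : ℂ), M ξ *ᵥ v = v + ∑ η ∈ Ω,
      ((1 / (ξ - η) ^ 2 * (g₀ η ⬝ᵥ v)) • F₀ η +
        ((1 / (ξ - η) * (g₀ η ⬝ᵥ v)) • F₁ η + (1 / (ξ - η) * (g₁ η ⬝ᵥ v)) • F₀ η)) := by
    intro v ξ
    rw [hM ξ, add_mulVec, one_mulVec, sum_mulVec']
    congr 1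
    refine Finset.sum_congr rfl fun η _ => ?_
    rw [add_mulVec, smul_mulVec, smul_mulVec, add_mulVec,
      vecMulVec_mulVec', vecMulVec_mulVec', vecMulVec_mulVec', smul_add,
      smul_smul, smul_smul, smul_smul]
  -- the derivative matrix
  set Dm : ℂ → Matrix (Fin d) (Fin d) ℂ := fun ξ => ∑ η ∈ Ω,
      ((-2 / (ξ - η) ^ 3) • Matrix.vecMulVec (F₀ η) (g₀ η) +
        (-1 / (ξ - η) ^ 2) • (Matrix.vecMulVec (F₁ η) (g₀ η) +
          Matrix.vecMulVec (F₀ η) (g₁ η))) with hDm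
  have hderiv : ∀ ξ ∉ (↑Ω : Set ℂ), ∀ i j,
      HasDerivAt (fun z => M z i j) (Dm ξ i j) ξ := by
    intro ξ hξ i j
    have hne : ∀ η ∈ Ω, ξ - η ≠ 0 := fun η hη =>
      sub_ne_zero.mpr (fun h => hξ (by simpa [h] using hη))
    have key : HasDerivAt (fun z => (1 : Matrix (Fin d) (Fin d) ℂ) i j + ∑ η ∈ Ω,
        (1 / (z - η) ^ 2 * (F₀ η i * g₀ η j) +
          1 / (z - η) * (F₁ η i * g₀ η j + F₀ η i * g₁ η j)))
        (∑ η ∈ Ω, (-2 / (ξ - η) ^ 3 * (F₀ η i * g₀ η j) +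
          -1 / (ξ - η) ^ 2 * (F₁ η i * g₀ η j + F₀ η i * g₁ η j))) ξ := by
      refine HasDerivAt.const_add _ (HasDerivAt.fun_sum fun η hη => ?_)
      have h1 : HasDerivAt (fun z : ℂ => z - η) 1 ξ := (hasDerivAt_id ξ).sub_const η
      have h2 : HasDerivAt (fun z : ℂ => (z - η) ^ 2) (2 * (ξ - η)) ξ := by
        simpa using h1.fun_pow 2
      have hz : ξ - η ≠ 0 := hne η hη
      have hd2 : HasDerivAt (fun z : ℂ => 1 / (z - η) ^ 2) (-2 / (ξ - η) ^ 3) ξ := by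
        have := (hasDerivAt_const ξ (1 : ℂ)).fun_div h2 (pow_ne_zero 2 hz)
        refine this.congr_deriv ?_
        field_simp
        ring
      have hd1 : HasDerivAt (fun z : ℂ => 1 / (z - η)) (-1 / (ξ - η) ^ 2) ξ := by
        have := (hasDerivAt_const ξ (1 : ℂ)).fun_div h1 hz
        refine this.congr_deriv ?_
        field_simp
        ring
      exact (hd2.mul_const _).add (hd1.mul_const _)
    have hfun : (fun z => M z i j) = fun z =>
        (1 : Matrix (Fin d) (Fin d) ℂ) i j + ∑ η ∈ Ω,
        (1 / (z - η) ^ 2 * (F₀ η i * g₀ η j) +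
          1 / (z - η) * (F₁ η i * g₀ η j + F₀ η i * g₁ η j)) := by
      funext z
      rw [hM z]
      simp [Matrix.add_apply, Matrix.sum_apply, Matrix.smul_apply, Matrix.add_apply,
        vecMulVec_apply, smul_eq_mul, mul_add]
    have hval : Dm ξ i j = ∑ η ∈ Ω, (-2 / (ξ - η) ^ 3 * (F₀ η i * g₀ η j) +
        -1 / (ξ - η) ^ 2 * (F₁ η i * g₀ η j + F₀ η i * g₁ η j)) := by
      rw [hDm]
      simp [Matrix.sum_apply, Matrix.smul_apply, Matrix.add_apply, vecMulVec_apply,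
        smul_eq_mul, mul_add]
    rw [hfun, hval]
    exact key
  -- expansion of Dm ξ *ᵥ v
  have hDv : ∀ (v : Fin d → ℂ) (ξ : ℂ), Dm ξ *ᵥ v = ∑ η ∈ Ω,
      ((-2 / (ξ - η) ^ 3 * (g₀ η ⬝ᵥ v)) • F₀ η +
        ((-1 / (ξ - η) ^ 2 * (g₀ η ⬝ᵥ v)) • F₁ η +
          (-1 / (ξ - η) ^ 2 * (g₁ η ⬝ᵥ v)) • F₀ η)) := by
    intro v ξ
    rw [hDm, sum_mulVec']
    refine Finset.sum_congr rfl fun η _ => ?_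
    rw [add_mulVec, smul_mulVec, smul_mulVec, add_mulVec,
      vecMulVec_mulVec', vecMulVec_mulVec', vecMulVec_mulVec', smul_add,
      smul_smul, smul_smul, smul_smul]
  constructor
  · -- part (a)
    set Ta : ℂ → ℂ → Fin d → ℂ := fun η ξ =>
      (1 / (ξ - η) ^ 2 * (g₀ η ⬝ᵥ f₀ κ)) • F₀ η +
        ((1 / (ξ - η) * (g₀ η ⬝ᵥ f₀ κ)) • F₁ η +
          (1 / (ξ - η) * (g₁ η ⬝ᵥ f₀ κ)) • F₀ η) with hTa
    have heq : (fun ξ => M ξ *ᵥ f₀ κ) = fun ξ => f₀ κ + ∑ η ∈ Ω, Ta η ξ := by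
      funext ξ; exact hMv (f₀ κ) ξ
    have hval : f₀ κ + ∑ η ∈ Ω, Ta η κ = F₀ κ := by
      rw [hF₀ κ hκ]
      congr 1
      refine Finset.sum_congr rfl fun η hη => ?_
      by_cases hηκ : η = κ
      · subst hηκ
        simp [hTa, hKdiag, hg00, hg10]
      · simp only [hTa]
        rw [hK11 κ η (Ne.symm hηκ), hK12 κ η (Ne.symm hηκ),
          dotProduct_comm (g₀ η), dotProduct_comm (g₁ η)]
        module
    have hcont : ∀ η ∈ Ω, Tendsto (Ta η) (𝓝 κ) (𝓝 (Ta η κ)) := by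
      intro η hη
      by_cases hηκ : η = κ
      · subst hηκ
        have : Ta η = fun _ => (0 : Fin d → ℂ) := by
          funext ξ; simp [hTa, hg00, hg10]
        rw [this]; exact tendsto_const_nhds
      · have hne : κ - η ≠ 0 := sub_ne_zero.mpr (Ne.symm hηκ)
        apply ContinuousAt.tendsto
        apply ContinuousAt.add
        · exact (((continuousAt_const.div ((continuousAt_id.sub continuousAt_const).pow 2)
            (pow_ne_zero 2 hne)).mul continuousAt_const).smul continuousAt_const)
        · exact (((continuousAt_const.div (continuousAt_id.sub continuousAt_const)
            hne).mul continuousAt_const).smul continuousAt_const).add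
            (((continuousAt_const.div (continuousAt_id.sub continuousAt_const)
            hne).mul continuousAt_const).smul continuousAt_const)
    rw [heq, ← hval]
    exact (tendsto_const_nhds.add (tendsto_finset_sum _ hcont)).mono_left nhdsWithin_le_nhds
  · -- part (b)
    set Tb : ℂ → ℂ → Fin d → ℂ := fun η ξ =>
      ((1 / (ξ - η) ^ 2 * (g₀ η ⬝ᵥ f₁ κ)) • F₀ η +
        ((1 / (ξ - η) * (g₀ η ⬝ᵥ f₁ κ)) • F₁ η +
          (1 / (ξ - η) * (g₁ η ⬝ᵥ f₁ κ)) • F₀ η)) +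
      ((-2 / (ξ - η) ^ 3 * (g₀ η ⬝ᵥ f₀ κ)) • F₀ η +
        ((-1 / (ξ - η) ^ 2 * (g₀ η ⬝ᵥ f₀ κ)) • F₁ η +
          (-1 / (ξ - η) ^ 2 * (g₁ η ⬝ᵥ f₀ κ)) • F₀ η)) with hTb
    have heq' : ∀ ξ ∈ (↑Ω : Set ℂ)ᶜ,
        M ξ *ᵥ f₁ κ + (Matrix.of fun i j => deriv (fun z => M z i j) ξ) *ᵥ f₀ κ =
          f₁ κ + ∑ η ∈ Ω, Tb η ξ := by
      intro ξ hξ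
      have hD : (Matrix.of fun i j => deriv (fun z => M z i j) ξ) = Dm ξ := by
        ext i j
        exact (hderiv ξ hξ i j).deriv
      rw [hD, hMv (f₁ κ) ξ, hDv (f₀ κ) ξ, add_assoc, ← Finset.sum_add_distrib]
    have hval : f₁ κ + ∑ η ∈ Ω, Tb η κ = F₁ κ := by
      rw [hF₁ κ hκ]
      congr 1
      refine Finset.sum_congr rfl fun η hη => ?_
      by_cases hηκ : η = κ
      · subst hηκ
        simp [hTb, hKdiag, hg00, hg10, hg01, hg11]
      · simp only [hTb]
        rw [hK21 κ η (Ne.symm hηκ), hK22 κ η (Ne.symm hηκ),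
          dotProduct_comm (g₀ η) (f₁ κ), dotProduct_comm (g₁ η) (f₁ κ),
          dotProduct_comm (g₀ η) (f₀ κ), dotProduct_comm (g₁ η) (f₀ κ)]
        have e1 : (1 : ℂ) / (κ - η) * (f₁ κ ⬝ᵥ g₀ η) +
            -1 / (κ - η) ^ 2 * (f₀ κ ⬝ᵥ g₀ η) =
            (f₁ κ ⬝ᵥ g₀ η) / (κ - η) - (f₀ κ ⬝ᵥ g₀ η) / (κ - η) ^ 2 := by ring
        have e2 : (1 : ℂ) / (κ - η) ^ 2 * (f₁ κ ⬝ᵥ g₀ η) +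
            1 / (κ - η) * (f₁ κ ⬝ᵥ g₁ η) +
            -2 / (κ - η) ^ 3 * (f₀ κ ⬝ᵥ g₀ η) +
            -1 / (κ - η) ^ 2 * (f₀ κ ⬝ᵥ g₁ η) =
            (f₁ κ ⬝ᵥ g₁ η) / (κ - η) +
              ((f₁ κ ⬝ᵥ g₀ η) - (f₀ κ ⬝ᵥ g₁ η)) / (κ - η) ^ 2 -
              2 * (f₀ κ ⬝ᵥ g₀ η) / (κ - η) ^ 3 := by ring
        linear_combination (norm := module) e1 • F₁ η + e2 • F₀ η
    have hcont : ∀ η ∈ Ω, Tendsto (Tb η) (𝓝 κ) (𝓝 (Tb η κ)) := by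
      intro η hη
      by_cases hηκ : η = κ
      · subst hηκ
        have : Tb η = fun _ => (0 : Fin d → ℂ) := by
          funext ξ; simp [hTb, hg00, hg10, hg01, hg11]
        rw [this]; exact tendsto_const_nhds
      · have hne : κ - η ≠ 0 := sub_ne_zero.mpr (Ne.symm hηκ)
        apply ContinuousAt.tendsto
        apply ContinuousAt.add
        · exact (((continuousAt_const.div ((continuousAt_id.sub continuousAt_const).pow 2)
            (pow_ne_zero 2 hne)).mul continuousAt_const).smul continuousAt_const).add
            ((((continuousAt_const.div (continuousAt_id.sub continuousAt_const)
            hne).mul continuousAt_const).smul continuousAt_const).add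
            (((continuousAt_const.div (continuousAt_id.sub continuousAt_const)
            hne).mul continuousAt_const).smul continuousAt_const))
        · exact (((continuousAt_const.div ((continuousAt_id.sub continuousAt_const).pow 3)
            (pow_ne_zero 3 hne)).mul continuousAt_const).smul continuousAt_const).add
            ((((continuousAt_const.div ((continuousAt_id.sub continuousAt_const).pow 2)
            (pow_ne_zero 2 hne)).mul continuousAt_const).smul continuousAt_const).add
            (((continuousAt_const.div ((continuousAt_id.sub continuousAt_const).pow 2)
            (pow_ne_zero 2 hne)).mul continuousAt_const).smul continuousAt_const))
    have hT : Tendsto (fun ξ => f₁ κ + ∑ η ∈ Ω, Tb η ξ) (𝓝[(↑Ω : Set ℂ)ᶜ] κ) (𝓝 (F₁ κ)) := by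
      rw [← hval]
      exact (tendsto_const_nhds.add (tendsto_finset_sum _ hcont)).mono_left nhdsWithin_le_nhds
    exact hT.congr' (eventuallyEq_of_mem self_mem_nhdsWithin fun ξ hξ => (heq' ξ hξ).symm)
end

section
/- Let d ≥ 1, let m be a natural number, let τ ∈ ℂ, and let f, g : ℂ → ℂ^d be infinitely complex-differentiable functions such that (∂^j f)(τ)ᵀ · (∂^k g)(τ) = 0 for all 0 ≤ j, k ≤ m+1, where ∂^j denotes the j-th iterated derivative. Define the d×d matrices w⁽ˡ⁾ = ∂^l[ f(ξ) g(ξ)ᵀ ] evaluated at ξ = τ (the l-th iterated derivative of the outer-product matrix function). Then w⁽ʲ⁾ · w⁽ˡ⁾ = 0 for all 0 ≤ j, l ≤ m+1. -/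
open Matrix

open scoped ContDiff in
private lemma contDiff_iteratedDeriv' {E : Type*} [NormedAddCommGroup E]
    [NormedSpace ℂ E] {F : ℂ → E} (hF : ContDiff ℂ ∞ F) (a : ℕ) :
    ContDiff ℂ ∞ (iteratedDeriv a F) := by
  rw [iteratedDeriv_eq_iterate]
  exact hF.iterate_deriv a

open scoped ContDiff in
private lemma coord_iteratedDeriv {d : ℕ} {f : ℂ → Fin d → ℂ}
    (hf : ContDiff ℂ ∞ f) (a : ℕ) (i : Fin d) :
    iteratedDeriv a (fun z => f z i) = fun z => iteratedDeriv a f z i := by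
  induction a with
  | zero => simp
  | succ a ih =>
    funext x
    rw [iteratedDeriv_succ, ih, iteratedDeriv_succ]
    have hd : DifferentiableAt ℂ (iteratedDeriv a f) x :=
      ((contDiff_iteratedDeriv' hf a).differentiable (by simp)).differentiableAt
    exact (hasDerivAt_pi.1 hd.hasDerivAt i).deriv

open scoped ContDiff in
private lemma leibniz_iteratedDeriv {F G : ℂ → ℂ} (hF : ContDiff ℂ ∞ F)
    (hG : ContDiff ℂ ∞ G) (n : ℕ) (x : ℂ) :
    iteratedDeriv n (fun z => F z * G z) x =
      ∑ a ∈ Finset.range (n + 1),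
        (n.choose a : ℂ) * iteratedDeriv a F x * iteratedDeriv (n - a) G x := by
  induction n generalizing x with
  | zero => simp
  | succ n ih =>
    rw [iteratedDeriv_succ]
    have hfun : iteratedDeriv n (fun z => F z * G z) = fun x =>
        ∑ a ∈ Finset.range (n + 1),
          (n.choose a : ℂ) * iteratedDeriv a F x * iteratedDeriv (n - a) G x := by
      funext y; exact ih y
    rw [hfun]
    have hdF : ∀ a, Differentiable ℂ (iteratedDeriv a F) := fun a =>
      (contDiff_iteratedDeriv' hF a).differentiable (by simp)
    have hdG : ∀ a, Differentiable ℂ (iteratedDeriv a G) := fun a =>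
      (contDiff_iteratedDeriv' hG a).differentiable (by simp)
    rw [deriv_fun_sum (A := fun a y => (n.choose a : ℂ) * iteratedDeriv a F y * iteratedDeriv (n - a) G y) (fun a _ =>
      ((((hdF a).const_mul _).mul (hdG _)).differentiableAt))]
    have hterm : ∀ a ∈ Finset.range (n + 1),
        deriv (fun y => (n.choose a : ℂ) * iteratedDeriv a F y * iteratedDeriv (n - a) G y) x
        = (n.choose a : ℂ) * iteratedDeriv (a + 1) F x * iteratedDeriv (n + 1 - (a + 1)) G x
          + (n.choose a : ℂ) * iteratedDeriv a F x * iteratedDeriv (n - a + 1) G x := by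
      intro a _
      rw [show (fun y => (n.choose a : ℂ) * iteratedDeriv a F y * iteratedDeriv (n - a) G y)
          = fun y => (n.choose a : ℂ) * (iteratedDeriv a F y * iteratedDeriv (n - a) G y) by
        funext y; ring]
      rw [deriv_const_mul (d := fun y => iteratedDeriv a F y * iteratedDeriv (n - a) G y) _ (((hdF a).mul (hdG _)).differentiableAt),
        deriv_fun_mul ((hdF a).differentiableAt) ((hdG _).differentiableAt),
        ← iteratedDeriv_succ, ← iteratedDeriv_succ]
      rw [Nat.succ_sub_succ]
      ring
    rw [Finset.sum_congr rfl hterm, Finset.sum_add_distrib]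
    have h1 : ∑ a ∈ Finset.range (n + 1),
        (n.choose a : ℂ) * iteratedDeriv (a + 1) F x * iteratedDeriv (n + 1 - (a + 1)) G x
        = ∑ a ∈ Finset.range (n + 2), (if a = 0 then (0:ℂ) else
            (n.choose (a - 1) : ℂ)) * iteratedDeriv a F x * iteratedDeriv (n + 1 - a) G x := by
      rw [Finset.sum_range_succ' (fun a => (if a = 0 then (0:ℂ) else
            (n.choose (a - 1) : ℂ)) * iteratedDeriv a F x * iteratedDeriv (n + 1 - a) G x)]
      simp only [Nat.succ_ne_zero, if_false, if_true, ite_true, reduceIte, Nat.add_sub_cancel,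
        zero_mul, add_zero]
    have h2 : ∑ a ∈ Finset.range (n + 1),
        (n.choose a : ℂ) * iteratedDeriv a F x * iteratedDeriv (n - a + 1) G x
        = ∑ a ∈ Finset.range (n + 2), (if a = n + 1 then (0:ℂ) else
            (n.choose a : ℂ)) * iteratedDeriv a F x * iteratedDeriv (n + 1 - a) G x := by
      conv_rhs => rw [Finset.sum_range_succ]
      rw [if_pos rfl, zero_mul, zero_mul, add_zero]
      apply Finset.sum_congr rfl
      intro a ha
      simp only [Finset.mem_range] at ha
      rw [if_neg (by omega)]
      congr 2
      omega
    rw [h1, h2, ← Finset.sum_add_distrib]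
    apply Finset.sum_congr rfl
    intro a ha
    simp only [Finset.mem_range] at ha
    rcases Nat.eq_zero_or_pos a with rfl | hpos
    · simp
    · rw [if_neg (by omega)]
      by_cases h : a = n + 1
      · subst h
        rw [if_pos rfl]
        simp [Nat.add_sub_cancel, Nat.choose_self]
      · rw [if_neg h]
        have hc : (n + 1).choose a = n.choose (a - 1) + n.choose a := by
          conv_lhs => rw [show a = (a - 1) + 1 by omega]
          rw [Nat.choose_succ_succ', Nat.sub_add_cancel hpos]
        rw [hc]
        push_cast
        ring

theorem generalized_residue_data_nilpotent
    (d : ℕ) (hd : 1 ≤ d) (m : ℕ) (τ : ℂ)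
    (f g : ℂ → Fin d → ℂ)
    (hf : ContDiff ℂ ⊤ f) (hg : ContDiff ℂ ⊤ g)
    (horth : ∀ j k : ℕ, j ≤ m + 1 → k ≤ m + 1 →
      iteratedDeriv j f τ ⬝ᵥ iteratedDeriv k g τ = 0)
    (w : ℕ → Matrix (Fin d) (Fin d) ℂ)
    (hw : ∀ l : ℕ, w l = Matrix.of fun i j =>
      iteratedDeriv l (fun z => f z i * g z j) τ) :
    ∀ j l : ℕ, j ≤ m + 1 → l ≤ m + 1 → w j * w l = 0 := by
  intro j l hj hl
  have hf' : ContDiff ℂ ((⊤:ℕ∞):WithTop ℕ∞) f := hf.of_le le_top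
  have hg' : ContDiff ℂ ((⊤:ℕ∞):WithTop ℕ∞) g := hg.of_le le_top
  have hfc : ∀ i : Fin d, ContDiff ℂ ((⊤:ℕ∞):WithTop ℕ∞) (fun z => f z i) := fun i =>
    (ContinuousLinearMap.proj i : (Fin d → ℂ) →L[ℂ] ℂ).contDiff.comp hf'
  have hgc : ∀ i : Fin d, ContDiff ℂ ((⊤:ℕ∞):WithTop ℕ∞) (fun z => g z i) := fun i =>
    (ContinuousLinearMap.proj i : (Fin d → ℂ) →L[ℂ] ℂ).contDiff.comp hg'
  ext i k
  simp only [Matrix.mul_apply, Matrix.zero_apply, hw, Matrix.of_apply]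
  have key : ∀ p : Fin d, iteratedDeriv j (fun z => f z i * g z p) τ
      = ∑ a ∈ Finset.range (j + 1),
        (j.choose a : ℂ) * iteratedDeriv a f τ i * iteratedDeriv (j - a) g τ p := by
    intro p
    rw [leibniz_iteratedDeriv (hfc i) (hgc p) j τ]
    simp [coord_iteratedDeriv hf', coord_iteratedDeriv hg']
  have key2 : ∀ p : Fin d, iteratedDeriv l (fun z => f z p * g z k) τ
      = ∑ b ∈ Finset.range (l + 1),
        (l.choose b : ℂ) * iteratedDeriv b f τ p * iteratedDeriv (l - b) g τ k := by
    intro p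
    rw [leibniz_iteratedDeriv (hfc p) (hgc k) l τ]
    simp [coord_iteratedDeriv hf', coord_iteratedDeriv hg']
  calc ∑ p, iteratedDeriv j (fun z => f z i * g z p) τ *
        iteratedDeriv l (fun z => f z p * g z k) τ
      = ∑ p, ∑ a ∈ Finset.range (j + 1), ∑ b ∈ Finset.range (l + 1),
          ((j.choose a : ℂ) * iteratedDeriv a f τ i * iteratedDeriv (l - b) g τ k *
            (l.choose b : ℂ)) * (iteratedDeriv b f τ p * iteratedDeriv (j - a) g τ p) := by
        apply Finset.sum_congr rfl; intro p _
        rw [key p, key2 p, Finset.sum_mul_sum]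
        apply Finset.sum_congr rfl; intro a _
        apply Finset.sum_congr rfl; intro b _
        ring
    _ = ∑ a ∈ Finset.range (j + 1), ∑ b ∈ Finset.range (l + 1),
          ((j.choose a : ℂ) * iteratedDeriv a f τ i * iteratedDeriv (l - b) g τ k *
            (l.choose b : ℂ)) * (iteratedDeriv b f τ ⬝ᵥ iteratedDeriv (j - a) g τ) := by
        rw [Finset.sum_comm]
        apply Finset.sum_congr rfl; intro a _
        rw [Finset.sum_comm]
        apply Finset.sum_congr rfl; intro b _
        rw [← Finset.mul_sum, dotProduct]
    _ = 0 := by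
        apply Finset.sum_eq_zero; intro a ha
        apply Finset.sum_eq_zero; intro b hb
        simp only [Finset.mem_range] at ha hb
        rw [horth b (j - a) (by omega) (by omega), mul_zero]
end

section
/- Let d ≥ 1 and m a natural number. Let v₀, v₁, …, v_m be d×d complex matrices with v_a · v_b = 0 for all 0 ≤ a, b ≤ m, and let M_j, for integers j with −m−1 ≤ j ≤ m, be d×d complex matrices satisfying, for every integer j with −m−1 ≤ j ≤ −1, the relation M_j = Σ_{l=j+1}^{j+m+1} M_l · v_{j+m+1−l}. Then for every integer s with −m−1 ≤ s ≤ −1, Σ_{j=−m−1}^{s} M_j · v_{s−j} = 0. -/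
theorem mul_eq_zero_of_eq_sum_mul {R ι : Type*} [NonUnitalSemiring R] {s : Finset ι}
    {x w : R} {y u : ι → R} (hx : x = ∑ i ∈ s, y i * u i) (hu : ∀ i ∈ s, u i * w = 0) :
    x * w = 0 := by
  rw [hx, Finset.sum_mul]
  exact Finset.sum_eq_zero fun i hi => by rw [mul_assoc, hu i hi, mul_zero]

theorem residue_relations_imply_consistency_general
    (d : ℕ) (m : ℕ)
    (v : ℕ → Matrix (Fin d) (Fin d) ℂ)
    (hv : ∀ a b : ℕ, a ≤ m → b ≤ m → v a * v b = 0)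
    (M : ℤ → Matrix (Fin d) (Fin d) ℂ)
    (hM : ∀ j : ℤ, -(m + 1 : ℤ) ≤ j → j ≤ -1 →
      M j = ∑ l ∈ Finset.Icc (j + 1) (j + m + 1), M l * v (j + m + 1 - l).toNat) :
    ∀ s : ℤ, -(m + 1 : ℤ) ≤ s → s ≤ -1 →
      ∑ j ∈ Finset.Icc (-(m + 1 : ℤ)) s, M j * v (s - j).toNat = 0 := by
  intro s hs₁ hs₂
  refine Finset.sum_eq_zero fun j hj => ?_
  rw [Finset.mem_Icc] at hj
  refine mul_eq_zero_of_eq_sum_mul (hM j hj.1 (hj.2.trans hs₂)) fun l hl => ?_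
  rw [Finset.mem_Icc] at hl
  exact hv _ _ (by omega) (by omega)

theorem residue_relations_imply_consistency
    (d : ℕ) (hd : 1 ≤ d) (m : ℕ)
    (v : ℕ → Matrix (Fin d) (Fin d) ℂ)
    (hv : ∀ a b : ℕ, a ≤ m → b ≤ m → v a * v b = 0)
    (M : ℤ → Matrix (Fin d) (Fin d) ℂ)
    (hM : ∀ j : ℤ, -(m + 1 : ℤ) ≤ j → j ≤ -1 →
      M j = ∑ l ∈ Finset.Icc (j + 1) (j + m + 1), M l * v (j + m + 1 - l).toNat) :
    ∀ s : ℤ, -(m + 1 : ℤ) ≤ s → s ≤ -1 →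
      ∑ j ∈ Finset.Icc (-(m + 1 : ℤ)) s, M j * v (s - j).toNat = 0 :=
  residue_relations_imply_consistency_general d m v hv M hM
end

section
/- Let N be a natural number, h₀, …, h_N ∈ ℂ nonzero, h_{N} ≠ 0, and let P₀, …, P_{N+1} : ℂ → ℂ be differentiable functions such that for all x, y ∈ ℂ with x ≠ y, Σ_{n=0}^{N} P_n(x)P_n(y)/h_n = (P_{N+1}(x)P_N(y) − P_N(x)P_{N+1}(y))/(h_N(x−y)). Define the ℂ²-valued functions f₀(ξ) = (P_{N+1}(ξ), P_N(ξ))ᵀ/h_N, g₀(η) = (P_N(η), −P_{N+1}(η))ᵀ, f₁ = f₀′ and g₁ = g₀′ (componentwise derivatives). Then for all ξ, η ∈ ℂ with ξ ≠ η: (a) Σ_{n=0}^{N} P_n(ξ)P_n′(η)/h_n = f₀ᵀ(ξ)g₁(η)/(ξ−η) + f₀ᵀ(ξ)g₀(η)/(ξ−η)²; (b) Σ_{n=0}^{N} P_n′(ξ)P_n(η)/h_n = f₁ᵀ(ξ)g₀(η)/(ξ−η) − f₀ᵀ(ξ)g₀(η)/(ξ−η)²; (c) Σ_{n=0}^{N}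 P_n′(ξ)P_n′(η)/h_n = f₁ᵀ(ξ)g₁(η)/(ξ−η) + (f₁ᵀ(ξ)g₀(η) − f₀ᵀ(ξ)g₁(η))/(ξ−η)² − 2f₀ᵀ(ξ)g₀(η)/(ξ−η)³. -/
open Matrix

theorem matrix_kernel_entries_from_CD
    (N : ℕ) (h : ℕ → ℂ) (hh : ∀ n ≤ N, h n ≠ 0) (hhN : h N ≠ 0)
    (P : ℕ → ℂ → ℂ)
    (hdiff : ∀ n ≤ N + 1, Differentiable ℂ (P n))
    (hCD : ∀ x y : ℂ, x ≠ y →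
      ∑ n ∈ Finset.range (N + 1), P n x * P n y / h n =
        (P (N + 1) x * P N y - P N x * P (N + 1) y) / (h N * (x - y)))
    (f₀ f₁ g₀ g₁ : ℂ → Fin 2 → ℂ)
    (hf₀ : ∀ ξ, f₀ ξ = (h N)⁻¹ • ![P (N + 1) ξ, P N ξ])
    (hg₀ : ∀ η, g₀ η = ![P N η, -P (N + 1) η])
    (hf₁ : ∀ ξ i, f₁ ξ i = deriv (fun z => f₀ z i) ξ)
    (hg₁ : ∀ η i, g₁ η i = deriv (fun z => g₀ z i) η) :
    ∀ ξ η : ℂ, ξ ≠ η →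
      (∑ n ∈ Finset.range (N + 1), P n ξ * deriv (P n) η / h n =
        (f₀ ξ ⬝ᵥ g₁ η) / (ξ - η) + (f₀ ξ ⬝ᵥ g₀ η) / (ξ - η) ^ 2) ∧
      (∑ n ∈ Finset.range (N + 1), deriv (P n) ξ * P n η / h n =
        (f₁ ξ ⬝ᵥ g₀ η) / (ξ - η) - (f₀ ξ ⬝ᵥ g₀ η) / (ξ - η) ^ 2) ∧
      (∑ n ∈ Finset.range (N + 1), deriv (P n) ξ * deriv (P n) η / h n =
        (f₁ ξ ⬝ᵥ g₁ η) / (ξ - η) +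
          ((f₁ ξ ⬝ᵥ g₀ η) - (f₀ ξ ⬝ᵥ g₁ η)) / (ξ - η) ^ 2 -
          2 * (f₀ ξ ⬝ᵥ g₀ η) / (ξ - η) ^ 3) := by
  -- notation
  set p : ℂ → ℂ := P (N + 1) with hp
  set q : ℂ → ℂ := P N with hq
  have hdp : Differentiable ℂ p := hdiff (N + 1) le_rfl
  have hdq : Differentiable ℂ q := hdiff N (by omega)
  -- explicit component values
  have hf₀0 : ∀ ξ, f₀ ξ 0 = (h N)⁻¹ * p ξ := by
    intro ξ; rw [hf₀]; simp
  have hf₀1 : ∀ ξ, f₀ ξ 1 = (h N)⁻¹ * q ξ := by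
    intro ξ; rw [hf₀]; simp
  have hg₀0 : ∀ η, g₀ η 0 = q η := by
    intro η; rw [hg₀]; simp
  have hg₀1 : ∀ η, g₀ η 1 = -p η := by
    intro η; rw [hg₀]; simp
  have hf₁0 : ∀ ξ, f₁ ξ 0 = (h N)⁻¹ * deriv p ξ := by
    intro ξ; rw [hf₁]
    have : (fun z => f₀ z 0) = fun z => (h N)⁻¹ * p z := funext fun z => hf₀0 z
    rw [this, deriv_const_mul _ (hdp ξ)]
  have hf₁1 : ∀ ξ, f₁ ξ 1 = (h N)⁻¹ * deriv q ξ := by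
    intro ξ; rw [hf₁]
    have : (fun z => f₀ z 1) = fun z => (h N)⁻¹ * q z := funext fun z => hf₀1 z
    rw [this, deriv_const_mul _ (hdq ξ)]
  have hg₁0 : ∀ η, g₁ η 0 = deriv q η := by
    intro η; rw [hg₁]
    have : (fun z => g₀ z 0) = q := funext fun z => hg₀0 z
    rw [this]
  have hg₁1 : ∀ η, g₁ η 1 = -deriv p η := by
    intro η; rw [hg₁]
    have : (fun z => g₀ z 1) = fun z => -p z := funext fun z => hg₀1 z
    rw [this, deriv.fun_neg]
  -- dot products
  have d00 : ∀ ξ η, f₀ ξ ⬝ᵥ g₀ η = (h N)⁻¹ * (p ξ * q η - q ξ * p η) := by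
    intro ξ η
    simp [dotProduct, Fin.sum_univ_two, hf₀0, hf₀1, hg₀0, hg₀1]; ring
  have d01 : ∀ ξ η, f₀ ξ ⬝ᵥ g₁ η = (h N)⁻¹ * (p ξ * deriv q η - q ξ * deriv p η) := by
    intro ξ η
    simp [dotProduct, Fin.sum_univ_two, hf₀0, hf₀1, hg₁0, hg₁1]; ring
  have d10 : ∀ ξ η, f₁ ξ ⬝ᵥ g₀ η = (h N)⁻¹ * (deriv p ξ * q η - deriv q ξ * p η) := by
    intro ξ η
    simp [dotProduct, Fin.sum_univ_two, hf₁0, hf₁1, hg₀0, hg₀1]; ring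
  have d11 : ∀ ξ η, f₁ ξ ⬝ᵥ g₁ η = (h N)⁻¹ * (deriv p ξ * deriv q η - deriv q ξ * deriv p η) := by
    intro ξ η
    simp [dotProduct, Fin.sum_univ_two, hf₁0, hf₁1, hg₁0, hg₁1]; ring
  -- derivative of the sum in the second variable
  have sumD2 : ∀ x y : ℂ,
      HasDerivAt (fun z => ∑ n ∈ Finset.range (N + 1), P n x * P n z / h n)
        (∑ n ∈ Finset.range (N + 1), P n x * deriv (P n) y / h n) y := by
    intro x y
    apply HasDerivAt.fun_sum
    intro n hn
    have hn' : n ≤ N + 1 := by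
      have := Finset.mem_range.mp hn; omega
    exact (((hdiff n hn' y).hasDerivAt.const_mul (P n x)).div_const (h n))
  -- derivative of the sum in the first variable
  have sumD1 : ∀ x y : ℂ,
      HasDerivAt (fun z => ∑ n ∈ Finset.range (N + 1), P n z * P n y / h n)
        (∑ n ∈ Finset.range (N + 1), deriv (P n) x * P n y / h n) x := by
    intro x y
    apply HasDerivAt.fun_sum
    intro n hn
    have hn' : n ≤ N + 1 := by
      have := Finset.mem_range.mp hn; omega
    exact (((hdiff n hn' x).hasDerivAt.mul_const (P n y)).div_const (h n))
  -- Step A: differentiate the CD identity in y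
  have stepA : ∀ x y : ℂ, x ≠ y →
      ∑ n ∈ Finset.range (N + 1), P n x * deriv (P n) y / h n =
        (p x * deriv q y - q x * deriv p y) / (h N * (x - y)) +
        (p x * q y - q x * p y) / (h N * (x - y) ^ 2) := by
    intro x y hxy
    have hsub : x - y ≠ 0 := sub_ne_zero.mpr hxy
    -- right-hand side as a function of the second variable
    have hden : HasDerivAt (fun z => h N * (x - z)) (-h N) y := by
      simpa using ((hasDerivAt_id y).const_sub x).const_mul (h N)
    have hnum : HasDerivAt (fun z => p x * q z - q x * p z)
        (p x * deriv q y - q x * deriv p y) y :=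
      ((hdq y).hasDerivAt.const_mul (p x)).sub ((hdp y).hasDerivAt.const_mul (q x))
    have hdenne : h N * (x - y) ≠ 0 := mul_ne_zero hhN hsub
    have hG : HasDerivAt (fun z => (p x * q z - q x * p z) / (h N * (x - z)))
        (((p x * deriv q y - q x * deriv p y) * (h N * (x - y)) -
          (p x * q y - q x * p y) * (-h N)) / (h N * (x - y)) ^ 2) y :=
      hnum.div hden hdenne
    have heq : (fun z => ∑ n ∈ Finset.range (N + 1), P n x * P n z / h n)
        =ᶠ[nhds y] (fun z => (p x * q z - q x * p z) / (h N * (x - z))) := by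
      have hmem : {z : ℂ | z ≠ x} ∈ nhds y := isOpen_ne.mem_nhds (Ne.symm hxy)
      filter_upwards [hmem] with z hz
      exact hCD x z (Ne.symm hz)
    have := heq.deriv_eq
    rw [(sumD2 x y).deriv, hG.deriv] at this
    rw [this]
    field_simp
    ring
  -- Step B: differentiate the CD identity in x
  have stepB : ∀ x y : ℂ, x ≠ y →
      ∑ n ∈ Finset.range (N + 1), deriv (P n) x * P n y / h n =
        (deriv p x * q y - deriv q x * p y) / (h N * (x - y)) -
        (p x * q y - q x * p y) / (h N * (x - y) ^ 2) := by
    intro x y hxy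
    have hsub : x - y ≠ 0 := sub_ne_zero.mpr hxy
    have hden : HasDerivAt (fun z => h N * (z - y)) (h N) x := by
      simpa using ((hasDerivAt_id x).sub_const y).const_mul (h N)
    have hnum : HasDerivAt (fun z => p z * q y - q z * p y)
        (deriv p x * q y - deriv q x * p y) x :=
      ((hdp x).hasDerivAt.mul_const (q y)).sub ((hdq x).hasDerivAt.mul_const (p y))
    have hdenne : h N * (x - y) ≠ 0 := mul_ne_zero hhN hsub
    have hG : HasDerivAt (fun z => (p z * q y - q z * p y) / (h N * (z - y)))
        (((deriv p x * q y - deriv q x * p y) * (h N * (x - y)) -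
          (p x * q y - q x * p y) * h N) / (h N * (x - y)) ^ 2) x :=
      hnum.div hden hdenne
    have heq : (fun z => ∑ n ∈ Finset.range (N + 1), P n z * P n y / h n)
        =ᶠ[nhds x] (fun z => (p z * q y - q z * p y) / (h N * (z - y))) := by
      have hmem : {z : ℂ | z ≠ y} ∈ nhds x := isOpen_ne.mem_nhds hxy
      filter_upwards [hmem] with z hz
      exact hCD z y hz
    have := heq.deriv_eq
    rw [(sumD1 x y).deriv, hG.deriv] at this
    rw [this]
    field_simp
  -- Step C: differentiate Step B in y
  have stepC : ∀ x y : ℂ, x ≠ y →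
      ∑ n ∈ Finset.range (N + 1), deriv (P n) x * deriv (P n) y / h n =
        (deriv p x * deriv q y - deriv q x * deriv p y) / (h N * (x - y)) +
        (deriv p x * q y - deriv q x * p y) / (h N * (x - y) ^ 2) -
        (p x * deriv q y - q x * deriv p y) / (h N * (x - y) ^ 2) -
        2 * (p x * q y - q x * p y) / (h N * (x - y) ^ 3) := by
    intro x y hxy
    have hsub : x - y ≠ 0 := sub_ne_zero.mpr hxy
    have hdenne : h N * (x - y) ≠ 0 := mul_ne_zero hhN hsub
    have hdenne2 : h N * (x - y) ^ 2 ≠ 0 := mul_ne_zero hhN (pow_ne_zero 2 hsub)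
    have hden1 : HasDerivAt (fun z => h N * (x - z)) (-h N) y := by
      simpa using ((hasDerivAt_id y).const_sub x).const_mul (h N)
    have hden2 : HasDerivAt (fun z => h N * (x - z) ^ 2)
        (h N * (2 * (x - y) * (-1))) y := by
      exact (((hasDerivAt_id y).const_sub x).pow 2).const_mul (h N) |>.congr_deriv (by
        simp only [id_eq]; ring)
    have hnum1 : HasDerivAt (fun z => deriv p x * P N z - deriv q x * p z)
        (deriv p x * deriv q y - deriv q x * deriv p y) y :=
      ((hdq y).hasDerivAt.const_mul (deriv p x)).sub ((hdp y).hasDerivAt.const_mul (deriv q x))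
    have hnum2 : HasDerivAt (fun z => p x * P N z - q x * p z)
        (p x * deriv q y - q x * deriv p y) y :=
      ((hdq y).hasDerivAt.const_mul (p x)).sub ((hdp y).hasDerivAt.const_mul (q x))
    have hG : HasDerivAt
        (fun z => (deriv p x * q z - deriv q x * p z) / (h N * (x - z)) -
          (p x * q z - q x * p z) / (h N * (x - z) ^ 2))
        (((deriv p x * deriv q y - deriv q x * deriv p y) * (h N * (x - y)) -
            (deriv p x * q y - deriv q x * p y) * (-h N)) / (h N * (x - y)) ^ 2 -
          ((p x * deriv q y - q x * deriv p y) * (h N * (x - y) ^ 2) -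
            (p x * q y - q x * p y) * (h N * (2 * (x - y) * (-1)))) /
              (h N * (x - y) ^ 2) ^ 2) y :=
      (hnum1.div hden1 hdenne).sub (hnum2.div hden2 hdenne2)
    have heq : (fun z => ∑ n ∈ Finset.range (N + 1), deriv (P n) x * P n z / h n)
        =ᶠ[nhds y]
        (fun z => (deriv p x * q z - deriv q x * p z) / (h N * (x - z)) -
          (p x * q z - q x * p z) / (h N * (x - z) ^ 2)) := by
      have hmem : {z : ℂ | z ≠ x} ∈ nhds y := isOpen_ne.mem_nhds (Ne.symm hxy)
      filter_upwards [hmem] with z hz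
      exact stepB x z (Ne.symm hz)
    have hsumD : HasDerivAt (fun z => ∑ n ∈ Finset.range (N + 1), deriv (P n) x * P n z / h n)
        (∑ n ∈ Finset.range (N + 1), deriv (P n) x * deriv (P n) y / h n) y := by
      apply HasDerivAt.fun_sum
      intro n hn
      have hn' : n ≤ N + 1 := by
        have := Finset.mem_range.mp hn; omega
      exact (((hdiff n hn' y).hasDerivAt.const_mul (deriv (P n) x)).div_const (h n))
    have := heq.deriv_eq
    rw [hsumD.deriv, hG.deriv] at this
    rw [this]
    field_simp
    ring
  -- conclude
  have key : ∀ a e : ℂ, a / (h N * e) = (h N)⁻¹ * a / e := by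
    intro a e
    rw [← div_div, div_eq_mul_inv a (h N), mul_comm a ((h N)⁻¹)]
  intro ξ η hne
  have hsub : ξ - η ≠ 0 := sub_ne_zero.mpr hne
  refine ⟨?_, ?_, ?_⟩
  · rw [stepA ξ η hne, d01, d00]
    simp only [key]
  · rw [stepB ξ η hne, d10, d00]
    simp only [key]
  · rw [stepC ξ η hne, d11, d10, d01, d00]
    simp only [key]
    ring
end

section
/- Define D : ℝ² → ℝ by D(x,t) = 32e^{4(4t+x)}(5760t² − 96t(10x+3) + 8x(5x+3) + 9) + 29e^{32t} + 256e^{8x}, and q₁, q₂ : ℝ² → ℂ by q₁(x,t) = 32i·e^{8t+2x}·(e^{16t}(−288t + 24x + 19) + 16e^{4x}(48t − 4x + 1))/D(x,t) and q₂(x,t) = (1024·e^{8t+6x}·(x − 12t) − 64·e^{24t+2x}·(−12t + x + 2))/D(x,t). Then D(x,t) > 0 for all (x,t) ∈ ℝ², and for every (x,t) ∈ ℝ² and each j ∈ {1,2}, the 2-component complex modified Korteweg–de Vries equation holds: ∂q_j/∂t + ∂³q_j/∂x³ + 3(|q₁|² + |q₂|²)·∂q_j/∂x + 3(conj(q₁)·∂q₁/∂x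 + conj(q₂)·∂q₂/∂x)·q_j = 0, where the partial derivatives are with respect to the real variables x and t and conj denotes complex conjugation. -/
open Complex

set_option maxHeartbeats 4000000
set_option maxRecDepth 8000




noncomputable def eu (t : ℝ) : ℂ := ((Real.exp (8 * t) : ℝ) : ℂ)
noncomputable def ev (x : ℝ) : ℂ := ((Real.exp (2 * x) : ℝ) : ℂ)

noncomputable def mkA (x t : ℝ) : ℂ := ((512 : ℂ) * Complex.I) * eu t * ev x ^ 3 + ((24576 : ℂ) * Complex.I) * eu t * ev x ^ 3 * (t : ℂ) + ((-2048 : ℂ) * Complex.I) * eu t * ev x ^ 3 * (x : ℂ) + ((608 : ℂ) * Complex.I) * eu t ^ 3 * ev x + ((-9216 : ℂ) * Complex.I) * eu t ^ 3 * ev x * (t : ℂ) + ((768 : ℂ) * Complex.I) * eu t ^ 3 * ev x * (x : ℂ)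

noncomputable def mkAx (x t : ℝ) : ℂ := ((1024 : ℂ) * Complex.I) * eu t * ev x ^ 3 + ((147456 : ℂ) * Complex.I) * eu t * ev x ^ 3 * (t : ℂ) + ((-12288 : ℂ) * Complex.I) * eu t * ev x ^ 3 * (x : ℂ) + ((1984 : ℂ) * Complex.I) * eu t ^ 3 * ev x + ((-18432 : ℂ) * Complex.I) * eu t ^ 3 * ev x * (t : ℂ) + ((1536 : ℂ) * Complex.I) * eu t ^ 3 * ev x * (x : ℂ)

noncomputable def mkAxx (x t : ℝ) : ℂ := ((-6144 : ℂ) * Complex.I) * eu t * ev x ^ 3 + ((884736 : ℂ) * Complex.I) * eu t * ev x ^ 3 * (t : ℂ) + ((-73728 : ℂ) * Complex.I) * eu t * ev x ^ 3 * (x : ℂ) + ((5504 : ℂ) * Complex.I) * eu t ^ 3 * ev x + ((-36864 : ℂ) * Complex.I) * eu t ^ 3 * ev x * (t : ℂ) + ((3072 : ℂ) * Complex.I) * eu t ^ 3 * ev x * (x : ℂ)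

noncomputable def mkAxxx (x t : ℝ) : ℂ := ((-110592 : ℂ) * Complex.I) * eu t * ev x ^ 3 + ((5308416 : ℂ) * Complex.I) * eu t * ev x ^ 3 * (t : ℂ) + ((-442368 : ℂ) * Complex.I) * eu t * ev x ^ 3 * (x : ℂ) + ((14080 : ℂ) * Complex.I) * eu t ^ 3 * ev x + ((-73728 : ℂ) * Complex.I) * eu t ^ 3 * ev x * (t : ℂ) + ((6144 : ℂ) * Complex.I) * eu t ^ 3 * ev x * (x : ℂ)

noncomputable def mkAt (x t : ℝ) : ℂ := ((28672 : ℂ) * Complex.I) * eu t * ev x ^ 3 + ((196608 : ℂ) * Complex.I) * eu t * ev x ^ 3 * (t : ℂ) + ((-16384 : ℂ) * Complex.I) * eu t * ev x ^ 3 * (x : ℂ) + ((5376 : ℂ) * Complex.I) * eu t ^ 3 * ev x + ((-221184 : ℂ) * Complex.I) * eu t ^ 3 * ev x * (t : ℂ) + ((18432 : ℂ) * Complex.I) * eu t ^ 3 * ev x * (x : ℂ)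

noncomputable def mkB (x t : ℝ) : ℂ := (-12288 : ℂ) * eu t * ev x ^ 3 * (t : ℂ) + (1024 : ℂ) * eu t * ev x ^ 3 * (x : ℂ) + (-128 : ℂ) * eu t ^ 3 * ev x + (768 : ℂ) * eu t ^ 3 * ev x * (t : ℂ) + (-64 : ℂ) * eu t ^ 3 * ev x * (x : ℂ)

noncomputable def mkBx (x t : ℝ) : ℂ := (1024 : ℂ) * eu t * ev x ^ 3 + (-73728 : ℂ) * eu t * ev x ^ 3 * (t : ℂ) + (6144 : ℂ) * eu t * ev x ^ 3 * (x : ℂ) + (-320 : ℂ) * eu t ^ 3 * ev x + (1536 : ℂ) * eu t ^ 3 * ev x * (t : ℂ) + (-128 : ℂ) * eu t ^ 3 * ev x * (x : ℂ)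

noncomputable def mkBxx (x t : ℝ) : ℂ := (12288 : ℂ) * eu t * ev x ^ 3 + (-442368 : ℂ) * eu t * ev x ^ 3 * (t : ℂ) + (36864 : ℂ) * eu t * ev x ^ 3 * (x : ℂ) + (-768 : ℂ) * eu t ^ 3 * ev x + (3072 : ℂ) * eu t ^ 3 * ev x * (t : ℂ) + (-256 : ℂ) * eu t ^ 3 * ev x * (x : ℂ)

noncomputable def mkBxxx (x t : ℝ) : ℂ := (110592 : ℂ) * eu t * ev x ^ 3 + (-2654208 : ℂ) * eu t * ev x ^ 3 * (t : ℂ) + (221184 : ℂ) * eu t * ev x ^ 3 * (x : ℂ) + (-1792 : ℂ) * eu t ^ 3 * ev x + (6144 : ℂ) * eu t ^ 3 * ev x * (t : ℂ) + (-512 : ℂ) * eu t ^ 3 * ev x * (x : ℂ)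

noncomputable def mkBt (x t : ℝ) : ℂ := (-12288 : ℂ) * eu t * ev x ^ 3 + (-98304 : ℂ) * eu t * ev x ^ 3 * (t : ℂ) + (8192 : ℂ) * eu t * ev x ^ 3 * (x : ℂ) + (-2304 : ℂ) * eu t ^ 3 * ev x + (18432 : ℂ) * eu t ^ 3 * ev x * (t : ℂ) + (-1536 : ℂ) * eu t ^ 3 * ev x * (x : ℂ)

noncomputable def mkD (x t : ℝ) : ℂ := (256 : ℂ) * ev x ^ 4 + (288 : ℂ) * eu t ^ 2 * ev x ^ 2 + (-9216 : ℂ) * eu t ^ 2 * ev x ^ 2 * (t : ℂ) + (184320 : ℂ) * eu t ^ 2 * ev x ^ 2 * (t : ℂ) ^ 2 + (768 : ℂ) * eu t ^ 2 * ev x ^ 2 * (x : ℂ) + (-30720 : ℂ) * eu t ^ 2 * ev x ^ 2 * (x : ℂ) * (t : ℂ) + (1280 : ℂ) * eu t ^ 2 * ev x ^ 2 * (x : ℂ) ^ 2 + (29 : ℂ) * eu t ^ 4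

noncomputable def mkDx (x t : ℝ) : ℂ := (2048 : ℂ) * ev x ^ 4 + (1920 : ℂ) * eu t ^ 2 * ev x ^ 2 + (-67584 : ℂ) * eu t ^ 2 * ev x ^ 2 * (t : ℂ) + (737280 : ℂ) * eu t ^ 2 * ev x ^ 2 * (t : ℂ) ^ 2 + (5632 : ℂ) * eu t ^ 2 * ev x ^ 2 * (x : ℂ) + (-122880 : ℂ) * eu t ^ 2 * ev x ^ 2 * (x : ℂ) * (t : ℂ) + (5120 : ℂ) * eu t ^ 2 * ev x ^ 2 * (x : ℂ) ^ 2

noncomputable def mkDxx (x t : ℝ) : ℂ := (16384 : ℂ) * ev x ^ 4 + (13312 : ℂ) * eu t ^ 2 * ev x ^ 2 + (-393216 : ℂ) * eu t ^ 2 * ev x ^ 2 * (t : ℂ) + (2949120 : ℂ) * eu t ^ 2 * ev x ^ 2 * (t : ℂ) ^ 2 + (32768 : ℂ) * eu t ^ 2 * ev x ^ 2 * (x : ℂ) + (-491520 : ℂ) * eu t ^ 2 * ev x ^ 2 * (x : ℂ) * (t : ℂ) + (20480 : ℂ) * eu t ^ 2 * ev x ^ 2 * (x : ℂ) ^ 2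

noncomputable def mkDxxx (x t : ℝ) : ℂ := (131072 : ℂ) * ev x ^ 4 + (86016 : ℂ) * eu t ^ 2 * ev x ^ 2 + (-2064384 : ℂ) * eu t ^ 2 * ev x ^ 2 * (t : ℂ) + (11796480 : ℂ) * eu t ^ 2 * ev x ^ 2 * (t : ℂ) ^ 2 + (172032 : ℂ) * eu t ^ 2 * ev x ^ 2 * (x : ℂ) + (-1966080 : ℂ) * eu t ^ 2 * ev x ^ 2 * (x : ℂ) * (t : ℂ) + (81920 : ℂ) * eu t ^ 2 * ev x ^ 2 * (x : ℂ) ^ 2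

noncomputable def mkDt (x t : ℝ) : ℂ := (-4608 : ℂ) * eu t ^ 2 * ev x ^ 2 + (221184 : ℂ) * eu t ^ 2 * ev x ^ 2 * (t : ℂ) + (2949120 : ℂ) * eu t ^ 2 * ev x ^ 2 * (t : ℂ) ^ 2 + (-18432 : ℂ) * eu t ^ 2 * ev x ^ 2 * (x : ℂ) + (-491520 : ℂ) * eu t ^ 2 * ev x ^ 2 * (x : ℂ) * (t : ℂ) + (20480 : ℂ) * eu t ^ 2 * ev x ^ 2 * (x : ℂ) ^ 2 + (928 : ℂ) * eu t ^ 4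

lemma hpowc {f : ℝ → ℂ} {f' : ℂ} {x : ℝ} (n : ℕ) (hf : HasDerivAt f f' x) :
    HasDerivAt (fun y => f y ^ n) ((n : ℂ) * f x ^ (n - 1) * f') x := by
  simpa [Function.comp_def] using (hasDerivAt_pow n (f x)).comp x hf

lemma hre (x : ℝ) : HasDerivAt (fun x' : ℝ => (x' : ℂ)) 1 x := by
  simpa using (hasDerivAt_id x).ofReal_comp

lemma hev (x : ℝ) : HasDerivAt ev (2 * ev x) x := by
  have h := (((hasDerivAt_id x).const_mul (2 : ℝ)).exp).ofReal_comp
  simp only [id_eq, mul_one] at h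
  unfold ev
  convert h using 1
  push_cast
  ring

lemma heu (t : ℝ) : HasDerivAt eu (8 * eu t) t := by
  have h := (((hasDerivAt_id t).const_mul (8 : ℝ)).exp).ofReal_comp
  simp only [id_eq, mul_one] at h
  unfold eu
  convert h using 1
  push_cast
  ring

lemma mkA_hx (x t : ℝ) : HasDerivAt (fun x' : ℝ => mkA x' t) (mkAx x t) x := by
  have h := ((((((((hpowc 3 (hev x)).mul (hpowc 0 (hre x))).const_mul (((512 : ℂ) * Complex.I) * eu t ^ 1 * (t : ℂ) ^ 0)).add (((hpowc 3 (hev x)).mul (hpowc 0 (hre x))).const_mul (((24576 : ℂ) * Complex.I) * eu t ^ 1 * (t : ℂ) ^ 1))).add (((hpowc 3 (hev x)).mul (hpowc 1 (hre x))).const_mul (((-2048 : ℂ) * Complex.I) * eu t ^ 1 * (t : ℂ) ^ 0))).add (((hpowc 1 (hev x)).mul (hpowc 0 (hre x))).const_mul (((608 : ℂ) * Complex.I) * eu t ^ 3 * (t : ℂ) ^ 0))).add (((hpowc 1 (hev x)).mul (hpowc 0 (hre x))).const_mul (((-9216 : ℂ) * Complex.I) * eu t ^ 3 * (t : ℂ)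 ^ 1))).add (((hpowc 1 (hev x)).mul (hpowc 1 (hre x))).const_mul (((768 : ℂ) * Complex.I) * eu t ^ 3 * (t : ℂ) ^ 0)))
  have h2 := HasDerivAt.congr_of_eventuallyEq h (Filter.Eventually.of_forall
    (fun y => show mkA y t = (((512 : ℂ) * Complex.I) * eu t ^ 1 * (t : ℂ) ^ 0) * (ev y ^ 3 * (y : ℂ) ^ 0) + (((24576 : ℂ) * Complex.I) * eu t ^ 1 * (t : ℂ) ^ 1) * (ev y ^ 3 * (y : ℂ) ^ 0) + (((-2048 : ℂ) * Complex.I) * eu t ^ 1 * (t : ℂ) ^ 0) * (ev y ^ 3 * (y : ℂ) ^ 1) + (((608 : ℂ) * Complex.I) * eu t ^ 3 * (t : ℂ) ^ 0) * (ev y ^ 1 * (y : ℂ) ^ 0) + (((-9216 : ℂ) * Complex.I) * eu t ^ 3 * (t : ℂ) ^ 1) * (ev y ^ 1 * (y : ℂ) ^ 0) + (((768 : ℂ) * Complex.I) * eu t ^ 3 * (t : ℂ) ^ 0) * (ev y ^ 1 * (y : ℂ) ^ 1) from by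
      simp only [mkA]; push_cast; ring))
  refine h2.congr_deriv (Eq.symm ?_)
  simp only [mkAx]
  push_cast
  ring

lemma mkAx_hx (x t : ℝ) : HasDerivAt (fun x' : ℝ => mkAx x' t) (mkAxx x t) x := by
  have h := ((((((((hpowc 3 (hev x)).mul (hpowc 0 (hre x))).const_mul (((1024 : ℂ) * Complex.I) * eu t ^ 1 * (t : ℂ) ^ 0)).add (((hpowc 3 (hev x)).mul (hpowc 0 (hre x))).const_mul (((147456 : ℂ) * Complex.I) * eu t ^ 1 * (t : ℂ) ^ 1))).add (((hpowc 3 (hev x)).mul (hpowc 1 (hre x))).const_mul (((-12288 : ℂ) * Complex.I) * eu t ^ 1 * (t : ℂ) ^ 0))).add (((hpowc 1 (hev x)).mul (hpowc 0 (hre x))).const_mul (((1984 : ℂ) * Complex.I) * eu t ^ 3 * (t : ℂ) ^ 0))).add (((hpowc 1 (hev x)).mul (hpowc 0 (hre x))).const_mul (((-18432 : ℂ) * Complex.I) * eu t ^ 3 * (t : ℂ) ^ 1))).add (((hpowc 1 (hev x)).mul (hpowc 1 (hre x))).const_mul (((1536 : ℂ) * Complex.I) * eu t ^ 3 * (t :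 ℂ) ^ 0)))
  have h2 := HasDerivAt.congr_of_eventuallyEq h (Filter.Eventually.of_forall
    (fun y => show mkAx y t = (((1024 : ℂ) * Complex.I) * eu t ^ 1 * (t : ℂ) ^ 0) * (ev y ^ 3 * (y : ℂ) ^ 0) + (((147456 : ℂ) * Complex.I) * eu t ^ 1 * (t : ℂ) ^ 1) * (ev y ^ 3 * (y : ℂ) ^ 0) + (((-12288 : ℂ) * Complex.I) * eu t ^ 1 * (t : ℂ) ^ 0) * (ev y ^ 3 * (y : ℂ) ^ 1) + (((1984 : ℂ) * Complex.I) * eu t ^ 3 * (t : ℂ) ^ 0) * (ev y ^ 1 * (y : ℂ) ^ 0) + (((-18432 : ℂ) * Complex.I) * eu t ^ 3 * (t : ℂ) ^ 1) * (ev y ^ 1 * (y : ℂ) ^ 0) + (((1536 : ℂ) * Complex.I) * eu t ^ 3 * (t : ℂ) ^ 0) * (ev y ^ 1 * (y : ℂ) ^ 1) from by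
      simp only [mkAx]; push_cast; ring))
  refine h2.congr_deriv (Eq.symm ?_)
  simp only [mkAxx]
  push_cast
  ring

lemma mkAxx_hx (x t : ℝ) : HasDerivAt (fun x' : ℝ => mkAxx x' t) (mkAxxx x t) x := by
  have h := ((((((((hpowc 3 (hev x)).mul (hpowc 0 (hre x))).const_mul (((-6144 : ℂ) * Complex.I) * eu t ^ 1 * (t : ℂ) ^ 0)).add (((hpowc 3 (hev x)).mul (hpowc 0 (hre x))).const_mul (((884736 : ℂ) * Complex.I) * eu t ^ 1 * (t : ℂ) ^ 1))).add (((hpowc 3 (hev x)).mul (hpowc 1 (hre x))).const_mul (((-73728 : ℂ) * Complex.I) * eu t ^ 1 * (t : ℂ) ^ 0))).add (((hpowc 1 (hev x)).mul (hpowc 0 (hre x))).const_mul (((5504 : ℂ) * Complex.I) * eu t ^ 3 * (t : ℂ) ^ 0))).add (((hpowc 1 (hev x)).mul (hpowc 0 (hre x))).const_mul (((-36864 : ℂ) * Complex.I) * eu t ^ 3 * (t : ℂ) ^ 1))).add (((hpowc 1 (hev x)).mul (hpowc 1 (hre x))).const_mul (((3072 : ℂ) * Complex.I) * eu t ^ 3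 * (t : ℂ) ^ 0)))
  have h2 := HasDerivAt.congr_of_eventuallyEq h (Filter.Eventually.of_forall
    (fun y => show mkAxx y t = (((-6144 : ℂ) * Complex.I) * eu t ^ 1 * (t : ℂ) ^ 0) * (ev y ^ 3 * (y : ℂ) ^ 0) + (((884736 : ℂ) * Complex.I) * eu t ^ 1 * (t : ℂ) ^ 1) * (ev y ^ 3 * (y : ℂ) ^ 0) + (((-73728 : ℂ) * Complex.I) * eu t ^ 1 * (t : ℂ) ^ 0) * (ev y ^ 3 * (y : ℂ) ^ 1) + (((5504 : ℂ) * Complex.I) * eu t ^ 3 * (t : ℂ) ^ 0) * (ev y ^ 1 * (y : ℂ) ^ 0) + (((-36864 : ℂ) * Complex.I) * eu t ^ 3 * (t : ℂ) ^ 1) * (ev y ^ 1 * (y : ℂ) ^ 0) + (((3072 : ℂ) * Complex.I) * eu t ^ 3 * (t : ℂ) ^ 0) * (ev y ^ 1 * (y : ℂ) ^ 1) from by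
      simp only [mkAxx]; push_cast; ring))
  refine h2.congr_deriv (Eq.symm ?_)
  simp only [mkAxxx]
  push_cast
  ring

lemma mkA_ht (x t : ℝ) : HasDerivAt (fun t' : ℝ => mkA x t') (mkAt x t) t := by
  have h := ((((((((hpowc 1 (heu t)).mul (hpowc 0 (hre t))).const_mul (((512 : ℂ) * Complex.I) * ev x ^ 3 * (x : ℂ) ^ 0)).add (((hpowc 1 (heu t)).mul (hpowc 1 (hre t))).const_mul (((24576 : ℂ) * Complex.I) * ev x ^ 3 * (x : ℂ) ^ 0))).add (((hpowc 1 (heu t)).mul (hpowc 0 (hre t))).const_mul (((-2048 : ℂ) * Complex.I) * ev x ^ 3 * (x : ℂ) ^ 1))).add (((hpowc 3 (heu t)).mul (hpowc 0 (hre t))).const_mul (((608 : ℂ) * Complex.I) * ev x ^ 1 * (x : ℂ) ^ 0))).add (((hpowc 3 (heu t)).mul (hpowc 1 (hre t))).const_mul (((-9216 : ℂ) * Complex.I) * ev x ^ 1 * (x : ℂ) ^ 0))).add (((hpowc 3 (heu t)).mul (hpowc 0 (hre t))).const_mul (((768 : ℂ) * Complex.I) * ev x ^ 1 * (x : ℂ)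 ^ 1)))
  have h2 := HasDerivAt.congr_of_eventuallyEq h (Filter.Eventually.of_forall
    (fun y => show mkA x y = (((512 : ℂ) * Complex.I) * ev x ^ 3 * (x : ℂ) ^ 0) * (eu y ^ 1 * (y : ℂ) ^ 0) + (((24576 : ℂ) * Complex.I) * ev x ^ 3 * (x : ℂ) ^ 0) * (eu y ^ 1 * (y : ℂ) ^ 1) + (((-2048 : ℂ) * Complex.I) * ev x ^ 3 * (x : ℂ) ^ 1) * (eu y ^ 1 * (y : ℂ) ^ 0) + (((608 : ℂ) * Complex.I) * ev x ^ 1 * (x : ℂ) ^ 0) * (eu y ^ 3 * (y : ℂ) ^ 0) + (((-9216 : ℂ) * Complex.I) * ev x ^ 1 * (x : ℂ) ^ 0) * (eu y ^ 3 * (y : ℂ) ^ 1) + (((768 : ℂ) * Complex.I) * ev x ^ 1 * (x : ℂ) ^ 1) * (eu y ^ 3 * (y : ℂ) ^ 0) from by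
      simp only [mkA]; push_cast; ring))
  refine h2.congr_deriv (Eq.symm ?_)
  simp only [mkAt]
  push_cast
  ring

lemma mkB_hx (x t : ℝ) : HasDerivAt (fun x' : ℝ => mkB x' t) (mkBx x t) x := by
  have h := (((((((hpowc 3 (hev x)).mul (hpowc 0 (hre x))).const_mul ((-12288 : ℂ) * eu t ^ 1 * (t : ℂ) ^ 1)).add (((hpowc 3 (hev x)).mul (hpowc 1 (hre x))).const_mul ((1024 : ℂ) * eu t ^ 1 * (t : ℂ) ^ 0))).add (((hpowc 1 (hev x)).mul (hpowc 0 (hre x))).const_mul ((-128 : ℂ) * eu t ^ 3 * (t : ℂ) ^ 0))).add (((hpowc 1 (hev x)).mul (hpowc 0 (hre x))).const_mul ((768 : ℂ) * eu t ^ 3 * (t : ℂ) ^ 1))).add (((hpowc 1 (hev x)).mul (hpowc 1 (hre x))).const_mul ((-64 : ℂ) * eu t ^ 3 * (t : ℂ) ^ 0)))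
  have h2 := HasDerivAt.congr_of_eventuallyEq h (Filter.Eventually.of_forall
    (fun y => show mkB y t = ((-12288 : ℂ) * eu t ^ 1 * (t : ℂ) ^ 1) * (ev y ^ 3 * (y : ℂ) ^ 0) + ((1024 : ℂ) * eu t ^ 1 * (t : ℂ) ^ 0) * (ev y ^ 3 * (y : ℂ) ^ 1) + ((-128 : ℂ) * eu t ^ 3 * (t : ℂ) ^ 0) * (ev y ^ 1 * (y : ℂ) ^ 0) + ((768 : ℂ) * eu t ^ 3 * (t : ℂ) ^ 1) * (ev y ^ 1 * (y : ℂ) ^ 0) + ((-64 : ℂ) * eu t ^ 3 * (t : ℂ) ^ 0) * (ev y ^ 1 * (y : ℂ) ^ 1) from by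
      simp only [mkB]; push_cast; ring))
  refine h2.congr_deriv (Eq.symm ?_)
  simp only [mkBx]
  push_cast
  ring

lemma mkBx_hx (x t : ℝ) : HasDerivAt (fun x' : ℝ => mkBx x' t) (mkBxx x t) x := by
  have h := ((((((((hpowc 3 (hev x)).mul (hpowc 0 (hre x))).const_mul ((1024 : ℂ) * eu t ^ 1 * (t : ℂ) ^ 0)).add (((hpowc 3 (hev x)).mul (hpowc 0 (hre x))).const_mul ((-73728 : ℂ) * eu t ^ 1 * (t : ℂ) ^ 1))).add (((hpowc 3 (hev x)).mul (hpowc 1 (hre x))).const_mul ((6144 : ℂ) * eu t ^ 1 * (t : ℂ) ^ 0))).add (((hpowc 1 (hev x)).mul (hpowc 0 (hre x))).const_mul ((-320 : ℂ) * eu t ^ 3 * (t : ℂ) ^ 0))).add (((hpowc 1 (hev x)).mul (hpowc 0 (hre x))).const_mul ((1536 : ℂ) * eu t ^ 3 * (t : ℂ) ^ 1))).add (((hpowc 1 (hev x)).mul (hpowc 1 (hre x))).const_mul ((-128 : ℂ) * eu t ^ 3 * (t : ℂ) ^ 0)))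
  have h2 := HasDerivAt.congr_of_eventuallyEq h (Filter.Eventually.of_forall
    (fun y => show mkBx y t = ((1024 : ℂ) * eu t ^ 1 * (t : ℂ) ^ 0) * (ev y ^ 3 * (y : ℂ) ^ 0) + ((-73728 : ℂ) * eu t ^ 1 * (t : ℂ) ^ 1) * (ev y ^ 3 * (y : ℂ) ^ 0) + ((6144 : ℂ) * eu t ^ 1 * (t : ℂ) ^ 0) * (ev y ^ 3 * (y : ℂ) ^ 1) + ((-320 : ℂ) * eu t ^ 3 * (t : ℂ) ^ 0) * (ev y ^ 1 * (y : ℂ) ^ 0) + ((1536 : ℂ) * eu t ^ 3 * (t : ℂ) ^ 1) * (ev y ^ 1 * (y : ℂ) ^ 0) + ((-128 : ℂ) * eu t ^ 3 * (t : ℂ) ^ 0) * (ev y ^ 1 * (y : ℂ) ^ 1) from by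
      simp only [mkBx]; push_cast; ring))
  refine h2.congr_deriv (Eq.symm ?_)
  simp only [mkBxx]
  push_cast
  ring

lemma mkBxx_hx (x t : ℝ) : HasDerivAt (fun x' : ℝ => mkBxx x' t) (mkBxxx x t) x := by
  have h := ((((((((hpowc 3 (hev x)).mul (hpowc 0 (hre x))).const_mul ((12288 : ℂ) * eu t ^ 1 * (t : ℂ) ^ 0)).add (((hpowc 3 (hev x)).mul (hpowc 0 (hre x))).const_mul ((-442368 : ℂ) * eu t ^ 1 * (t : ℂ) ^ 1))).add (((hpowc 3 (hev x)).mul (hpowc 1 (hre x))).const_mul ((36864 : ℂ) * eu t ^ 1 * (t : ℂ) ^ 0))).add (((hpowc 1 (hev x)).mul (hpowc 0 (hre x))).const_mul ((-768 : ℂ) * eu t ^ 3 * (t : ℂ) ^ 0))).add (((hpowc 1 (hev x)).mul (hpowc 0 (hre x))).const_mul ((3072 : ℂ) * eu t ^ 3 * (t : ℂ) ^ 1))).add (((hpowc 1 (hev x)).mul (hpowc 1 (hre x))).const_mul ((-256 : ℂ) * eu t ^ 3 * (t : ℂ) ^ 0)))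
  have h2 := HasDerivAt.congr_of_eventuallyEq h (Filter.Eventually.of_forall
    (fun y => show mkBxx y t = ((12288 : ℂ) * eu t ^ 1 * (t : ℂ) ^ 0) * (ev y ^ 3 * (y : ℂ) ^ 0) + ((-442368 : ℂ) * eu t ^ 1 * (t : ℂ) ^ 1) * (ev y ^ 3 * (y : ℂ) ^ 0) + ((36864 : ℂ) * eu t ^ 1 * (t : ℂ) ^ 0) * (ev y ^ 3 * (y : ℂ) ^ 1) + ((-768 : ℂ) * eu t ^ 3 * (t : ℂ) ^ 0) * (ev y ^ 1 * (y : ℂ) ^ 0) + ((3072 : ℂ) * eu t ^ 3 * (t : ℂ) ^ 1) * (ev y ^ 1 * (y : ℂ) ^ 0) + ((-256 : ℂ) * eu t ^ 3 * (t : ℂ) ^ 0) * (ev y ^ 1 * (y : ℂ) ^ 1) from by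
      simp only [mkBxx]; push_cast; ring))
  refine h2.congr_deriv (Eq.symm ?_)
  simp only [mkBxxx]
  push_cast
  ring

lemma mkB_ht (x t : ℝ) : HasDerivAt (fun t' : ℝ => mkB x t') (mkBt x t) t := by
  have h := (((((((hpowc 1 (heu t)).mul (hpowc 1 (hre t))).const_mul ((-12288 : ℂ) * ev x ^ 3 * (x : ℂ) ^ 0)).add (((hpowc 1 (heu t)).mul (hpowc 0 (hre t))).const_mul ((1024 : ℂ) * ev x ^ 3 * (x : ℂ) ^ 1))).add (((hpowc 3 (heu t)).mul (hpowc 0 (hre t))).const_mul ((-128 : ℂ) * ev x ^ 1 * (x : ℂ) ^ 0))).add (((hpowc 3 (heu t)).mul (hpowc 1 (hre t))).const_mul ((768 : ℂ) * ev x ^ 1 * (x : ℂ) ^ 0))).add (((hpowc 3 (heu t)).mul (hpowc 0 (hre t))).const_mul ((-64 : ℂ) * ev x ^ 1 * (x : ℂ) ^ 1)))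
  have h2 := HasDerivAt.congr_of_eventuallyEq h (Filter.Eventually.of_forall
    (fun y => show mkB x y = ((-12288 : ℂ) * ev x ^ 3 * (x : ℂ) ^ 0) * (eu y ^ 1 * (y : ℂ) ^ 1) + ((1024 : ℂ) * ev x ^ 3 * (x : ℂ) ^ 1) * (eu y ^ 1 * (y : ℂ) ^ 0) + ((-128 : ℂ) * ev x ^ 1 * (x : ℂ) ^ 0) * (eu y ^ 3 * (y : ℂ) ^ 0) + ((768 : ℂ) * ev x ^ 1 * (x : ℂ) ^ 0) * (eu y ^ 3 * (y : ℂ) ^ 1) + ((-64 : ℂ) * ev x ^ 1 * (x : ℂ) ^ 1) * (eu y ^ 3 * (y : ℂ) ^ 0) from by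
      simp only [mkB]; push_cast; ring))
  refine h2.congr_deriv (Eq.symm ?_)
  simp only [mkBt]
  push_cast
  ring

lemma mkD_hx (x t : ℝ) : HasDerivAt (fun x' : ℝ => mkD x' t) (mkDx x t) x := by
  have h := ((((((((((hpowc 4 (hev x)).mul (hpowc 0 (hre x))).const_mul ((256 : ℂ) * eu t ^ 0 * (t : ℂ) ^ 0)).add (((hpowc 2 (hev x)).mul (hpowc 0 (hre x))).const_mul ((288 : ℂ) * eu t ^ 2 * (t : ℂ) ^ 0))).add (((hpowc 2 (hev x)).mul (hpowc 0 (hre x))).const_mul ((-9216 : ℂ) * eu t ^ 2 * (t : ℂ) ^ 1))).add (((hpowc 2 (hev x)).mul (hpowc 0 (hre x))).const_mul ((184320 : ℂ) * eu t ^ 2 * (t : ℂ) ^ 2))).add (((hpowc 2 (hev x)).mul (hpowc 1 (hre x))).const_mul ((768 : ℂ) * eu t ^ 2 * (t : ℂ) ^ 0))).add (((hpowc 2 (hev x)).mul (hpowc 1 (hre x))).const_mul ((-30720 : ℂ) * eu t ^ 2 * (t : ℂ) ^ 1))).add (((hpowc 2 (hev x)).mul (hpowc 2 (hre x))).const_mul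 ((1280 : ℂ) * eu t ^ 2 * (t : ℂ) ^ 0))).add (((hpowc 0 (hev x)).mul (hpowc 0 (hre x))).const_mul ((29 : ℂ) * eu t ^ 4 * (t : ℂ) ^ 0)))
  have h2 := HasDerivAt.congr_of_eventuallyEq h (Filter.Eventually.of_forall
    (fun y => show mkD y t = ((256 : ℂ) * eu t ^ 0 * (t : ℂ) ^ 0) * (ev y ^ 4 * (y : ℂ) ^ 0) + ((288 : ℂ) * eu t ^ 2 * (t : ℂ) ^ 0) * (ev y ^ 2 * (y : ℂ) ^ 0) + ((-9216 : ℂ) * eu t ^ 2 * (t : ℂ) ^ 1) * (ev y ^ 2 * (y : ℂ) ^ 0) + ((184320 : ℂ) * eu t ^ 2 * (t : ℂ) ^ 2) * (ev y ^ 2 * (y : ℂ) ^ 0) + ((768 : ℂ) * eu t ^ 2 * (t : ℂ) ^ 0) * (ev y ^ 2 * (y : ℂ) ^ 1) + ((-30720 : ℂ) * eu t ^ 2 * (t : ℂ) ^ 1) * (ev y ^ 2 * (y : ℂ) ^ 1) + ((1280 : ℂ) * eu t ^ 2 * (t : ℂ) ^ 0) * (ev y ^ 2 * (y : ℂ) ^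 2) + ((29 : ℂ) * eu t ^ 4 * (t : ℂ) ^ 0) * (ev y ^ 0 * (y : ℂ) ^ 0) from by
      simp only [mkD]; push_cast; ring))
  refine h2.congr_deriv (Eq.symm ?_)
  simp only [mkDx]
  push_cast
  ring

lemma mkDx_hx (x t : ℝ) : HasDerivAt (fun x' : ℝ => mkDx x' t) (mkDxx x t) x := by
  have h := (((((((((hpowc 4 (hev x)).mul (hpowc 0 (hre x))).const_mul ((2048 : ℂ) * eu t ^ 0 * (t : ℂ) ^ 0)).add (((hpowc 2 (hev x)).mul (hpowc 0 (hre x))).const_mul ((1920 : ℂ) * eu t ^ 2 * (t : ℂ) ^ 0))).add (((hpowc 2 (hev x)).mul (hpowc 0 (hre x))).const_mul ((-67584 : ℂ) * eu t ^ 2 * (t : ℂ) ^ 1))).add (((hpowc 2 (hev x)).mul (hpowc 0 (hre x))).const_mul ((737280 : ℂ) * eu t ^ 2 * (t : ℂ) ^ 2))).add (((hpowc 2 (hev x)).mul (hpowc 1 (hre x))).const_mul ((5632 : ℂ) * eu t ^ 2 * (t : ℂ) ^ 0))).add (((hpowc 2 (hev x)).mul (hpowc 1 (hre x))).const_mul ((-122880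 : ℂ) * eu t ^ 2 * (t : ℂ) ^ 1))).add (((hpowc 2 (hev x)).mul (hpowc 2 (hre x))).const_mul ((5120 : ℂ) * eu t ^ 2 * (t : ℂ) ^ 0)))
  have h2 := HasDerivAt.congr_of_eventuallyEq h (Filter.Eventually.of_forall
    (fun y => show mkDx y t = ((2048 : ℂ) * eu t ^ 0 * (t : ℂ) ^ 0) * (ev y ^ 4 * (y : ℂ) ^ 0) + ((1920 : ℂ) * eu t ^ 2 * (t : ℂ) ^ 0) * (ev y ^ 2 * (y : ℂ) ^ 0) + ((-67584 : ℂ) * eu t ^ 2 * (t : ℂ) ^ 1) * (ev y ^ 2 * (y : ℂ) ^ 0) + ((737280 : ℂ) * eu t ^ 2 * (t : ℂ) ^ 2) * (ev y ^ 2 * (y : ℂ) ^ 0) + ((5632 : ℂ) * eu t ^ 2 * (t : ℂ) ^ 0) * (ev y ^ 2 * (y : ℂ) ^ 1) + ((-122880 : ℂ) * eu t ^ 2 * (t : ℂ) ^ 1) * (ev y ^ 2 * (y : ℂ) ^ 1) + ((5120 : ℂ) * eu t ^ 2 * (t : ℂ) ^ 0) * (ev y ^ 2 * (y : ℂ) ^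 2) from by
      simp only [mkDx]; push_cast; ring))
  refine h2.congr_deriv (Eq.symm ?_)
  simp only [mkDxx]
  push_cast
  ring

lemma mkDxx_hx (x t : ℝ) : HasDerivAt (fun x' : ℝ => mkDxx x' t) (mkDxxx x t) x := by
  have h := (((((((((hpowc 4 (hev x)).mul (hpowc 0 (hre x))).const_mul ((16384 : ℂ) * eu t ^ 0 * (t : ℂ) ^ 0)).add (((hpowc 2 (hev x)).mul (hpowc 0 (hre x))).const_mul ((13312 : ℂ) * eu t ^ 2 * (t : ℂ) ^ 0))).add (((hpowc 2 (hev x)).mul (hpowc 0 (hre x))).const_mul ((-393216 : ℂ) * eu t ^ 2 * (t : ℂ) ^ 1))).add (((hpowc 2 (hev x)).mul (hpowc 0 (hre x))).const_mul ((2949120 : ℂ) * eu t ^ 2 * (t : ℂ) ^ 2))).add (((hpowc 2 (hev x)).mul (hpowc 1 (hre x))).const_mul ((32768 : ℂ) * eu t ^ 2 * (t : ℂ) ^ 0))).add (((hpowc 2 (hev x)).mul (hpowc 1 (hre x))).const_mul ((-491520 : ℂ) * eu t ^ 2 * (t : ℂ) ^ 1))).add (((hpowc 2 (hev x)).mul (hpowc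 2 (hre x))).const_mul ((20480 : ℂ) * eu t ^ 2 * (t : ℂ) ^ 0)))
  have h2 := HasDerivAt.congr_of_eventuallyEq h (Filter.Eventually.of_forall
    (fun y => show mkDxx y t = ((16384 : ℂ) * eu t ^ 0 * (t : ℂ) ^ 0) * (ev y ^ 4 * (y : ℂ) ^ 0) + ((13312 : ℂ) * eu t ^ 2 * (t : ℂ) ^ 0) * (ev y ^ 2 * (y : ℂ) ^ 0) + ((-393216 : ℂ) * eu t ^ 2 * (t : ℂ) ^ 1) * (ev y ^ 2 * (y : ℂ) ^ 0) + ((2949120 : ℂ) * eu t ^ 2 * (t : ℂ) ^ 2) * (ev y ^ 2 * (y : ℂ) ^ 0) + ((32768 : ℂ) * eu t ^ 2 * (t : ℂ) ^ 0) * (ev y ^ 2 * (y : ℂ) ^ 1) + ((-491520 : ℂ) * eu t ^ 2 * (t : ℂ) ^ 1) * (ev y ^ 2 * (y : ℂ) ^ 1) + ((20480 : ℂ) * eu t ^ 2 * (t : ℂ) ^ 0) * (ev y ^ 2 * (y : ℂ) ^ 2) from by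
      simp only [mkDxx]; push_cast; ring))
  refine h2.congr_deriv (Eq.symm ?_)
  simp only [mkDxxx]
  push_cast
  ring

lemma mkD_ht (x t : ℝ) : HasDerivAt (fun t' : ℝ => mkD x t') (mkDt x t) t := by
  have h := ((((((((((hpowc 0 (heu t)).mul (hpowc 0 (hre t))).const_mul ((256 : ℂ) * ev x ^ 4 * (x : ℂ) ^ 0)).add (((hpowc 2 (heu t)).mul (hpowc 0 (hre t))).const_mul ((288 : ℂ) * ev x ^ 2 * (x : ℂ) ^ 0))).add (((hpowc 2 (heu t)).mul (hpowc 1 (hre t))).const_mul ((-9216 : ℂ) * ev x ^ 2 * (x : ℂ) ^ 0))).add (((hpowc 2 (heu t)).mul (hpowc 2 (hre t))).const_mul ((184320 : ℂ) * ev x ^ 2 * (x : ℂ) ^ 0))).add (((hpowc 2 (heu t)).mul (hpowc 0 (hre t))).const_mul ((768 : ℂ) * ev x ^ 2 * (x : ℂ) ^ 1))).add (((hpowc 2 (heu t)).mul (hpowc 1 (hre t))).const_mul ((-30720 : ℂ) * ev x ^ 2 * (x : ℂ) ^ 1))).add (((hpowc 2 (heu t)).mul (hpowc 0 (hre t))).const_mul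 ((1280 : ℂ) * ev x ^ 2 * (x : ℂ) ^ 2))).add (((hpowc 4 (heu t)).mul (hpowc 0 (hre t))).const_mul ((29 : ℂ) * ev x ^ 0 * (x : ℂ) ^ 0)))
  have h2 := HasDerivAt.congr_of_eventuallyEq h (Filter.Eventually.of_forall
    (fun y => show mkD x y = ((256 : ℂ) * ev x ^ 4 * (x : ℂ) ^ 0) * (eu y ^ 0 * (y : ℂ) ^ 0) + ((288 : ℂ) * ev x ^ 2 * (x : ℂ) ^ 0) * (eu y ^ 2 * (y : ℂ) ^ 0) + ((-9216 : ℂ) * ev x ^ 2 * (x : ℂ) ^ 0) * (eu y ^ 2 * (y : ℂ) ^ 1) + ((184320 : ℂ) * ev x ^ 2 * (x : ℂ) ^ 0) * (eu y ^ 2 * (y : ℂ) ^ 2) + ((768 : ℂ) * ev x ^ 2 * (x : ℂ) ^ 1) * (eu y ^ 2 * (y : ℂ) ^ 0) + ((-30720 : ℂ) * ev x ^ 2 * (x : ℂ) ^ 1) * (eu y ^ 2 * (y : ℂ) ^ 1) + ((1280 : ℂ) * ev x ^ 2 * (x : ℂ) ^ 2) * (eu y ^ 2 * (y : ℂ) ^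 0) + ((29 : ℂ) * ev x ^ 0 * (x : ℂ) ^ 0) * (eu y ^ 4 * (y : ℂ) ^ 0) from by
      simp only [mkD]; push_cast; ring))
  refine h2.congr_deriv (Eq.symm ?_)
  simp only [mkDt]
  push_cast
  ring

noncomputable def mkG1A (x t : ℝ) : ℂ :=
  (mkAx x t * mkD x t - mkA x t * mkDx x t) / mkD x t ^ 2

noncomputable def mkG2A (x t : ℝ) : ℂ :=
  ((mkAxx x t * mkD x t - mkA x t * mkDxx x t) * mkD x t
    - 2 * ((mkAx x t * mkD x t - mkA x t * mkDx x t) * mkDx x t)) / mkD x t ^ 3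

noncomputable def mkG3A (x t : ℝ) : ℂ :=
  (((mkAxxx x t * mkD x t + mkAxx x t * mkDx x t - mkAx x t * mkDxx x t
      - mkA x t * mkDxxx x t) * mkD x t
    - (mkAxx x t * mkD x t - mkA x t * mkDxx x t) * mkDx x t
    - 2 * ((mkAx x t * mkD x t - mkA x t * mkDx x t) * mkDxx x t)) * mkD x t
   - 3 * ((((mkAxx x t * mkD x t - mkA x t * mkDxx x t) * mkD x t
    - 2 * ((mkAx x t * mkD x t - mkA x t * mkDx x t) * mkDx x t)) * mkDx x t))) / mkD x t ^ 4

noncomputable def mkGtA (x t : ℝ) : ℂ :=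
  (mkAt x t * mkD x t - mkA x t * mkDt x t) / mkD x t ^ 2

noncomputable def mkG1B (x t : ℝ) : ℂ :=
  (mkBx x t * mkD x t - mkB x t * mkDx x t) / mkD x t ^ 2

noncomputable def mkG2B (x t : ℝ) : ℂ :=
  ((mkBxx x t * mkD x t - mkB x t * mkDxx x t) * mkD x t
    - 2 * ((mkBx x t * mkD x t - mkB x t * mkDx x t) * mkDx x t)) / mkD x t ^ 3

noncomputable def mkG3B (x t : ℝ) : ℂ :=
  (((mkBxxx x t * mkD x t + mkBxx x t * mkDx x t - mkBx x t * mkDxx x t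
      - mkB x t * mkDxxx x t) * mkD x t
    - (mkBxx x t * mkD x t - mkB x t * mkDxx x t) * mkDx x t
    - 2 * ((mkBx x t * mkD x t - mkB x t * mkDx x t) * mkDxx x t)) * mkD x t
   - 3 * ((((mkBxx x t * mkD x t - mkB x t * mkDxx x t) * mkD x t
    - 2 * ((mkBx x t * mkD x t - mkB x t * mkDx x t) * mkDx x t)) * mkDx x t))) / mkD x t ^ 4

noncomputable def mkGtB (x t : ℝ) : ℂ :=
  (mkBt x t * mkD x t - mkB x t * mkDt x t) / mkD x t ^ 2

lemma mkD_pos_aux (x t : ℝ) :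
    (0 : ℝ) < 32 * Real.exp (8*t) ^ 2 * Real.exp (2*x) ^ 2 *
      (5760*t^2 - 960*t*x - 288*t + 40*x^2 + 24*x + 9)
      + 29 * Real.exp (8*t) ^ 4 + 256 * Real.exp (2*x) ^ 4 := by
  have h1 : (0 : ℝ) < 5760*t^2 - 960*t*x - 288*t + 40*x^2 + 24*x + 9 := by
    nlinarith [sq_nonneg (120*t - 10*x - 3)]
  have e1 := Real.exp_pos (8*t)
  have e2 := Real.exp_pos (2*x)
  nlinarith [mul_pos (mul_pos (pow_pos e1 2) (pow_pos e2 2)) h1, pow_pos e1 4, pow_pos e2 4]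

lemma mkD_real (x t : ℝ) : mkD x t =
    ((32 * Real.exp (8*t) ^ 2 * Real.exp (2*x) ^ 2 *
      (5760*t^2 - 960*t*x - 288*t + 40*x^2 + 24*x + 9)
      + 29 * Real.exp (8*t) ^ 4 + 256 * Real.exp (2*x) ^ 4 : ℝ) : ℂ) := by
  simp only [mkD, eu, ev]
  push_cast
  ring

lemma mkD_ne (x t : ℝ) : mkD x t ≠ 0 := by
  rw [mkD_real]
  exact_mod_cast ne_of_gt (mkD_pos_aux x t)

lemma cexp_pow (a : ℝ) (n : ℕ) (z : ℂ) (h : z = ((n * a : ℝ) : ℂ)) :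
    Complex.exp z = ((Real.exp a : ℝ) : ℂ) ^ n := by
  rw [h, ← Complex.ofReal_exp, Real.exp_nat_mul, Complex.ofReal_pow]

lemma cexp_two (a b : ℝ) (m n : ℕ) (z : ℂ) (h : z = ((m * a + n * b : ℝ) : ℂ)) :
    Complex.exp z = ((Real.exp a : ℝ) : ℂ) ^ m * ((Real.exp b : ℝ) : ℂ) ^ n := by
  rw [h, ← Complex.ofReal_exp, Real.exp_add, Real.exp_nat_mul, Real.exp_nat_mul]
  push_cast
  ring

lemma habs (z : ℂ) : ((‖z‖ : ℝ) : ℂ) ^ 2 = z * (starRingEnd ℂ) z := by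
  rw [← Complex.ofReal_pow, Complex.sq_norm, ← Complex.mul_conj]

lemma mkA_conj (x t : ℝ) : (starRingEnd ℂ) (mkA x t) = -mkA x t := by
  simp only [mkA, eu, ev, map_add, map_sub, map_mul, map_neg, map_pow, map_ofNat, map_one, Complex.conj_I, Complex.conj_ofReal]
  ring

lemma mkB_conj (x t : ℝ) : (starRingEnd ℂ) (mkB x t) = mkB x t := by
  simp only [mkB, eu, ev, map_add, map_sub, map_mul, map_neg, map_pow, map_ofNat, map_one, Complex.conj_I, Complex.conj_ofReal]

lemma mkD_conj (x t : ℝ) : (starRingEnd ℂ) (mkD x t) = mkD x t := by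
  simp only [mkD, eu, ev, map_add, map_sub, map_mul, map_neg, map_pow, map_ofNat, map_one, Complex.conj_I, Complex.conj_ofReal]

lemma hQ1A (x t : ℝ) :
    HasDerivAt (fun x' : ℝ => mkA x' t / mkD x' t) (mkG1A x t) x := by
  have h := (mkA_hx x t).div (mkD_hx x t) (mkD_ne x t)
  exact h

lemma hQtA (x t : ℝ) :
    HasDerivAt (fun t' : ℝ => mkA x t' / mkD x t') (mkGtA x t) t := by
  have h := (mkA_ht x t).div (mkD_ht x t) (mkD_ne x t)
  exact h

lemma hQ2A (x t : ℝ) :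
    HasDerivAt (fun x' : ℝ => mkG1A x' t) (mkG2A x t) x := by
  have hnum := ((mkAx_hx x t).mul (mkD_hx x t)).sub ((mkA_hx x t).mul (mkDx_hx x t))
  have hden := hpowc 2 (mkD_hx x t)
  have h := hnum.div hden (pow_ne_zero 2 (mkD_ne x t))
  have h2 := HasDerivAt.congr_of_eventuallyEq h (Filter.Eventually.of_forall
    (fun y => show mkG1A y t =
      (mkAx y t * mkD y t - mkA y t * mkDx y t) / mkD y t ^ 2 from by
      simp only [mkG1A]))
  refine h2.congr_deriv (Eq.symm ?_)
  simp only [mkG2A]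
  rw [div_eq_div_iff (pow_ne_zero 3 (mkD_ne x t)) (pow_ne_zero 2 (pow_ne_zero 2 (mkD_ne x t)))]
  simp only [Pi.mul_apply, Pi.sub_apply]
  push_cast
  ring

lemma hQ3A (x t : ℝ) :
    HasDerivAt (fun x' : ℝ => mkG2A x' t) (mkG3A x t) x := by
  have hM := ((mkAxx_hx x t).mul (mkD_hx x t)).sub ((mkA_hx x t).mul (mkDxx_hx x t))
  have hN1 := ((mkAx_hx x t).mul (mkD_hx x t)).sub ((mkA_hx x t).mul (mkDx_hx x t))
  have hnum := (hM.mul (mkD_hx x t)).sub (((hN1.mul (mkDx_hx x t))).const_mul 2)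
  have hden := hpowc 3 (mkD_hx x t)
  have h := hnum.div hden (pow_ne_zero 3 (mkD_ne x t))
  have h2 := HasDerivAt.congr_of_eventuallyEq h (Filter.Eventually.of_forall
    (fun y => show mkG2A y t =
      ((mkAxx y t * mkD y t - mkA y t * mkDxx y t) * mkD y t
        - 2 * ((mkAx y t * mkD y t - mkA y t * mkDx y t) * mkDx y t)) / mkD y t ^ 3 from by
      simp only [mkG2A]))
  refine h2.congr_deriv (Eq.symm ?_)
  simp only [mkG3A]
  rw [div_eq_div_iff (pow_ne_zero 4 (mkD_ne x t)) (pow_ne_zero 2 (pow_ne_zero 3 (mkD_ne x t)))]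
  simp only [Pi.mul_apply, Pi.sub_apply]
  push_cast
  ring

lemma hQ1B (x t : ℝ) :
    HasDerivAt (fun x' : ℝ => mkB x' t / mkD x' t) (mkG1B x t) x := by
  have h := (mkB_hx x t).div (mkD_hx x t) (mkD_ne x t)
  exact h

lemma hQtB (x t : ℝ) :
    HasDerivAt (fun t' : ℝ => mkB x t' / mkD x t') (mkGtB x t) t := by
  have h := (mkB_ht x t).div (mkD_ht x t) (mkD_ne x t)
  exact h

lemma hQ2B (x t : ℝ) :
    HasDerivAt (fun x' : ℝ => mkG1B x' t) (mkG2B x t) x := by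
  have hnum := ((mkBx_hx x t).mul (mkD_hx x t)).sub ((mkB_hx x t).mul (mkDx_hx x t))
  have hden := hpowc 2 (mkD_hx x t)
  have h := hnum.div hden (pow_ne_zero 2 (mkD_ne x t))
  have h2 := HasDerivAt.congr_of_eventuallyEq h (Filter.Eventually.of_forall
    (fun y => show mkG1B y t =
      (mkBx y t * mkD y t - mkB y t * mkDx y t) / mkD y t ^ 2 from by
      simp only [mkG1B]))
  refine h2.congr_deriv (Eq.symm ?_)
  simp only [mkG2B]
  rw [div_eq_div_iff (pow_ne_zero 3 (mkD_ne x t)) (pow_ne_zero 2 (pow_ne_zero 2 (mkD_ne x t)))]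
  simp only [Pi.mul_apply, Pi.sub_apply]
  push_cast
  ring

lemma hQ3B (x t : ℝ) :
    HasDerivAt (fun x' : ℝ => mkG2B x' t) (mkG3B x t) x := by
  have hM := ((mkBxx_hx x t).mul (mkD_hx x t)).sub ((mkB_hx x t).mul (mkDxx_hx x t))
  have hN1 := ((mkBx_hx x t).mul (mkD_hx x t)).sub ((mkB_hx x t).mul (mkDx_hx x t))
  have hnum := (hM.mul (mkD_hx x t)).sub (((hN1.mul (mkDx_hx x t))).const_mul 2)
  have hden := hpowc 3 (mkD_hx x t)
  have h := hnum.div hden (pow_ne_zero 3 (mkD_ne x t))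
  have h2 := HasDerivAt.congr_of_eventuallyEq h (Filter.Eventually.of_forall
    (fun y => show mkG2B y t =
      ((mkBxx y t * mkD y t - mkB y t * mkDxx y t) * mkD y t
        - 2 * ((mkBx y t * mkD y t - mkB y t * mkDx y t) * mkDx y t)) / mkD y t ^ 3 from by
      simp only [mkG2B]))
  refine h2.congr_deriv (Eq.symm ?_)
  simp only [mkG3B]
  rw [div_eq_div_iff (pow_ne_zero 4 (mkD_ne x t)) (pow_ne_zero 2 (pow_ne_zero 3 (mkD_ne x t)))]
  simp only [Pi.mul_apply, Pi.sub_apply]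
  push_cast
  ring

noncomputable def mkN1A (x t : ℝ) : ℂ := ((-786432 : ℂ) * Complex.I) * eu t * ev x ^ 7 + ((-12582912 : ℂ) * Complex.I) * eu t * ev x ^ 7 * (t : ℂ) + ((1048576 : ℂ) * Complex.I) * eu t * ev x ^ 7 * (x : ℂ) + ((-1425408 : ℂ) * Complex.I) * eu t ^ 3 * ev x ^ 5 + ((34603008 : ℂ) * Complex.I) * eu t ^ 3 * ev x ^ 5 * (t : ℂ) + ((113246208 : ℂ) * Complex.I) * eu t ^ 3 * ev x ^ 5 * (t : ℂ) ^ 2 + ((9059696640 : ℂ) * Complex.I) * eu t ^ 3 * ev x ^ 5 * (t : ℂ) ^ 3 + ((-2883584 : ℂ) * Complex.I) * eu t ^ 3 * ev x ^ 5 * (x : ℂ) + ((-18874368 : ℂ) * Complex.I) * eu t ^ 3 * ev x ^ 5 * (x : ℂ) * (t : ℂ) + ((-2264924160 : ℂ) * Complex.I) * eu t ^ 3 * ev x ^ 5 * (x : ℂ) * (t : ℂ) ^ 2 + ((786432 : ℂ) * Complex.I) * eu t ^ 3 * ev x ^ 5 * (x : ℂ) ^ 2 + ((188743680 : ℂ)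 * Complex.I) * eu t ^ 3 * ev x ^ 5 * (x : ℂ) ^ 2 * (t : ℂ) + ((-5242880 : ℂ) * Complex.I) * eu t ^ 3 * ev x ^ 5 * (x : ℂ) ^ 3 + ((-566272 : ℂ) * Complex.I) * eu t ^ 5 * ev x ^ 3 + ((39469056 : ℂ) * Complex.I) * eu t ^ 5 * ev x ^ 3 * (t : ℂ) + ((-535560192 : ℂ) * Complex.I) * eu t ^ 5 * ev x ^ 3 * (t : ℂ) ^ 2 + ((3397386240 : ℂ) * Complex.I) * eu t ^ 5 * ev x ^ 3 * (t : ℂ) ^ 3 + ((-3289088 : ℂ) * Complex.I) * eu t ^ 5 * ev x ^ 3 * (x : ℂ) + ((89260032 : ℂ) * Complex.I) * eu t ^ 5 * ev x ^ 3 * (x : ℂ) * (t : ℂ) + ((-849346560 : ℂ) * Complex.I) * eu t ^ 5 * ev x ^ 3 * (x : ℂ) * (t : ℂ) ^ 2 + ((-3719168 : ℂ) * Complex.I) * eu t ^ 5 * ev x ^ 3 * (x : ℂ) ^ 2 + ((70778880 : ℂ) * Complex.I) * eu t ^ 5 * ev x ^ 3 * (x : ℂ) ^ 2 * (t : ℂ)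 + ((-1966080 : ℂ) * Complex.I) * eu t ^ 5 * ev x ^ 3 * (x : ℂ) ^ 3 + ((57536 : ℂ) * Complex.I) * eu t ^ 7 * ev x + ((-534528 : ℂ) * Complex.I) * eu t ^ 7 * ev x * (t : ℂ) + ((44544 : ℂ) * Complex.I) * eu t ^ 7 * ev x * (x : ℂ)

noncomputable def mkMA (x t : ℝ) : ℂ := ((-9961472 : ℂ) * Complex.I) * eu t * ev x ^ 7 + ((-176160768 : ℂ) * Complex.I) * eu t * ev x ^ 7 * (t : ℂ) + ((14680064 : ℂ) * Complex.I) * eu t * ev x ^ 7 * (x : ℂ) + ((-17137664 : ℂ) * Complex.I) * eu t ^ 3 * ev x ^ 5 + ((327155712 : ℂ) * Complex.I) * eu t ^ 3 * ev x ^ 5 * (t : ℂ) + ((-1132462080 : ℂ) * Complex.I) * eu t ^ 3 * ev x ^ 5 * (t : ℂ) ^ 2 + ((90596966400 : ℂ) * Complex.I) * eu t ^ 3 * ev x ^ 5 * (t : ℂ) ^ 3 + ((-27262976 : ℂ) * Complex.I) * eu t ^ 3 * ev x ^ 5 * (x : ℂ) + ((188743680 : ℂ) * Complex.I) * eu t ^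 3 * ev x ^ 5 * (x : ℂ) * (t : ℂ) + ((-22649241600 : ℂ) * Complex.I) * eu t ^ 3 * ev x ^ 5 * (x : ℂ) * (t : ℂ) ^ 2 + ((-7864320 : ℂ) * Complex.I) * eu t ^ 3 * ev x ^ 5 * (x : ℂ) ^ 2 + ((1887436800 : ℂ) * Complex.I) * eu t ^ 3 * ev x ^ 5 * (x : ℂ) ^ 2 * (t : ℂ) + ((-52428800 : ℂ) * Complex.I) * eu t ^ 3 * ev x ^ 5 * (x : ℂ) ^ 3 + ((-6686720 : ℂ) * Complex.I) * eu t ^ 5 * ev x ^ 3 + ((326074368 : ℂ) * Complex.I) * eu t ^ 5 * ev x ^ 3 * (t : ℂ) + ((-4062707712 : ℂ) * Complex.I) * eu t ^ 5 * ev x ^ 3 * (t : ℂ) ^ 2 + ((20384317440 : ℂ) * Complex.I) * eu t ^ 5 * ev x ^ 3 * (t : ℂ) ^ 3 + ((-27172864 : ℂ) * Complex.I) * eu t ^ 5 * ev x ^ 3 * (x : ℂ) + ((677117952 : ℂ) * Complex.I) * eu t ^ 5 * ev x ^ 3 * (x : ℂ) * (t : ℂ) + ((-5096079360 : ℂ)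 * Complex.I) * eu t ^ 5 * ev x ^ 3 * (x : ℂ) * (t : ℂ) ^ 2 + ((-28213248 : ℂ) * Complex.I) * eu t ^ 5 * ev x ^ 3 * (x : ℂ) ^ 2 + ((424673280 : ℂ) * Complex.I) * eu t ^ 5 * ev x ^ 3 * (x : ℂ) ^ 2 * (t : ℂ) + ((-11796480 : ℂ) * Complex.I) * eu t ^ 5 * ev x ^ 3 * (x : ℂ) ^ 3 + ((159616 : ℂ) * Complex.I) * eu t ^ 7 * ev x + ((-1069056 : ℂ) * Complex.I) * eu t ^ 7 * ev x * (t : ℂ) + ((89088 : ℂ) * Complex.I) * eu t ^ 7 * ev x * (x : ℂ)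

noncomputable def mkMpA (x t : ℝ) : ℂ := ((-124780544 : ℂ) * Complex.I) * eu t * ev x ^ 7 + ((-2466250752 : ℂ) * Complex.I) * eu t * ev x ^ 7 * (t : ℂ) + ((205520896 : ℂ) * Complex.I) * eu t * ev x ^ 7 * (x : ℂ) + ((-198639616 : ℂ) * Complex.I) * eu t ^ 3 * ev x ^ 5 + ((3460300800 : ℂ) * Complex.I) * eu t ^ 3 * ev x ^ 5 * (t : ℂ) + ((-33973862400 : ℂ) * Complex.I) * eu t ^ 3 * ev x ^ 5 * (t : ℂ) ^ 2 + ((905969664000 : ℂ) * Complex.I) * eu t ^ 3 * ev x ^ 5 * (t : ℂ) ^ 3 + ((-288358400 : ℂ) * Complex.I) * eu t ^ 3 * ev x ^ 5 * (x : ℂ) + ((5662310400 : ℂ) * Complex.I) * eu t ^ 3 * ev x ^ 5 * (x : ℂ) * (t : ℂ) + ((-226492416000 : ℂ) * Complex.I) * eu t ^ 3 * ev x ^ 5 * (x : ℂ) * (t : ℂ) ^ 2 + ((-235929600 : ℂ) * Complex.I) * eu t ^ 3 * ev x ^ 5 * (x : ℂ) ^ 2 + ((18874368000 : ℂ) * Complex.I)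 * eu t ^ 3 * ev x ^ 5 * (x : ℂ) ^ 2 * (t : ℂ) + ((-524288000 : ℂ) * Complex.I) * eu t ^ 3 * ev x ^ 5 * (x : ℂ) ^ 3 + ((-67293184 : ℂ) * Complex.I) * eu t ^ 5 * ev x ^ 3 + ((2633564160 : ℂ) * Complex.I) * eu t ^ 5 * ev x ^ 3 * (t : ℂ) + ((-29472325632 : ℂ) * Complex.I) * eu t ^ 5 * ev x ^ 3 * (t : ℂ) ^ 2 + ((122305904640 : ℂ) * Complex.I) * eu t ^ 5 * ev x ^ 3 * (t : ℂ) ^ 3 + ((-219463680 : ℂ) * Complex.I) * eu t ^ 5 * ev x ^ 3 * (x : ℂ) + ((4912054272 : ℂ) * Complex.I) * eu t ^ 5 * ev x ^ 3 * (x : ℂ) * (t : ℂ) + ((-30576476160 : ℂ) * Complex.I) * eu t ^ 5 * ev x ^ 3 * (x : ℂ) * (t : ℂ) ^ 2 + ((-204668928 : ℂ) * Complex.I) * eu t ^ 5 * ev x ^ 3 * (x : ℂ) ^ 2 + ((2548039680 : ℂ) * Complex.I) * eu t ^ 5 * ev x ^ 3 * (x : ℂ) ^ 2 * (t : ℂ)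 + ((-70778880 : ℂ) * Complex.I) * eu t ^ 5 * ev x ^ 3 * (x : ℂ) ^ 3 + ((408320 : ℂ) * Complex.I) * eu t ^ 7 * ev x + ((-2138112 : ℂ) * Complex.I) * eu t ^ 7 * ev x * (t : ℂ) + ((178176 : ℂ) * Complex.I) * eu t ^ 7 * ev x * (x : ℂ)

noncomputable def mkN2A_c0 (x t : ℝ) : ℂ := ((671088640 : ℂ) * Complex.I) * eu t * ev x ^ 11 + ((6442450944 : ℂ) * Complex.I) * eu t * ev x ^ 11 * (t : ℂ) + ((-536870912 : ℂ) * Complex.I) * eu t * ev x ^ 11 * (x : ℂ) + ((1602224128 : ℂ) * Complex.I) * eu t ^ 3 * ev x ^ 9 + ((-74893492224 : ℂ) * Complex.I) * eu t ^ 3 * ev x ^ 9 * (t : ℂ) + ((-1507533520896 : ℂ) * Complex.I) * eu t ^ 3 * ev x ^ 9 * (t : ℂ) ^ 2 + ((-27831388078080 : ℂ) * Complex.I) * eu t ^ 3 * ev x ^ 9 * (t : ℂ) ^ 3 + ((6241124352 : ℂ) * Complex.I) * eu t ^ 3 * ev x ^ 9 * (x : ℂ) + ((251255586816 : ℂ)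 * Complex.I) * eu t ^ 3 * ev x ^ 9 * (x : ℂ) * (t : ℂ) + ((6957847019520 : ℂ) * Complex.I) * eu t ^ 3 * ev x ^ 9 * (x : ℂ) * (t : ℂ) ^ 2 + ((-10468982784 : ℂ) * Complex.I) * eu t ^ 3 * ev x ^ 9 * (x : ℂ) ^ 2 + ((-579820584960 : ℂ) * Complex.I) * eu t ^ 3 * ev x ^ 9 * (x : ℂ) ^ 2 * (t : ℂ) + ((16106127360 : ℂ) * Complex.I) * eu t ^ 3 * ev x ^ 9 * (x : ℂ) ^ 3 + ((856686592 : ℂ) * Complex.I) * eu t ^ 5 * ev x ^ 7 + ((-156682420224 : ℂ) * Complex.I) * eu t ^ 5 * ev x ^ 7 * (t : ℂ) + ((997774589952 : ℂ) * Complex.I) * eu t ^ 5 * ev x ^ 7 * (t : ℂ) ^ 2 + ((17626545782784 : ℂ) * Complex.I) * eu t ^ 5 * ev x ^ 7 * (t : ℂ) ^ 3 + ((13915694039040 : ℂ) * Complex.I) * eu t ^ 5 * ev x ^ 7 * (t : ℂ) ^ 4 + ((3339766569369600 : ℂ) * Complex.I) * eu t ^ 5 * ev x ^ 7 * (t : ℂ)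 ^ 5 + ((13056868352 : ℂ) * Complex.I) * eu t ^ 5 * ev x ^ 7 * (x : ℂ) + ((-166295764992 : ℂ) * Complex.I) * eu t ^ 5 * ev x ^ 7 * (x : ℂ) * (t : ℂ) + ((-4406636445696 : ℂ) * Complex.I) * eu t ^ 5 * ev x ^ 7 * (x : ℂ) * (t : ℂ) ^ 2 + ((-4638564679680 : ℂ) * Complex.I) * eu t ^ 5 * ev x ^ 7 * (x : ℂ) * (t : ℂ) ^ 3 + ((-1391569403904000 : ℂ) * Complex.I) * eu t ^ 5 * ev x ^ 7 * (x : ℂ) * (t : ℂ) ^ 4 + ((6928990208 : ℂ) * Complex.I) * eu t ^ 5 * ev x ^ 7 * (x : ℂ) ^ 2 + ((367219703808 : ℂ) * Complex.I) * eu t ^ 5 * ev x ^ 7 * (x : ℂ) ^ 2 * (t : ℂ) + ((579820584960 : ℂ) * Complex.I) * eu t ^ 5 * ev x ^ 7 * (x : ℂ) ^ 2 * (t : ℂ) ^ 2 + ((231928233984000 : ℂ) * Complex.I) * eu t ^ 5 * ev x ^ 7 * (x : ℂ) ^ 2 * (t : ℂ) ^ 3 + ((-10200547328 : ℂ) * Complex.I)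 * eu t ^ 5 * ev x ^ 7 * (x : ℂ) ^ 3 + ((-32212254720 : ℂ) * Complex.I) * eu t ^ 5 * ev x ^ 7 * (x : ℂ) ^ 3 * (t : ℂ)

noncomputable def mkN2A_c1 (x t : ℝ) : ℂ := ((-19327352832000 : ℂ) * Complex.I) * eu t ^ 5 * ev x ^ 7 * (x : ℂ) ^ 3 * (t : ℂ) ^ 2 + ((671088640 : ℂ) * Complex.I) * eu t ^ 5 * ev x ^ 7 * (x : ℂ) ^ 4 + ((805306368000 : ℂ) * Complex.I) * eu t ^ 5 * ev x ^ 7 * (x : ℂ) ^ 4 * (t : ℂ) + ((-13421772800 : ℂ) * Complex.I) * eu t ^ 5 * ev x ^ 7 * (x : ℂ) ^ 5 + ((-443088896 : ℂ) * Complex.I) * eu t ^ 7 * ev x ^ 5 + ((-61165535232 : ℂ) * Complex.I) * eu t ^ 7 * ev x ^ 5 * (t : ℂ) + ((2786007711744 : ℂ) * Complex.I) * eu t ^ 7 * ev x ^ 5 * (t : ℂ) ^ 2 + ((-37594117177344 : ℂ) * Complex.I) * eu t ^ 7 * ev x ^ 5 * (t : ℂ) ^ 3 + ((312233385000960 : ℂ)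 * Complex.I) * eu t ^ 7 * ev x ^ 5 * (t : ℂ) ^ 4 + ((-1252412463513600 : ℂ) * Complex.I) * eu t ^ 7 * ev x ^ 5 * (t : ℂ) ^ 5 + ((5097127936 : ℂ) * Complex.I) * eu t ^ 7 * ev x ^ 5 * (x : ℂ) + ((-464334618624 : ℂ) * Complex.I) * eu t ^ 7 * ev x ^ 5 * (x : ℂ) * (t : ℂ) + ((9398529294336 : ℂ) * Complex.I) * eu t ^ 7 * ev x ^ 5 * (x : ℂ) * (t : ℂ) ^ 2 + ((-104077795000320 : ℂ) * Complex.I) * eu t ^ 7 * ev x ^ 5 * (x : ℂ) * (t : ℂ) ^ 3 + ((521838526464000 : ℂ) * Complex.I) * eu t ^ 7 * ev x ^ 5 * (x : ℂ) * (t : ℂ) ^ 4 + ((19347275776 : ℂ) * Complex.I) * eu t ^ 7 * ev x ^ 5 * (x : ℂ) ^ 2 + ((-783210774528 : ℂ) * Complex.I) * eu t ^ 7 * ev x ^ 5 * (x : ℂ) ^ 2 * (t : ℂ) + ((13009724375040 : ℂ) * Complex.I) * eu t ^ 7 * ev x ^ 5 * (x : ℂ) ^ 2 * (t : ℂ) ^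 2 + ((-86973087744000 : ℂ) * Complex.I) * eu t ^ 7 * ev x ^ 5 * (x : ℂ) ^ 2 * (t : ℂ) ^ 3 + ((21755854848 : ℂ) * Complex.I) * eu t ^ 7 * ev x ^ 5 * (x : ℂ) ^ 3 + ((-722762465280 : ℂ) * Complex.I) * eu t ^ 7 * ev x ^ 5 * (x : ℂ) ^ 3 * (t : ℂ) + ((7247757312000 : ℂ) * Complex.I) * eu t ^ 7 * ev x ^ 5 * (x : ℂ) ^ 3 * (t : ℂ) ^ 2 + ((15057551360 : ℂ) * Complex.I) * eu t ^ 7 * ev x ^ 5 * (x : ℂ) ^ 4 + ((-301989888000 : ℂ) * Complex.I) * eu t ^ 7 * ev x ^ 5 * (x : ℂ) ^ 4 * (t : ℂ) + ((5033164800 : ℂ) * Complex.I) * eu t ^ 7 * ev x ^ 5 * (x : ℂ) ^ 5 + ((-368883712 : ℂ) * Complex.I) * eu t ^ 9 * ev x ^ 3 + ((17506861056 : ℂ) * Complex.I) * eu t ^ 9 * ev x ^ 3 * (t : ℂ) + ((-235637047296 : ℂ) * Complex.I) * eu t ^ 9 * ev x ^ 3 * (t : ℂ) ^ 2 + ((1182290411520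 : ℂ) * Complex.I) * eu t ^ 9 * ev x ^ 3 * (t : ℂ) ^ 3 + ((-1458905088 : ℂ) * Complex.I) * eu t ^ 9 * ev x ^ 3 * (x : ℂ)

noncomputable def mkN2A_c2 (x t : ℝ) : ℂ := ((39272841216 : ℂ) * Complex.I) * eu t ^ 9 * ev x ^ 3 * (x : ℂ) * (t : ℂ) + ((-295572602880 : ℂ) * Complex.I) * eu t ^ 9 * ev x ^ 3 * (x : ℂ) * (t : ℂ) ^ 2 + ((-1636368384 : ℂ) * Complex.I) * eu t ^ 9 * ev x ^ 3 * (x : ℂ) ^ 2 + ((24631050240 : ℂ) * Complex.I) * eu t ^ 9 * ev x ^ 3 * (x : ℂ) ^ 2 * (t : ℂ) + ((-684195840 : ℂ) * Complex.I) * eu t ^ 9 * ev x ^ 3 * (x : ℂ) ^ 3 + ((4628864 : ℂ) * Complex.I) * eu t ^ 11 * ev x + ((-31002624 : ℂ) * Complex.I) * eu t ^ 11 * ev x * (t : ℂ) + ((2583552 : ℂ) * Complex.I) * eu t ^ 11 * ev x * (x : ℂ)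

noncomputable def mkN2A (x t : ℝ) : ℂ := mkN2A_c0 x t + mkN2A_c1 x t + mkN2A_c2 x t

noncomputable def mkN3A_c0 (x t : ℝ) : ℂ := ((-481036337152 : ℂ) * Complex.I) * eu t * ev x ^ 15 + ((-3298534883328 : ℂ) * Complex.I) * eu t * ev x ^ 15 * (t : ℂ) + ((274877906944 : ℂ) * Complex.I) * eu t * ev x ^ 15 * (x : ℂ) + ((-631360192512 : ℂ) * Complex.I) * eu t ^ 3 * ev x ^ 13 + ((188016488349696 : ℂ) * Complex.I) * eu t ^ 3 * ev x ^ 13 * (t : ℂ) + ((5234774859841536 : ℂ) * Complex.I) * eu t ^ 3 * ev x ^ 13 * (t : ℂ) ^ 2 + ((54623737667911680 : ℂ) * Complex.I) * eu t ^ 3 * ev x ^ 13 * (t : ℂ) ^ 3 + ((-15668040695808 : ℂ) * Complex.I) * eu t ^ 3 * ev x ^ 13 * (x : ℂ) + ((-872462476640256 : ℂ) * Complex.I) * eu t ^ 3 * ev x ^ 13 * (x : ℂ) * (t : ℂ) + ((-13655934416977920 : ℂ) * Complex.I) * eu t ^ 3 * ev x ^ 13 * (x : ℂ) * (t : ℂ)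 ^ 2 + ((36352603193344 : ℂ) * Complex.I) * eu t ^ 3 * ev x ^ 13 * (x : ℂ) ^ 2 + ((1137994534748160 : ℂ) * Complex.I) * eu t ^ 3 * ev x ^ 13 * (x : ℂ) ^ 2 * (t : ℂ) + ((-31610959298560 : ℂ) * Complex.I) * eu t ^ 3 * ev x ^ 13 * (x : ℂ) ^ 3 + ((2436588634112 : ℂ) * Complex.I) * eu t ^ 5 * ev x ^ 11 + ((479692012388352 : ℂ) * Complex.I) * eu t ^ 5 * ev x ^ 11 * (t : ℂ) + ((-2964352067960832 : ℂ) * Complex.I) * eu t ^ 5 * ev x ^ 11 * (t : ℂ) ^ 2 + ((-186492565233598464 : ℂ) * Complex.I) * eu t ^ 5 * ev x ^ 11 * (t : ℂ) ^ 3 + ((-1802583343041085440 : ℂ) * Complex.I) * eu t ^ 5 * ev x ^ 11 * (t : ℂ) ^ 4 + ((-39329091120896409600 : ℂ) * Complex.I) * eu t ^ 5 * ev x ^ 11 * (t : ℂ) ^ 5 + ((-39974334365696 : ℂ) * Complex.I) * eu t ^ 5 * ev x ^ 11 * (x : ℂ) + ((494058677993472 : ℂ) * Complex.I) * eu t ^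 5 * ev x ^ 11 * (x : ℂ) * (t : ℂ) + ((46623141308399616 : ℂ) * Complex.I) * eu t ^ 5 * ev x ^ 11 * (x : ℂ) * (t : ℂ) ^ 2 + ((600861114347028480 : ℂ) * Complex.I) * eu t ^ 5 * ev x ^ 11 * (x : ℂ) * (t : ℂ) ^ 3 + ((16387121300373504000 : ℂ) * Complex.I) * eu t ^ 5 * ev x ^ 11 * (x : ℂ) * (t : ℂ) ^ 4 + ((-20585778249728 : ℂ) * Complex.I) * eu t ^ 5 * ev x ^ 11 * (x : ℂ) ^ 2 + ((-3885261775699968 : ℂ) * Complex.I) * eu t ^ 5 * ev x ^ 11 * (x : ℂ) ^ 2 * (t : ℂ) + ((-75107639293378560 : ℂ) * Complex.I) * eu t ^ 5 * ev x ^ 11 * (x : ℂ) ^ 2 * (t : ℂ) ^ 2 + ((-2731186883395584000 : ℂ) * Complex.I) * eu t ^ 5 * ev x ^ 11 * (x : ℂ) ^ 2 * (t : ℂ) ^ 3 + ((107923938213888 : ℂ) * Complex.I) * eu t ^ 5 * ev x ^ 11 * (x : ℂ) ^ 3 + ((4172646627409920 : ℂ) * Complex.I) * eu t ^ 5 * ev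 x ^ 11 * (x : ℂ) ^ 3 * (t : ℂ)

noncomputable def mkN3A_c1 (x t : ℝ) : ℂ := ((227598906949632000 : ℂ) * Complex.I) * eu t ^ 5 * ev x ^ 11 * (x : ℂ) ^ 3 * (t : ℂ) ^ 2 + ((-86930138071040 : ℂ) * Complex.I) * eu t ^ 5 * ev x ^ 11 * (x : ℂ) ^ 4 + ((-9483287789568000 : ℂ) * Complex.I) * eu t ^ 5 * ev x ^ 11 * (x : ℂ) ^ 4 * (t : ℂ) + ((158054796492800 : ℂ) * Complex.I) * eu t ^ 5 * ev x ^ 11 * (x : ℂ) ^ 5 + ((6190272610304 : ℂ) * Complex.I) * eu t ^ 7 * ev x ^ 9 + ((234223357132800 : ℂ) * Complex.I) * eu t ^ 7 * ev x ^ 9 * (t : ℂ) + ((-18454297649872896 : ℂ) * Complex.I) * eu t ^ 7 * ev x ^ 9 * (t : ℂ) ^ 2 + ((87535281783177216 : ℂ) * Complex.I) * eu t ^ 7 * ev x ^ 9 * (t : ℂ) ^ 3 + ((-512364721962221568 : ℂ) * Complex.I) * eu t ^ 7 * ev x ^ 9 * (t : ℂ) ^ 4 + ((18211079149458554880 : ℂ)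 * Complex.I) * eu t ^ 7 * ev x ^ 9 * (t : ℂ) ^ 5 + ((-5129881450551705600 : ℂ) * Complex.I) * eu t ^ 7 * ev x ^ 9 * (t : ℂ) ^ 6 + ((1231171548132409344000 : ℂ) * Complex.I) * eu t ^ 7 * ev x ^ 9 * (t : ℂ) ^ 7 + ((-19518613094400 : ℂ) * Complex.I) * eu t ^ 7 * ev x ^ 9 * (x : ℂ) + ((3075716274978816 : ℂ) * Complex.I) * eu t ^ 7 * ev x ^ 9 * (x : ℂ) * (t : ℂ) + ((-21883820445794304 : ℂ) * Complex.I) * eu t ^ 7 * ev x ^ 9 * (x : ℂ) * (t : ℂ) ^ 2 + ((170788240654073856 : ℂ) * Complex.I) * eu t ^ 7 * ev x ^ 9 * (x : ℂ) * (t : ℂ) ^ 3 + ((-7587949645607731200 : ℂ) * Complex.I) * eu t ^ 7 * ev x ^ 9 * (x : ℂ) * (t : ℂ) ^ 4 + ((2564940725275852800 : ℂ) * Complex.I) * eu t ^ 7 * ev x ^ 9 * (x : ℂ) * (t : ℂ) ^ 5 + ((-718183403077238784000 : ℂ) * Complex.I) * eu t ^ 7 * ev x ^ 9 * (x : ℂ)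 * (t : ℂ) ^ 6 + ((-128154844790784 : ℂ) * Complex.I) * eu t ^ 7 * ev x ^ 9 * (x : ℂ) ^ 2 + ((1823651703816192 : ℂ) * Complex.I) * eu t ^ 7 * ev x ^ 9 * (x : ℂ) ^ 2 * (t : ℂ) + ((-21348530081759232 : ℂ) * Complex.I) * eu t ^ 7 * ev x ^ 9 * (x : ℂ) ^ 2 * (t : ℂ) ^ 2 + ((1264658274267955200 : ℂ) * Complex.I) * eu t ^ 7 * ev x ^ 9 * (x : ℂ) ^ 2 * (t : ℂ) ^ 3 + ((-534362651099136000 : ℂ) * Complex.I) * eu t ^ 7 * ev x ^ 9 * (x : ℂ) ^ 2 * (t : ℂ) ^ 4 + ((179545850769309696000 : ℂ) * Complex.I) * eu t ^ 7 * ev x ^ 9 * (x : ℂ) ^ 2 * (t : ℂ) ^ 5 + ((-50656991772672 : ℂ) * Complex.I) * eu t ^ 7 * ev x ^ 9 * (x : ℂ) ^ 3 + ((1186029448986624 : ℂ) * Complex.I) * eu t ^ 7 * ev x ^ 9 * (x : ℂ) ^ 3 * (t : ℂ) + ((-105388189522329600 : ℂ) * Complex.I) * eu t ^ 7 * ev x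 ^ 9 * (x : ℂ) ^ 3 * (t : ℂ) ^ 2 + ((59373627899904000 : ℂ) * Complex.I) * eu t ^ 7 * ev x ^ 9 * (x : ℂ) ^ 3 * (t : ℂ) ^ 3 + ((-24936923717959680000 : ℂ) * Complex.I) * eu t ^ 7 * ev x ^ 9 * (x : ℂ) ^ 3 * (t : ℂ) ^ 4

noncomputable def mkN3A_c2 (x t : ℝ) : ℂ := ((-24708946853888 : ℂ) * Complex.I) * eu t ^ 7 * ev x ^ 9 * (x : ℂ) ^ 4 + ((4391174563430400 : ℂ) * Complex.I) * eu t ^ 7 * ev x ^ 9 * (x : ℂ) ^ 4 * (t : ℂ) + ((-3710851743744000 : ℂ) * Complex.I) * eu t ^ 7 * ev x ^ 9 * (x : ℂ) ^ 4 * (t : ℂ) ^ 2 + ((2078076976496640000 : ℂ) * Complex.I) * eu t ^ 7 * ev x ^ 9 * (x : ℂ) ^ 4 * (t : ℂ) ^ 3 + ((-73186242723840 : ℂ) * Complex.I) * eu t ^ 7 * ev x ^ 9 * (x : ℂ) ^ 5 + ((123695058124800 : ℂ) * Complex.I) * eu t ^ 7 * ev x ^ 9 * (x : ℂ) ^ 5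 * (t : ℂ) + ((-103903848824832000 : ℂ) * Complex.I) * eu t ^ 7 * ev x ^ 9 * (x : ℂ) ^ 5 * (t : ℂ) ^ 2 + ((-1717986918400 : ℂ) * Complex.I) * eu t ^ 7 * ev x ^ 9 * (x : ℂ) ^ 6 + ((2886218022912000 : ℂ) * Complex.I) * eu t ^ 7 * ev x ^ 9 * (x : ℂ) ^ 6 * (t : ℂ) + ((-34359738368000 : ℂ) * Complex.I) * eu t ^ 7 * ev x ^ 9 * (x : ℂ) ^ 7 + ((4796869246976 : ℂ) * Complex.I) * eu t ^ 9 * ev x ^ 7 + ((-192602255130624 : ℂ) * Complex.I) * eu t ^ 9 * ev x ^ 7 * (t : ℂ) + ((-5411740934209536 : ℂ) * Complex.I) * eu t ^ 9 * ev x ^ 7 * (t : ℂ) ^ 2 + ((238325742390214656 : ℂ) * Complex.I) * eu t ^ 9 * ev x ^ 7 * (t : ℂ) ^ 3 + ((-3276773005593673728 : ℂ) * Complex.I) * eu t ^ 9 * ev x ^ 7 * (t : ℂ) ^ 4 + ((29359219958014279680 : ℂ) * Complex.I) * eu t ^ 9 * ev x ^ 7 * (t : ℂ) ^ 5 + ((-157423237013805465600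 : ℂ) * Complex.I) * eu t ^ 9 * ev x ^ 7 * (t : ℂ) ^ 6 + ((461689330549653504000 : ℂ) * Complex.I) * eu t ^ 9 * ev x ^ 7 * (t : ℂ) ^ 7 + ((16050187927552 : ℂ) * Complex.I) * eu t ^ 9 * ev x ^ 7 * (x : ℂ) + ((901956822368256 : ℂ) * Complex.I) * eu t ^ 9 * ev x ^ 7 * (x : ℂ) * (t : ℂ) + ((-59581435597553664 : ℂ) * Complex.I) * eu t ^ 9 * ev x ^ 7 * (x : ℂ) * (t : ℂ) ^ 2 + ((1092257668531224576 : ℂ) * Complex.I) * eu t ^ 9 * ev x ^ 7 * (x : ℂ) * (t : ℂ) ^ 3 + ((-12233008315839283200 : ℂ) * Complex.I) * eu t ^ 9 * ev x ^ 7 * (x : ℂ) * (t : ℂ) ^ 4 + ((78711618506902732800 : ℂ) * Complex.I) * eu t ^ 9 * ev x ^ 7 * (x : ℂ) * (t : ℂ) ^ 5 + ((-269318776153964544000 : ℂ) * Complex.I) * eu t ^ 9 * ev x ^ 7 * (x : ℂ) * (t : ℂ) ^ 6 + ((-37581534265344 : ℂ) * Complex.I) * eu t ^ 9 * ev x ^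 7 * (x : ℂ) ^ 2 + ((4965119633129472 : ℂ) * Complex.I) * eu t ^ 9 * ev x ^ 7 * (x : ℂ) ^ 2 * (t : ℂ) + ((-136532208566403072 : ℂ) * Complex.I) * eu t ^ 9 * ev x ^ 7 * (x : ℂ) ^ 2 * (t : ℂ) ^ 2 + ((2038834719306547200 : ℂ) * Complex.I) * eu t ^ 9 * ev x ^ 7 * (x : ℂ) ^ 2 * (t : ℂ) ^ 3 + ((-16398253855604736000 : ℂ) * Complex.I) * eu t ^ 9 * ev x ^ 7 * (x : ℂ) ^ 2 * (t : ℂ) ^ 4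

noncomputable def mkN3A_c3 (x t : ℝ) : ℂ := ((67329694038491136000 : ℂ) * Complex.I) * eu t ^ 9 * ev x ^ 7 * (x : ℂ) ^ 2 * (t : ℂ) ^ 5 + ((-137919989809152 : ℂ) * Complex.I) * eu t ^ 9 * ev x ^ 7 * (x : ℂ) ^ 3 + ((7585122698133504 : ℂ) * Complex.I) * eu t ^ 9 * ev x ^ 7 * (x : ℂ) ^ 3 * (t : ℂ) + ((-169902893275545600 : ℂ) * Complex.I) * eu t ^ 9 * ev x ^ 7 * (x : ℂ) ^ 3 * (t : ℂ) ^ 2 + ((1822028206178304000 : ℂ) * Complex.I) * eu t ^ 9 * ev x ^ 7 * (x : ℂ) ^ 3 * (t : ℂ) ^ 3 + ((-9351346394234880000 : ℂ) * Complex.I) * eu t ^ 9 * ev x ^ 7 * (x : ℂ) ^ 3 * (t : ℂ) ^ 4 + ((-158023389544448 : ℂ) * Complex.I) * eu t ^ 9 * ev x ^ 7 * (x : ℂ) ^ 4 + ((7079287219814400 : ℂ) * Complex.I) * eu t ^ 9 * ev x ^ 7 * (x : ℂ) ^ 4 * (t : ℂ) + ((-113876762886144000 : ℂ) * Complex.I)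 * eu t ^ 9 * ev x ^ 7 * (x : ℂ) ^ 4 * (t : ℂ) ^ 2 + ((779278866186240000 : ℂ) * Complex.I) * eu t ^ 9 * ev x ^ 7 * (x : ℂ) ^ 4 * (t : ℂ) ^ 3 + ((-117988120330240 : ℂ) * Complex.I) * eu t ^ 9 * ev x ^ 7 * (x : ℂ) ^ 5 + ((3795892096204800 : ℂ) * Complex.I) * eu t ^ 9 * ev x ^ 7 * (x : ℂ) ^ 5 * (t : ℂ) + ((-38963943309312000 : ℂ) * Complex.I) * eu t ^ 9 * ev x ^ 7 * (x : ℂ) ^ 5 * (t : ℂ) ^ 2 + ((-52720723558400 : ℂ) * Complex.I) * eu t ^ 9 * ev x ^ 7 * (x : ℂ) ^ 6 + ((1082331758592000 : ℂ) * Complex.I) * eu t ^ 9 * ev x ^ 7 * (x : ℂ) ^ 6 * (t : ℂ) + ((-12884901888000 : ℂ) * Complex.I) * eu t ^ 9 * ev x ^ 7 * (x : ℂ) ^ 7 + ((1061087019008 : ℂ) * Complex.I) * eu t ^ 11 * ev x ^ 5 + ((-131255035232256 : ℂ) * Complex.I) * eu t ^ 11 * ev x ^ 5 * (t : ℂ)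 + ((4304066939191296 : ℂ) * Complex.I) * eu t ^ 11 * ev x ^ 5 * (t : ℂ) ^ 2 + ((-62832061999742976 : ℂ) * Complex.I) * eu t ^ 11 * ev x ^ 5 * (t : ℂ) ^ 3 + ((486132595021578240 : ℂ) * Complex.I) * eu t ^ 11 * ev x ^ 5 * (t : ℂ) ^ 4 + ((-1670718226327142400 : ℂ) * Complex.I) * eu t ^ 11 * ev x ^ 5 * (t : ℂ) ^ 5 + ((10937919602688 : ℂ) * Complex.I) * eu t ^ 11 * ev x ^ 5 * (x : ℂ) + ((-717344489865216 : ℂ) * Complex.I) * eu t ^ 11 * ev x ^ 5 * (x : ℂ) * (t : ℂ) + ((15708015499935744 : ℂ) * Complex.I) * eu t ^ 11 * ev x ^ 5 * (x : ℂ) * (t : ℂ) ^ 2 + ((-162044198340526080 : ℂ) * Complex.I) * eu t ^ 11 * ev x ^ 5 * (x : ℂ) * (t : ℂ) ^ 3 + ((696132594302976000 : ℂ) * Complex.I) * eu t ^ 11 * ev x ^ 5 * (x : ℂ) * (t : ℂ) ^ 4 + ((29889353744384 : ℂ) * Complex.I) * eu t ^ 11 * ev x ^ 5 * (x : ℂ)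 ^ 2 + ((-1309001291661312 : ℂ) * Complex.I) * eu t ^ 11 * ev x ^ 5 * (x : ℂ) ^ 2 * (t : ℂ) + ((20255524792565760 : ℂ) * Complex.I) * eu t ^ 11 * ev x ^ 5 * (x : ℂ) ^ 2 * (t : ℂ) ^ 2

noncomputable def mkN3A_c4 (x t : ℝ) : ℂ := ((-116022099050496000 : ℂ) * Complex.I) * eu t ^ 11 * ev x ^ 5 * (x : ℂ) ^ 2 * (t : ℂ) ^ 3 + ((36361146990592 : ℂ) * Complex.I) * eu t ^ 11 * ev x ^ 5 * (x : ℂ) ^ 3 + ((-1125306932920320 : ℂ) * Complex.I) * eu t ^ 11 * ev x ^ 5 * (x : ℂ) ^ 3 * (t : ℂ) + ((9668508254208000 : ℂ) * Complex.I) * eu t ^ 11 * ev x ^ 5 * (x : ℂ) ^ 3 * (t : ℂ) ^ 2 + ((23443894435840 : ℂ) * Complex.I) * eu t ^ 11 * ev x ^ 5 * (x : ℂ) ^ 4 + ((-402854510592000 : ℂ) * Complex.I) * eu t ^ 11 * ev x ^ 5 * (x : ℂ) ^ 4 * (t : ℂ) + ((6714241843200 : ℂ) * Complex.I) * eu t ^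 11 * ev x ^ 5 * (x : ℂ) ^ 5 + ((-129745981440 : ℂ) * Complex.I) * eu t ^ 13 * ev x ^ 3 + ((5175206019072 : ℂ) * Complex.I) * eu t ^ 13 * ev x ^ 3 * (t : ℂ) + ((-63342577188864 : ℂ) * Complex.I) * eu t ^ 13 * ev x ^ 3 * (t : ℂ) ^ 2 + ((262862568161280 : ℂ) * Complex.I) * eu t ^ 13 * ev x ^ 3 * (t : ℂ) ^ 3 + ((-431267168256 : ℂ) * Complex.I) * eu t ^ 13 * ev x ^ 3 * (x : ℂ) + ((10557096198144 : ℂ) * Complex.I) * eu t ^ 13 * ev x ^ 3 * (x : ℂ) * (t : ℂ) + ((-65715642040320 : ℂ) * Complex.I) * eu t ^ 13 * ev x ^ 3 * (x : ℂ) * (t : ℂ) ^ 2 + ((-439879008256 : ℂ) * Complex.I) * eu t ^ 13 * ev x ^ 3 * (x : ℂ) ^ 2 + ((5476303503360 : ℂ) * Complex.I) * eu t ^ 13 * ev x ^ 3 * (x : ℂ) ^ 2 * (t : ℂ) + ((-152119541760 : ℂ) * Complex.I) * eu t ^ 13 * ev x ^ 3 * (x : ℂ) ^ 3 + ((343397120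 : ℂ) * Complex.I) * eu t ^ 15 * ev x + ((-1798152192 : ℂ) * Complex.I) * eu t ^ 15 * ev x * (t : ℂ) + ((149846016 : ℂ) * Complex.I) * eu t ^ 15 * ev x * (x : ℂ)

noncomputable def mkN3A (x t : ℝ) : ℂ := mkN3A_c0 x t + mkN3A_c1 x t + mkN3A_c2 x t + mkN3A_c3 x t + mkN3A_c4 x t

noncomputable def mkW1A (x t : ℝ) : ℂ := ((7340032 : ℂ) * Complex.I) * eu t * ev x ^ 7 + ((50331648 : ℂ) * Complex.I) * eu t * ev x ^ 7 * (t : ℂ) + ((-4194304 : ℂ) * Complex.I) * eu t * ev x ^ 7 * (x : ℂ) + ((11993088 : ℂ) * Complex.I) * eu t ^ 3 * ev x ^ 5 + ((-264241152 : ℂ) * Complex.I) * eu t ^ 3 * ev x ^ 5 * (t : ℂ) + ((-3472883712 : ℂ) * Complex.I) * eu t ^ 3 * ev x ^ 5 * (t : ℂ) ^ 2 + ((-36238786560 : ℂ) * Complex.I) * eu t ^ 3 * ev x ^ 5 * (t : ℂ) ^ 3 + ((22020096 : ℂ) * Complex.I) * eu t ^ 3 * ev x ^ 5 * (x : ℂ)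 + ((578813952 : ℂ) * Complex.I) * eu t ^ 3 * ev x ^ 5 * (x : ℂ) * (t : ℂ) + ((9059696640 : ℂ) * Complex.I) * eu t ^ 3 * ev x ^ 5 * (x : ℂ) * (t : ℂ) ^ 2 + ((-24117248 : ℂ) * Complex.I) * eu t ^ 3 * ev x ^ 5 * (x : ℂ) ^ 2 + ((-754974720 : ℂ) * Complex.I) * eu t ^ 3 * ev x ^ 5 * (x : ℂ) ^ 2 * (t : ℂ) + ((20971520 : ℂ) * Complex.I) * eu t ^ 3 * ev x ^ 5 * (x : ℂ) ^ 3 + ((4706304 : ℂ) * Complex.I) * eu t ^ 5 * ev x ^ 3 + ((-307298304 : ℂ) * Complex.I) * eu t ^ 5 * ev x ^ 3 * (t : ℂ) + ((3274702848 : ℂ) * Complex.I) * eu t ^ 5 * ev x ^ 3 * (t : ℂ) ^ 2 + ((-13589544960 : ℂ) * Complex.I) * eu t ^ 5 * ev x ^ 3 * (t : ℂ) ^ 3 + ((25608192 : ℂ) * Complex.I) * eu t ^ 5 * ev x ^ 3 * (x : ℂ) + ((-545783808 : ℂ) * Complex.I) * eu t ^ 5 * ev x ^ 3 * (x : ℂ)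 * (t : ℂ) + ((3397386240 : ℂ) * Complex.I) * eu t ^ 5 * ev x ^ 3 * (x : ℂ) * (t : ℂ) ^ 2 + ((22740992 : ℂ) * Complex.I) * eu t ^ 5 * ev x ^ 3 * (x : ℂ) ^ 2 + ((-283115520 : ℂ) * Complex.I) * eu t ^ 5 * ev x ^ 3 * (x : ℂ) ^ 2 * (t : ℂ) + ((7864320 : ℂ) * Complex.I) * eu t ^ 5 * ev x ^ 3 * (x : ℂ) ^ 3 + ((-408320 : ℂ) * Complex.I) * eu t ^ 7 * ev x + ((2138112 : ℂ) * Complex.I) * eu t ^ 7 * ev x * (t : ℂ) + ((-178176 : ℂ) * Complex.I) * eu t ^ 7 * ev x * (x : ℂ)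

noncomputable def mkN1B (x t : ℝ) : ℂ := (262144 : ℂ) * eu t * ev x ^ 7 + (6291456 : ℂ) * eu t * ev x ^ 7 * (t : ℂ) + (-524288 : ℂ) * eu t * ev x ^ 7 * (x : ℂ) + (475136 : ℂ) * eu t ^ 3 * ev x ^ 5 + (-8257536 : ℂ) * eu t ^ 3 * ev x ^ 5 * (t : ℂ) + (37748736 : ℂ) * eu t ^ 3 * ev x ^ 5 * (t : ℂ) ^ 2 + (-4529848320 : ℂ) * eu t ^ 3 * ev x ^ 5 * (t : ℂ) ^ 3 + (688128 : ℂ) * eu t ^ 3 * ev x ^ 5 * (x : ℂ) + (-6291456 : ℂ) * eu t ^ 3 * ev x ^ 5 * (x : ℂ) * (t : ℂ) + (1132462080 : ℂ) * eu t ^ 3 * ev x ^ 5 * (x : ℂ) * (t : ℂ) ^ 2 + (262144 : ℂ) * eu t ^ 3 * ev x ^ 5 * (x : ℂ) ^ 2 + (-94371840 : ℂ) * eu t ^ 3 * ev x ^ 5 * (x : ℂ) ^ 2 * (t : ℂ) + (2621440 : ℂ) * eu t ^ 3 * ev x ^ 5 * (x : ℂ) ^ 3 + (183296 : ℂ) *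 eu t ^ 5 * ev x ^ 3 + (-8871936 : ℂ) * eu t ^ 5 * ev x ^ 3 * (t : ℂ) + (73138176 : ℂ) * eu t ^ 5 * ev x ^ 3 * (t : ℂ) ^ 2 + (-283115520 : ℂ) * eu t ^ 5 * ev x ^ 3 * (t : ℂ) ^ 3 + (739328 : ℂ) * eu t ^ 5 * ev x ^ 3 * (x : ℂ) + (-12189696 : ℂ) * eu t ^ 5 * ev x ^ 3 * (x : ℂ) * (t : ℂ) + (70778880 : ℂ) * eu t ^ 5 * ev x ^ 3 * (x : ℂ) * (t : ℂ) ^ 2 + (507904 : ℂ) * eu t ^ 5 * ev x ^ 3 * (x : ℂ) ^ 2 + (-5898240 : ℂ) * eu t ^ 5 * ev x ^ 3 * (x : ℂ) ^ 2 * (t : ℂ) + (163840 : ℂ) * eu t ^ 5 * ev x ^ 3 * (x : ℂ) ^ 3 + (-9280 : ℂ) * eu t ^ 7 * ev x + (44544 : ℂ) * eu t ^ 7 * ev x * (t : ℂ) + (-3712 : ℂ) * eu t ^ 7 * ev x * (x : ℂ)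

noncomputable def mkMB (x t : ℝ) : ℂ := (3145728 : ℂ) * eu t * ev x ^ 7 + (88080384 : ℂ) * eu t * ev x ^ 7 * (t : ℂ) + (-7340032 : ℂ) * eu t * ev x ^ 7 * (x : ℂ) + (5439488 : ℂ) * eu t ^ 3 * ev x ^ 5 + (-88866816 : ℂ) * eu t ^ 3 * ev x ^ 5 * (t : ℂ) + (1509949440 : ℂ) * eu t ^ 3 * ev x ^ 5 * (t : ℂ) ^ 2 + (-45298483200 : ℂ) * eu t ^ 3 * ev x ^ 5 * (t : ℂ) ^ 3 + (7405568 : ℂ) * eu t ^ 3 * ev x ^ 5 * (x : ℂ) + (-251658240 : ℂ) * eu t ^ 3 * ev x ^ 5 * (x : ℂ) * (t : ℂ) + (11324620800 : ℂ) * eu t ^ 3 * ev x ^ 5 * (x : ℂ) * (t : ℂ) ^ 2 + (10485760 : ℂ) * eu t ^ 3 * ev x ^ 5 * (x : ℂ) ^ 2 + (-943718400 : ℂ) * eu t ^ 3 * ev x ^ 5 * (x : ℂ) ^ 2 * (t : ℂ) + (26214400 : ℂ) * eu t ^ 3 * ev x ^ 5 * (x : ℂ) ^ 3 + (1839104 :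 ℂ) * eu t ^ 5 * ev x ^ 3 + (-65421312 : ℂ) * eu t ^ 5 * ev x ^ 3 * (t : ℂ) + (509607936 : ℂ) * eu t ^ 5 * ev x ^ 3 * (t : ℂ) ^ 2 + (-1698693120 : ℂ) * eu t ^ 5 * ev x ^ 3 * (t : ℂ) ^ 3 + (5451776 : ℂ) * eu t ^ 5 * ev x ^ 3 * (x : ℂ) + (-84934656 : ℂ) * eu t ^ 5 * ev x ^ 3 * (x : ℂ) * (t : ℂ) + (424673280 : ℂ) * eu t ^ 5 * ev x ^ 3 * (x : ℂ) * (t : ℂ) ^ 2 + (3538944 : ℂ) * eu t ^ 5 * ev x ^ 3 * (x : ℂ) ^ 2 + (-35389440 : ℂ) * eu t ^ 5 * ev x ^ 3 * (x : ℂ) ^ 2 * (t : ℂ) + (983040 : ℂ) * eu t ^ 5 * ev x ^ 3 * (x : ℂ) ^ 3 + (-22272 : ℂ) * eu t ^ 7 * ev x + (89088 : ℂ) * eu t ^ 7 * ev x * (t : ℂ) + (-7424 : ℂ) * eu t ^ 7 * ev x * (x : ℂ)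

noncomputable def mkMpB (x t : ℝ) : ℂ := (36700160 : ℂ) * eu t * ev x ^ 7 + (1233125376 : ℂ) * eu t * ev x ^ 7 * (t : ℂ) + (-102760448 : ℂ) * eu t * ev x ^ 7 * (x : ℂ) + (61800448 : ℂ) * eu t ^ 3 * ev x ^ 5 + (-1140326400 : ℂ) * eu t ^ 3 * ev x ^ 5 * (t : ℂ) + (26424115200 : ℂ) * eu t ^ 3 * ev x ^ 5 * (t : ℂ) ^ 2 + (-452984832000 : ℂ) * eu t ^ 3 * ev x ^ 5 * (t : ℂ) ^ 3 + (95027200 : ℂ) * eu t ^ 3 * ev x ^ 5 * (x : ℂ) + (-4404019200 : ℂ) * eu t ^ 3 * ev x ^ 5 * (x : ℂ) * (t : ℂ) + (113246208000 : ℂ) * eu t ^ 3 * ev x ^ 5 * (x : ℂ) * (t : ℂ) ^ 2 + (183500800 : ℂ) * eu t ^ 3 * ev x ^ 5 * (x : ℂ) ^ 2 + (-9437184000 : ℂ) * eu t ^ 3 * ev x ^ 5 * (x : ℂ) ^ 2 * (t : ℂ) + (262144000 : ℂ) * eu t ^ 3 * ev x ^ 5 * (x : ℂ) ^ 3 + (16486400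 : ℂ) * eu t ^ 5 * ev x ^ 3 + (-477462528 : ℂ) * eu t ^ 5 * ev x ^ 3 * (t : ℂ) + (3482320896 : ℂ) * eu t ^ 5 * ev x ^ 3 * (t : ℂ) ^ 2 + (-10192158720 : ℂ) * eu t ^ 5 * ev x ^ 3 * (t : ℂ) ^ 3 + (39788544 : ℂ) * eu t ^ 5 * ev x ^ 3 * (x : ℂ) + (-580386816 : ℂ) * eu t ^ 5 * ev x ^ 3 * (x : ℂ) * (t : ℂ) + (2548039680 : ℂ) * eu t ^ 5 * ev x ^ 3 * (x : ℂ) * (t : ℂ) ^ 2 + (24182784 : ℂ) * eu t ^ 5 * ev x ^ 3 * (x : ℂ) ^ 2 + (-212336640 : ℂ) * eu t ^ 5 * ev x ^ 3 * (x : ℂ) ^ 2 * (t : ℂ) + (5898240 : ℂ) * eu t ^ 5 * ev x ^ 3 * (x : ℂ) ^ 3 + (-51968 : ℂ) * eu t ^ 7 * ev x + (178176 : ℂ) * eu t ^ 7 * ev x * (t : ℂ) + (-14848 : ℂ) * eu t ^ 7 * ev x * (x : ℂ)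

noncomputable def mkN2B_c0 (x t : ℝ) : ℂ := (-268435456 : ℂ) * eu t * ev x ^ 11 + (-3221225472 : ℂ) * eu t * ev x ^ 11 * (t : ℂ) + (268435456 : ℂ) * eu t * ev x ^ 11 * (x : ℂ) + (-654311424 : ℂ) * eu t ^ 3 * ev x ^ 9 + (18723373056 : ℂ) * eu t ^ 3 * ev x ^ 9 * (t : ℂ) + (463856467968 : ℂ) * eu t ^ 3 * ev x ^ 9 * (t : ℂ) ^ 2 + (13915694039040 : ℂ) * eu t ^ 3 * ev x ^ 9 * (t : ℂ) ^ 3 + (-1560281088 : ℂ) * eu t ^ 3 * ev x ^ 9 * (x : ℂ) + (-77309411328 : ℂ) * eu t ^ 3 * ev x ^ 9 * (x : ℂ) * (t : ℂ) + (-3478923509760 : ℂ) * eu t ^ 3 * ev x ^ 9 * (x : ℂ) * (t : ℂ) ^ 2 + (3221225472 : ℂ) * eu t ^ 3 * ev x ^ 9 * (x : ℂ) ^ 2 + (289910292480 : ℂ) * eu t ^ 3 * ev x ^ 9 * (x : ℂ) ^ 2 * (t : ℂ) + (-8053063680 : ℂ) * eu t ^ 3 * ev x ^ 9 * (x : ℂ)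 ^ 3 + (-446693376 : ℂ) * eu t ^ 5 * ev x ^ 7 + (42354081792 : ℂ) * eu t ^ 5 * ev x ^ 7 * (t : ℂ) + (125627793408 : ℂ) * eu t ^ 5 * ev x ^ 7 * (t : ℂ) ^ 2 + (-7943542013952 : ℂ) * eu t ^ 5 * ev x ^ 7 * (t : ℂ) ^ 3 + (27831388078080 : ℂ) * eu t ^ 5 * ev x ^ 7 * (t : ℂ) ^ 4 + (-1669883284684800 : ℂ) * eu t ^ 5 * ev x ^ 7 * (t : ℂ) ^ 5 + (-3529506816 : ℂ) * eu t ^ 5 * ev x ^ 7 * (x : ℂ) + (-20937965568 : ℂ) * eu t ^ 5 * ev x ^ 7 * (x : ℂ) * (t : ℂ) + (1985885503488 : ℂ) * eu t ^ 5 * ev x ^ 7 * (x : ℂ) * (t : ℂ) ^ 2 + (-9277129359360 : ℂ) * eu t ^ 5 * ev x ^ 7 * (x : ℂ) * (t : ℂ) ^ 3 + (695784701952000 : ℂ) * eu t ^ 5 * ev x ^ 7 * (x : ℂ) * (t : ℂ) ^ 4 + (872415232 : ℂ) * eu t ^ 5 * ev x ^ 7 * (x : ℂ) ^ 2 + (-165490458624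 : ℂ) * eu t ^ 5 * ev x ^ 7 * (x : ℂ) ^ 2 * (t : ℂ) + (1159641169920 : ℂ) * eu t ^ 5 * ev x ^ 7 * (x : ℂ) ^ 2 * (t : ℂ) ^ 2 + (-115964116992000 : ℂ) * eu t ^ 5 * ev x ^ 7 * (x : ℂ) ^ 2 * (t : ℂ) ^ 3 + (4596957184 : ℂ) * eu t ^ 5 * ev x ^ 7 * (x : ℂ) ^ 3 + (-64424509440 : ℂ) * eu t ^ 5 * ev x ^ 7 * (x : ℂ) ^ 3 * (t : ℂ)

noncomputable def mkN2B_c1 (x t : ℝ) : ℂ := (9663676416000 : ℂ) * eu t ^ 5 * ev x ^ 7 * (x : ℂ) ^ 3 * (t : ℂ) ^ 2 + (1342177280 : ℂ) * eu t ^ 5 * ev x ^ 7 * (x : ℂ) ^ 4 + (-402653184000 : ℂ) * eu t ^ 5 * ev x ^ 7 * (x : ℂ) ^ 4 * (t : ℂ) + (6710886400 : ℂ) * eu t ^ 5 * ev x ^ 7 * (x : ℂ) ^ 5 + (15859712 : ℂ) * eu t ^ 7 * ev x ^ 5 + (20316684288 : ℂ) * eu t ^ 7 * ev x ^ 5 *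 (t : ℂ) + (-617871310848 : ℂ) * eu t ^ 7 * ev x ^ 5 * (t : ℂ) ^ 2 + (5497423921152 : ℂ) * eu t ^ 7 * ev x ^ 5 * (t : ℂ) ^ 3 + (-36528696852480 : ℂ) * eu t ^ 7 * ev x ^ 5 * (t : ℂ) ^ 4 + (104367705292800 : ℂ) * eu t ^ 7 * ev x ^ 5 * (t : ℂ) ^ 5 + (-1693057024 : ℂ) * eu t ^ 7 * ev x ^ 5 * (x : ℂ) + (102978551808 : ℂ) * eu t ^ 7 * ev x ^ 5 * (x : ℂ) * (t : ℂ) + (-1374355980288 : ℂ) * eu t ^ 7 * ev x ^ 5 * (x : ℂ) * (t : ℂ) ^ 2 + (12176232284160 : ℂ) * eu t ^ 7 * ev x ^ 5 * (x : ℂ) * (t : ℂ) ^ 3 + (-43486543872000 : ℂ) * eu t ^ 7 * ev x ^ 5 * (x : ℂ) * (t : ℂ) ^ 4 + (-4290772992 : ℂ) * eu t ^ 7 * ev x ^ 5 * (x : ℂ) ^ 2 + (114529665024 : ℂ) * eu t ^ 7 * ev x ^ 5 * (x : ℂ) ^ 2 * (t : ℂ) + (-1522029035520 : ℂ) * eu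 t ^ 7 * ev x ^ 5 * (x : ℂ) ^ 2 * (t : ℂ) ^ 2 + (7247757312000 : ℂ) * eu t ^ 7 * ev x ^ 5 * (x : ℂ) ^ 2 * (t : ℂ) ^ 3 + (-3181379584 : ℂ) * eu t ^ 7 * ev x ^ 5 * (x : ℂ) ^ 3 + (84557168640 : ℂ) * eu t ^ 7 * ev x ^ 5 * (x : ℂ) ^ 3 * (t : ℂ) + (-603979776000 : ℂ) * eu t ^ 7 * ev x ^ 5 * (x : ℂ) ^ 3 * (t : ℂ) ^ 2 + (-1761607680 : ℂ) * eu t ^ 7 * ev x ^ 5 * (x : ℂ) ^ 4 + (25165824000 : ℂ) * eu t ^ 7 * ev x ^ 5 * (x : ℂ) ^ 4 * (t : ℂ) + (-419430400 : ℂ) * eu t ^ 7 * ev x ^ 5 * (x : ℂ) ^ 5 + (82554880 : ℂ) * eu t ^ 9 * ev x ^ 3 + (-3091709952 : ℂ) * eu t ^ 9 * ev x ^ 3 * (t : ℂ) + (29557260288 : ℂ) * eu t ^ 9 * ev x ^ 3 * (t : ℂ) ^ 2 + (-98524200960 : ℂ) * eu t ^ 9 * ev x ^ 3 * (t : ℂ)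 ^ 3 + (257642496 : ℂ) * eu t ^ 9 * ev x ^ 3 * (x : ℂ)

noncomputable def mkN2B_c2 (x t : ℝ) : ℂ := (-4926210048 : ℂ) * eu t ^ 9 * ev x ^ 3 * (x : ℂ) * (t : ℂ) + (24631050240 : ℂ) * eu t ^ 9 * ev x ^ 3 * (x : ℂ) * (t : ℂ) ^ 2 + (205258752 : ℂ) * eu t ^ 9 * ev x ^ 3 * (x : ℂ) ^ 2 + (-2052587520 : ℂ) * eu t ^ 9 * ev x ^ 3 * (x : ℂ) ^ 2 * (t : ℂ) + (57016320 : ℂ) * eu t ^ 9 * ev x ^ 3 * (x : ℂ) ^ 3 + (-645888 : ℂ) * eu t ^ 11 * ev x + (2583552 : ℂ) * eu t ^ 11 * ev x * (t : ℂ) + (-215296 : ℂ) * eu t ^ 11 * ev x * (x : ℂ)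

noncomputable def mkN2B (x t : ℝ) : ℂ := mkN2B_c0 x t + mkN2B_c1 x t + mkN2B_c2 x t

noncomputable def mkN3B_c0 (x t : ℝ) : ℂ := (206158430208 : ℂ) * eu t * ev x ^ 15 + (1649267441664 : ℂ) * eu t * ev x ^ 15 * (t : ℂ) + (-137438953472 : ℂ) * eu t * ev x ^ 15 * (x : ℂ) + (528280977408 : ℂ) * eu t ^ 3 * ev x ^ 13 + (-52879637348352 : ℂ) * eu t ^ 3 * ev x ^ 13 * (t : ℂ) + (-2048390162546688 : ℂ) * eu t ^ 3 * ev x ^ 13 * (t : ℂ) ^ 2 + (-27311868833955840 : ℂ) * eu t ^ 3 * ev x ^ 13 * (t : ℂ) ^ 3 + (4406636445696 : ℂ) * eu t ^ 3 * ev x ^ 13 * (x : ℂ) + (341398360424448 : ℂ) * eu t ^ 3 * ev x ^ 13 * (x : ℂ) * (t : ℂ) + (6827967208488960 : ℂ) * eu t ^ 3 * ev x ^ 13 * (x : ℂ) * (t : ℂ) ^ 2 + (-14224931684352 : ℂ) * eu t ^ 3 * ev x ^ 13 * (x : ℂ) ^ 2 + (-568997267374080 : ℂ) * eu t ^ 3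 * ev x ^ 13 * (x : ℂ) ^ 2 * (t : ℂ) + (15805479649280 : ℂ) * eu t ^ 3 * ev x ^ 13 * (x : ℂ) ^ 3 + (4026531840 : ℂ) * eu t ^ 5 * ev x ^ 11 + (-158632469594112 : ℂ) * eu t ^ 5 * ev x ^ 11 * (t : ℂ) + (-690836899627008 : ℂ) * eu t ^ 5 * ev x ^ 11 * (t : ℂ) ^ 2 + (65563328608468992 : ℂ) * eu t ^ 5 * ev x ^ 11 * (t : ℂ) ^ 3 + (491613639011205120 : ℂ) * eu t ^ 5 * ev x ^ 11 * (t : ℂ) ^ 4 + (19664545560448204800 : ℂ) * eu t ^ 5 * ev x ^ 11 * (t : ℂ) ^ 5 + (13219372466176 : ℂ) * eu t ^ 5 * ev x ^ 11 * (x : ℂ) + (115139483271168 : ℂ) * eu t ^ 5 * ev x ^ 11 * (x : ℂ) * (t : ℂ) + (-16390832152117248 : ℂ) * eu t ^ 5 * ev x ^ 11 * (x : ℂ) * (t : ℂ) ^ 2 + (-163871213003735040 : ℂ) * eu t ^ 5 * ev x ^ 11 * (x : ℂ) * (t : ℂ) ^ 3 + (-8193560650186752000 : ℂ) * eu t ^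 5 * ev x ^ 11 * (x : ℂ) * (t : ℂ) ^ 4 + (-4797478469632 : ℂ) * eu t ^ 5 * ev x ^ 11 * (x : ℂ) ^ 2 + (1365902679343104 : ℂ) * eu t ^ 5 * ev x ^ 11 * (x : ℂ) ^ 2 * (t : ℂ) + (20483901625466880 : ℂ) * eu t ^ 5 * ev x ^ 11 * (x : ℂ) ^ 2 * (t : ℂ) ^ 2 + (1365593441697792000 : ℂ) * eu t ^ 5 * ev x ^ 11 * (x : ℂ) ^ 2 * (t : ℂ) ^ 3 + (-37941741092864 : ℂ) * eu t ^ 5 * ev x ^ 11 * (x : ℂ) ^ 3 + (-1137994534748160 : ℂ) * eu t ^ 5 * ev x ^ 11 * (x : ℂ) ^ 3 * (t : ℂ)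

noncomputable def mkN3B_c1 (x t : ℝ) : ℂ := (-113799453474816000 : ℂ) * eu t ^ 5 * ev x ^ 11 * (x : ℂ) ^ 3 * (t : ℂ) ^ 2 + (23708219473920 : ℂ) * eu t ^ 5 * ev x ^ 11 * (x : ℂ) ^ 4 + (4741643894784000 : ℂ) * eu t ^ 5 * ev x ^ 11 * (x : ℂ) ^ 4 * (t : ℂ) + (-79027398246400 : ℂ) * eu t ^ 5 * ev x ^ 11 * (x : ℂ) ^ 5 + (-1121674330112 : ℂ) * eu t ^ 7 * ev x ^ 9 + (-118544721248256 : ℂ) * eu t ^ 7 * ev x ^ 9 * (t : ℂ) + (4859128430198784 : ℂ) * eu t ^ 7 * ev x ^ 9 * (t : ℂ) ^ 2 + (4447455814877184 : ℂ) * eu t ^ 7 * ev x ^ 9 * (t : ℂ) ^ 3 + (184266054187352064 : ℂ) * eu t ^ 7 * ev x ^ 9 * (t : ℂ) ^ 4 + (-6487162584343511040 : ℂ) * eu t ^ 7 * ev x ^ 9 * (t : ℂ) ^ 5 + (15389644351655116800 : ℂ) * eu t ^ 7 * ev x ^ 9 * (t : ℂ) ^ 6 + (-615585774066204672000 : ℂ)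 * eu t ^ 7 * ev x ^ 9 * (t : ℂ) ^ 7 + (9878726770688 : ℂ) * eu t ^ 7 * ev x ^ 9 * (x : ℂ) + (-809854738366464 : ℂ) * eu t ^ 7 * ev x ^ 9 * (x : ℂ) * (t : ℂ) + (-1111863953719296 : ℂ) * eu t ^ 7 * ev x ^ 9 * (x : ℂ) * (t : ℂ) ^ 2 + (-61422018062450688 : ℂ) * eu t ^ 7 * ev x ^ 9 * (x : ℂ) * (t : ℂ) ^ 3 + (2702984410143129600 : ℂ) * eu t ^ 7 * ev x ^ 9 * (x : ℂ) * (t : ℂ) ^ 4 + (-7694822175827558400 : ℂ) * eu t ^ 7 * ev x ^ 9 * (x : ℂ) * (t : ℂ) ^ 5 + (359091701538619392000 : ℂ) * eu t ^ 7 * ev x ^ 9 * (x : ℂ) * (t : ℂ) ^ 6 + (33743947431936 : ℂ) * eu t ^ 7 * ev x ^ 9 * (x : ℂ) ^ 2 + (92655329476608 : ℂ) * eu t ^ 7 * ev x ^ 9 * (x : ℂ) ^ 2 * (t : ℂ) + (7677752257806336 : ℂ) * eu t ^ 7 * ev x ^ 9 * (x : ℂ) ^ 2 * (t : ℂ) ^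 2 + (-450497401690521600 : ℂ) * eu t ^ 7 * ev x ^ 9 * (x : ℂ) ^ 2 * (t : ℂ) ^ 3 + (1603087953297408000 : ℂ) * eu t ^ 7 * ev x ^ 9 * (x : ℂ) ^ 2 * (t : ℂ) ^ 4 + (-89772925384654848000 : ℂ) * eu t ^ 7 * ev x ^ 9 * (x : ℂ) ^ 2 * (t : ℂ) ^ 5 + (-2573759152128 : ℂ) * eu t ^ 7 * ev x ^ 9 * (x : ℂ) ^ 3 + (-426541792100352 : ℂ) * eu t ^ 7 * ev x ^ 9 * (x : ℂ) ^ 3 * (t : ℂ) + (37541450140876800 : ℂ) * eu t ^ 7 * ev x ^ 9 * (x : ℂ) ^ 3 * (t : ℂ) ^ 2 + (-178120883699712000 : ℂ) * eu t ^ 7 * ev x ^ 9 * (x : ℂ) ^ 3 * (t : ℂ) ^ 3 + (12468461858979840000 : ℂ) * eu t ^ 7 * ev x ^ 9 * (x : ℂ) ^ 3 * (t : ℂ) ^ 4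

noncomputable def mkN3B_c2 (x t : ℝ) : ℂ := (8886287335424 : ℂ) * eu t ^ 7 * ev x ^ 9 * (x : ℂ) ^ 4 + (-1564227089203200 : ℂ) * eu t ^ 7 * ev x ^ 9 * (x : ℂ) ^ 4 * (t : ℂ) + (11132555231232000 : ℂ) * eu t ^ 7 * ev x ^ 9 * (x : ℂ) ^ 4 * (t : ℂ) ^ 2 + (-1039038488248320000 : ℂ) * eu t ^ 7 * ev x ^ 9 * (x : ℂ) ^ 4 * (t : ℂ) ^ 3 + (26070451486720 : ℂ) * eu t ^ 7 * ev x ^ 9 * (x : ℂ) ^ 5 + (-371085174374400 : ℂ) * eu t ^ 7 * ev x ^ 9 * (x : ℂ) ^ 5 * (t : ℂ) + (51951924412416000 : ℂ) * eu t ^ 7 * ev x ^ 9 * (x : ℂ) ^ 5 * (t : ℂ) ^ 2 + (5153960755200 : ℂ) * eu t ^ 7 * ev x ^ 9 * (x : ℂ) ^ 6 + (-1443109011456000 : ℂ) * eu t ^ 7 * ev x ^ 9 * (x : ℂ) ^ 6 * (t : ℂ) + (17179869184000 : ℂ) * eu t ^ 7 * ev x ^ 9 * (x : ℂ) ^ 7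 + (-1131446009856 : ℂ) * eu t ^ 9 * ev x ^ 7 + (18076988866560 : ℂ) * eu t ^ 9 * ev x ^ 7 * (t : ℂ) + (2342257730519040 : ℂ) * eu t ^ 9 * ev x ^ 7 * (t : ℂ) ^ 2 + (-59540036407787520 : ℂ) * eu t ^ 9 * ev x ^ 7 * (t : ℂ) ^ 3 + (594361557517860864 : ℂ) * eu t ^ 9 * ev x ^ 7 * (t : ℂ) ^ 4 + (-4399808478487511040 : ℂ) * eu t ^ 9 * ev x ^ 7 * (t : ℂ) ^ 5 + (16992732304952524800 : ℂ) * eu t ^ 9 * ev x ^ 7 * (t : ℂ) ^ 6 + (-38474110879137792000 : ℂ) * eu t ^ 9 * ev x ^ 7 * (t : ℂ) ^ 7 + (-1506415738880 : ℂ) * eu t ^ 9 * ev x ^ 7 * (x : ℂ) + (-390376288419840 : ℂ) * eu t ^ 9 * ev x ^ 7 * (x : ℂ) * (t : ℂ) + (14885009101946880 : ℂ) * eu t ^ 9 * ev x ^ 7 * (x : ℂ) * (t : ℂ) ^ 2 + (-198120519172620288 : ℂ) * eu t ^ 9 * ev x ^ 7 * (x : ℂ) * (t : ℂ) ^ 3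 + (1833253532703129600 : ℂ) * eu t ^ 9 * ev x ^ 7 * (x : ℂ) * (t : ℂ) ^ 4 + (-8496366152476262400 : ℂ) * eu t ^ 9 * ev x ^ 7 * (x : ℂ) * (t : ℂ) ^ 5 + (22443231346163712000 : ℂ) * eu t ^ 9 * ev x ^ 7 * (x : ℂ) * (t : ℂ) ^ 6 + (16265678684160 : ℂ) * eu t ^ 9 * ev x ^ 7 * (x : ℂ) ^ 2 + (-1240417425162240 : ℂ) * eu t ^ 9 * ev x ^ 7 * (x : ℂ) ^ 2 * (t : ℂ) + (24765064896577536 : ℂ) * eu t ^ 9 * ev x ^ 7 * (x : ℂ) ^ 2 * (t : ℂ) ^ 2 + (-305542255450521600 : ℂ) * eu t ^ 9 * ev x ^ 7 * (x : ℂ) ^ 2 * (t : ℂ) ^ 3 + (1770076281765888000 : ℂ) * eu t ^ 9 * ev x ^ 7 * (x : ℂ) ^ 2 * (t : ℂ) ^ 4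

noncomputable def mkN3B_c3 (x t : ℝ) : ℂ := (-5610807836540928000 : ℂ) * eu t ^ 9 * ev x ^ 7 * (x : ℂ) ^ 2 * (t : ℂ) ^ 5 + (34456039587840 : ℂ) * eu t ^ 9 * ev x ^ 7 * (x : ℂ) ^ 3 + (-1375836938698752 : ℂ) * eu t ^ 9 * ev x ^ 7 * (x : ℂ) ^ 3 * (t : ℂ) + (25461854620876800 : ℂ) * eu t ^ 9 * ev x ^ 7 * (x : ℂ) ^ 3 * (t : ℂ) ^ 2 + (-196675142418432000 : ℂ) * eu t ^ 9 * ev x ^ 7 * (x : ℂ) ^ 3 * (t : ℂ) ^ 3 + (779278866186240000 : ℂ) * eu t ^ 9 * ev x ^ 7 * (x : ℂ) ^ 3 * (t : ℂ) ^ 4 + (28663269556224 : ℂ) * eu t ^ 9 * ev x ^ 7 * (x : ℂ) ^ 4 + (-1060910609203200 : ℂ) * eu t ^ 9 * ev x ^ 7 * (x : ℂ) ^ 4 * (t : ℂ) + (12292196401152000 : ℂ) * eu t ^ 9 * ev x ^ 7 * (x : ℂ) ^ 4 * (t : ℂ) ^ 2 + (-64939905515520000 : ℂ) * eu t ^ 9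 * ev x ^ 7 * (x : ℂ) ^ 4 * (t : ℂ) ^ 3 + (17681843486720 : ℂ) * eu t ^ 9 * ev x ^ 7 * (x : ℂ) ^ 5 + (-409739880038400 : ℂ) * eu t ^ 9 * ev x ^ 7 * (x : ℂ) ^ 5 * (t : ℂ) + (3246995275776000 : ℂ) * eu t ^ 9 * ev x ^ 7 * (x : ℂ) ^ 5 * (t : ℂ) ^ 2 + (5690831667200 : ℂ) * eu t ^ 9 * ev x ^ 7 * (x : ℂ) ^ 6 + (-90194313216000 : ℂ) * eu t ^ 9 * ev x ^ 7 * (x : ℂ) ^ 6 * (t : ℂ) + (1073741824000 : ℂ) * eu t ^ 9 * ev x ^ 7 * (x : ℂ) ^ 7 + (-299577049088 : ℂ) * eu t ^ 11 * ev x ^ 5 + (29709471055872 : ℂ) * eu t ^ 11 * ev x ^ 5 * (t : ℂ) + (-785421793492992 : ℂ) * eu t ^ 11 * ev x ^ 5 * (t : ℂ) ^ 2 + (8987193699729408 : ℂ) * eu t ^ 11 * ev x ^ 5 * (t : ℂ) ^ 3 + (-54530386553733120 : ℂ) * eu t ^ 11 * ev x ^ 5 * (t : ℂ) ^ 4 +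 (139226518860595200 : ℂ) * eu t ^ 11 * ev x ^ 5 * (t : ℂ) ^ 5 + (-2475789254656 : ℂ) * eu t ^ 11 * ev x ^ 5 * (x : ℂ) + (130903632248832 : ℂ) * eu t ^ 11 * ev x ^ 5 * (x : ℂ) * (t : ℂ) + (-2246798424932352 : ℂ) * eu t ^ 11 * ev x ^ 5 * (x : ℂ) * (t : ℂ) ^ 2 + (18176795517911040 : ℂ) * eu t ^ 11 * ev x ^ 5 * (x : ℂ) * (t : ℂ) ^ 3 + (-58011049525248000 : ℂ) * eu t ^ 11 * ev x ^ 5 * (x : ℂ) * (t : ℂ) ^ 4 + (-5454318010368 : ℂ) * eu t ^ 11 * ev x ^ 5 * (x : ℂ) ^ 2 + (187233202077696 : ℂ) * eu t ^ 11 * ev x ^ 5 * (x : ℂ) ^ 2 * (t : ℂ) + (-2272099439738880 : ℂ) * eu t ^ 11 * ev x ^ 5 * (x : ℂ) ^ 2 * (t : ℂ) ^ 2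

noncomputable def mkN3B_c4 (x t : ℝ) : ℂ := (9668508254208000 : ℂ) * eu t ^ 11 * ev x ^ 5 * (x : ℂ) ^ 2 * (t : ℂ) ^ 3 + (-5200922279936 : ℂ) * eu t ^ 11 * ev x ^ 5 * (x : ℂ) ^ 3 + (126227746652160 : ℂ) * eu t ^ 11 * ev x ^ 5 * (x : ℂ) ^ 3 * (t : ℂ) + (-805709021184000 : ℂ) * eu t ^ 11 * ev x ^ 5 * (x : ℂ) ^ 3 * (t : ℂ) ^ 2 + (-2629744721920 : ℂ) * eu t ^ 11 * ev x ^ 5 * (x : ℂ) ^ 4 + (33571209216000 : ℂ) * eu t ^ 11 * ev x ^ 5 * (x : ℂ) ^ 4 * (t : ℂ) + (-559520153600 : ℂ) * eu t ^ 11 * ev x ^ 5 * (x : ℂ) ^ 5 + (25122459648 : ℂ) * eu t ^ 13 * ev x ^ 3 + (-811276664832 : ℂ) * eu t ^ 13 * ev x ^ 3 * (t : ℂ) + (7484281454592 : ℂ) * eu t ^ 13 * ev x ^ 3 * (t : ℂ) ^ 2 + (-21905214013440 : ℂ) * eu t ^ 13 * ev x ^ 3 * (t : ℂ) ^ 3 +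 (67606388736 : ℂ) * eu t ^ 13 * ev x ^ 3 * (x : ℂ) + (-1247380242432 : ℂ) * eu t ^ 13 * ev x ^ 3 * (x : ℂ) * (t : ℂ) + (5476303503360 : ℂ) * eu t ^ 13 * ev x ^ 3 * (x : ℂ) * (t : ℂ) ^ 2 + (51974176768 : ℂ) * eu t ^ 13 * ev x ^ 3 * (x : ℂ) ^ 2 + (-456358625280 : ℂ) * eu t ^ 13 * ev x ^ 3 * (x : ℂ) ^ 2 * (t : ℂ) + (12676628480 : ℂ) * eu t ^ 13 * ev x ^ 3 * (x : ℂ) ^ 3 + (-43705088 : ℂ) * eu t ^ 15 * ev x + (149846016 : ℂ) * eu t ^ 15 * ev x * (t : ℂ) + (-12487168 : ℂ) * eu t ^ 15 * ev x * (x : ℂ)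

noncomputable def mkN3B (x t : ℝ) : ℂ := mkN3B_c0 x t + mkN3B_c1 x t + mkN3B_c2 x t + mkN3B_c3 x t + mkN3B_c4 x t

noncomputable def mkW1B (x t : ℝ) : ℂ := (-3145728 : ℂ) * eu t * ev x ^ 7 + (-25165824 : ℂ) * eu t * ev x ^ 7 * (t : ℂ) + (2097152 : ℂ) * eu t * ev x ^ 7 * (x : ℂ) + (-4128768 : ℂ) * eu t ^ 3 * ev x ^ 5 + (33030144 : ℂ) * eu t ^ 3 * ev x ^ 5 * (t : ℂ) + (1358954496 : ℂ) * eu t ^ 3 * ev x ^ 5 * (t : ℂ) ^ 2 + (18119393280 : ℂ) * eu t ^ 3 * ev x ^ 5 * (t : ℂ) ^ 3 + (-2752512 : ℂ) * eu t ^ 3 * ev x ^ 5 * (x : ℂ) + (-226492416 : ℂ) * eu t ^ 3 * ev x ^ 5 * (x : ℂ) * (t : ℂ) + (-4529848320 : ℂ) * eu t ^ 3 * ev x ^ 5 * (x : ℂ) * (t : ℂ) ^ 2 + (9437184 : ℂ) * eu t ^ 3 * ev x ^ 5 * (x : ℂ) ^ 2 + (377487360 : ℂ) * eu t ^ 3 *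 ev x ^ 5 * (x : ℂ) ^ 2 * (t : ℂ) + (-10485760 : ℂ) * eu t ^ 3 * ev x ^ 5 * (x : ℂ) ^ 3 + (-1609728 : ℂ) * eu t ^ 5 * ev x ^ 3 + (66945024 : ℂ) * eu t ^ 5 * ev x ^ 3 * (t : ℂ) + (-386924544 : ℂ) * eu t ^ 5 * ev x ^ 3 * (t : ℂ) ^ 2 + (1132462080 : ℂ) * eu t ^ 5 * ev x ^ 3 * (t : ℂ) ^ 3 + (-5578752 : ℂ) * eu t ^ 5 * ev x ^ 3 * (x : ℂ) + (64487424 : ℂ) * eu t ^ 5 * ev x ^ 3 * (x : ℂ) * (t : ℂ) + (-283115520 : ℂ) * eu t ^ 5 * ev x ^ 3 * (x : ℂ) * (t : ℂ) ^ 2 + (-2686976 : ℂ) * eu t ^ 5 * ev x ^ 3 * (x : ℂ) ^ 2 + (23592960 : ℂ) * eu t ^ 5 * ev x ^ 3 * (x : ℂ) ^ 2 * (t : ℂ) + (-655360 : ℂ) * eu t ^ 5 * ev x ^ 3 * (x : ℂ) ^ 3 + (51968 : ℂ) * eu t ^ 7 * ev x + (-178176 : ℂ) * eu t ^ 7 *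 ev x * (t : ℂ) + (14848 : ℂ) * eu t ^ 7 * ev x * (x : ℂ)

lemma sMA (x t : ℝ) : mkAxx x t * mkD x t - mkA x t * mkDxx x t = mkMA x t := by
  simp only [mkAxx, mkA, mkD, mkDxx, mkMA]; ring

lemma sMpA (x t : ℝ) : mkAxxx x t * mkD x t + mkAxx x t * mkDx x t - mkAx x t * mkDxx x t
    - mkA x t * mkDxxx x t = mkMpA x t := by
  simp only [mkAxxx, mkAxx, mkAx, mkA, mkD, mkDx, mkDxx, mkDxxx, mkMpA]; ring

lemma sW1A (x t : ℝ) : mkAt x t * mkD x t - mkA x t * mkDt x t = mkW1A x t := by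
  simp only [mkAt, mkA, mkD, mkDt, mkW1A]; ring

lemma sN1B (x t : ℝ) : mkBx x t * mkD x t - mkB x t * mkDx x t = mkN1B x t := by
  simp only [mkBx, mkB, mkD, mkDx, mkN1B]; ring

lemma sMB (x t : ℝ) : mkBxx x t * mkD x t - mkB x t * mkDxx x t = mkMB x t := by
  simp only [mkBxx, mkB, mkD, mkDxx, mkMB]; ring

lemma sMpB (x t : ℝ) : mkBxxx x t * mkD x t + mkBxx x t * mkDx x t - mkBx x t * mkDxx x t
    - mkB x t * mkDxxx x t = mkMpB x t := by
  simp only [mkBxxx, mkBxx, mkBx, mkB, mkD, mkDx, mkDxx, mkDxxx, mkMpB]; ring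

lemma sN2B (x t : ℝ) : mkMB x t * mkD x t - 2 * (mkN1B x t * mkDx x t) = mkN2B x t := by
  simp only [mkMB, mkD, mkN1B, mkDx, mkN2B_c0, mkN2B_c1, mkN2B_c2, mkN2B]; ring

lemma sN3B (x t : ℝ) : (mkMpB x t * mkD x t - mkMB x t * mkDx x t
    - 2 * (mkN1B x t * mkDxx x t)) * mkD x t - 3 * (mkN2B x t * mkDx x t) = mkN3B x t := by
  simp only [mkMpB, mkMB, mkN1B, mkN2B_c0, mkN2B_c1, mkN2B_c2, mkN2B, mkD, mkDx, mkDxx, mkN3B_c0, mkN3B_c1, mkN3B_c2, mkN3B_c3, mkN3B_c4, mkN3B]; ring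

lemma sW1B (x t : ℝ) : mkBt x t * mkD x t - mkB x t * mkDt x t = mkW1B x t := by
  simp only [mkBt, mkB, mkD, mkDt, mkW1B]; ring

lemma sN1A (x t : ℝ) : mkAx x t * mkD x t - mkA x t * mkDx x t = mkN1A x t := by
  simp only [mkAx, mkA, mkD, mkDx, mkN1A]; ring

lemma sN2A (x t : ℝ) : mkMA x t * mkD x t - 2 * (mkN1A x t * mkDx x t) = mkN2A x t := by
  simp only [mkMA, mkD, mkN1A, mkDx, mkN2A_c0, mkN2A_c1, mkN2A_c2, mkN2A]; ring

lemma sN3A (x t : ℝ) : (mkMpA x t * mkD x t - mkMA x t * mkDx x t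
    - 2 * (mkN1A x t * mkDxx x t)) * mkD x t - 3 * (mkN2A x t * mkDx x t) = mkN3A x t := by
  simp only [mkMpA, mkMA, mkN1A, mkN2A_c0, mkN2A_c1, mkN2A_c2, mkN2A, mkD, mkDx, mkDxx, mkN3A_c0, mkN3A_c1, mkN3A_c2, mkN3A_c3, mkN3A_c4, mkN3A]; ring

lemma sKeyA (x t : ℝ) : mkW1A x t * mkD x t ^ 2 + mkN3A x t
    + 3 * (mkA x t * -mkA x t + mkB x t * mkB x t) * mkN1A x t
    + 3 * (-mkA x t * mkN1A x t + mkB x t * mkN1B x t) * mkA x t = 0 := by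
  simp only [mkW1A, mkN3A_c0, mkN3A_c1, mkN3A_c2, mkN3A_c3, mkN3A_c4, mkN3A, mkN1A, mkN1B, mkA, mkB, mkD]
  linear_combination ((1236950581248 : ℂ) * Complex.I * eu t ^ 3 * ev x ^ 13 + (138538465099776 : ℂ) * Complex.I * eu t ^ 3 * ev x ^ 13 * (t : ℂ) + (4749890231992320 : ℂ) * Complex.I * eu t ^ 3 * ev x ^ 13 * (t : ℂ) ^ 2 + (45598946227126272 : ℂ) * Complex.I * eu t ^ 3 * ev x ^ 13 * (t : ℂ) ^ 3 + (-11544872091648 : ℂ) * Complex.I * eu t ^ 3 * ev x ^ 13 * (x : ℂ) + (-791648371998720 : ℂ) * Complex.I * eu t ^ 3 * ev x ^ 13 * (x : ℂ) * (t : ℂ) + (-11399736556781568 : ℂ) * Complex.I * eu t ^ 3 * ev x ^ 13 * (x : ℂ) * (t : ℂ) ^ 2 + (32985348833280 : ℂ) * Complex.I * eu t ^ 3 * ev x ^ 13 * (x : ℂ) ^ 2 + (949978046398464 : ℂ) * Complex.I * eu t ^ 3 * ev x ^ 13 * (x : ℂ) ^ 2 * (t : ℂ) + (-26388279066624 : ℂ)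 * Complex.I * eu t ^ 3 * ev x ^ 13 * (x : ℂ) ^ 3 + (5179730558976 : ℂ) * Complex.I * eu t ^ 5 * ev x ^ 11 + (304289842987008 : ℂ) * Complex.I * eu t ^ 5 * ev x ^ 11 * (t : ℂ) + (-831230790598656 : ℂ) * Complex.I * eu t ^ 5 * ev x ^ 11 * (t : ℂ) ^ 2 + (-190945587326091264 : ℂ) * Complex.I * eu t ^ 5 * ev x ^ 11 * (t : ℂ) ^ 3 + (-1778358902857924608 : ℂ) * Complex.I * eu t ^ 5 * ev x ^ 11 * (t : ℂ) ^ 4 + (-32831241283530915840 : ℂ) * Complex.I * eu t ^ 5 * ev x ^ 11 * (t : ℂ) ^ 5 + (-25357486915584 : ℂ) * Complex.I * eu t ^ 5 * ev x ^ 11 * (x : ℂ) + (138538465099776 : ℂ) * Complex.I * eu t ^ 5 * ev x ^ 11 * (x : ℂ) * (t : ℂ) + (47736396831522816 : ℂ) * Complex.I * eu t ^ 5 * ev x ^ 11 * (x : ℂ) * (t : ℂ) ^ 2 + (592786300952641536 : ℂ) * Complex.I * eu t ^ 5 * ev x ^ 11 * (x : ℂ) * (t : ℂ) ^ 3 + (13679683868137881600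 : ℂ) * Complex.I * eu t ^ 5 * ev x ^ 11 * (x : ℂ) * (t : ℂ) ^ 4 + (-5772436045824 : ℂ) * Complex.I * eu t ^ 5 * ev x ^ 11 * (x : ℂ) ^ 2 + (-3978033069293568 : ℂ) * Complex.I * eu t ^ 5 * ev x ^ 11 * (x : ℂ) ^ 2 * (t : ℂ) + (-74098287619080192 : ℂ) * Complex.I * eu t ^ 5 * ev x ^ 11 * (x : ℂ) ^ 2 * (t : ℂ) ^ 2 + (-2279947311356313600 : ℂ) * Complex.I * eu t ^ 5 * ev x ^ 11 * (x : ℂ) ^ 2 * (t : ℂ) ^ 3 + (110500918591488 : ℂ) * Complex.I * eu t ^ 5 * ev x ^ 11 * (x : ℂ) ^ 3 + (4116571534393344 : ℂ) * Complex.I * eu t ^ 5 * ev x ^ 11 * (x : ℂ) ^ 3 * (t : ℂ) + (189995609279692800 : ℂ) * Complex.I * eu t ^ 5 * ev x ^ 11 * (x : ℂ) ^ 3 * (t : ℂ) ^ 2 + (-85761906966528 : ℂ) * Complex.I * eu t ^ 5 * ev x ^ 11 * (x : ℂ) ^ 4 + (-7916483719987200 : ℂ) * Complex.I * eu t ^ 5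 * ev x ^ 11 * (x : ℂ) ^ 4 * (t : ℂ) + (131941395333120 : ℂ) * Complex.I * eu t ^ 5 * ev x ^ 11 * (x : ℂ) ^ 5 + (7959648141312 : ℂ) * Complex.I * eu t ^ 7 * ev x ^ 9 + (44066364456960 : ℂ) * Complex.I * eu t ^ 7 * ev x ^ 9 * (t : ℂ) + (-12052846463680512 : ℂ) * Complex.I * eu t ^ 7 * ev x ^ 9 * (t : ℂ) ^ 2 + (-14784033347076096 : ℂ) * Complex.I * eu t ^ 7 * ev x ^ 9 * (t : ℂ) ^ 3 + (624135576483790848 : ℂ) * Complex.I * eu t ^ 7 * ev x ^ 9 * (t : ℂ) ^ 4 + (12311715481324093440 : ℂ) * Complex.I * eu t ^ 7 * ev x ^ 9 * (t : ℂ) ^ 5 + (-3672197038080 : ℂ) * Complex.I * eu t ^ 7 * ev x ^ 9 * (x : ℂ) + (2008807743946752 : ℂ) * Complex.I * eu t ^ 7 * ev x ^ 9 * (x : ℂ) * (t : ℂ) + (3696008336769024 : ℂ) * Complex.I * eu t ^ 7 * ev x ^ 9 * (x : ℂ) * (t : ℂ) ^ 2 + (-208045192161263616 : ℂ) * Complex.I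 * eu t ^ 7 * ev x ^ 9 * (x : ℂ) * (t : ℂ) ^ 3 + (-5129881450551705600 : ℂ) * Complex.I * eu t ^ 7 * ev x ^ 9 * (x : ℂ) * (t : ℂ) ^ 4 + (-83700322664448 : ℂ) * Complex.I * eu t ^ 7 * ev x ^ 9 * (x : ℂ) ^ 2 + (-308000694730752 : ℂ) * Complex.I * eu t ^ 7 * ev x ^ 9 * (x : ℂ) ^ 2 * (t : ℂ) + (26005649020157952 : ℂ) * Complex.I * eu t ^ 7 * ev x ^ 9 * (x : ℂ) ^ 2 * (t : ℂ) ^ 2 + (854980241758617600 : ℂ) * Complex.I * eu t ^ 7 * ev x ^ 9 * (x : ℂ) ^ 2 * (t : ℂ) ^ 3 + (8555574853632 : ℂ) * Complex.I * eu t ^ 7 * ev x ^ 9 * (x : ℂ) ^ 3 + (-1444758278897664 : ℂ) * Complex.I * eu t ^ 7 * ev x ^ 9 * (x : ℂ) ^ 3 * (t : ℂ) + (-71248353479884800 : ℂ) * Complex.I * eu t ^ 7 * ev x ^ 9 * (x : ℂ) ^ 3 * (t : ℂ) ^ 2 + (30099130810368 : ℂ) * Complex.I * eu t ^ 7 * ev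 x ^ 9 * (x : ℂ) ^ 4 + (2968681394995200 : ℂ) * Complex.I * eu t ^ 7 * ev x ^ 9 * (x : ℂ) ^ 4 * (t : ℂ) + (-49478023249920 : ℂ) * Complex.I * eu t ^ 7 * ev x ^ 9 * (x : ℂ) ^ 5 + (5186374336512 : ℂ) * Complex.I * eu t ^ 9 * ev x ^ 7 + (-258406707363840 : ℂ) * Complex.I * eu t ^ 9 * ev x ^ 7 * (t : ℂ) + (-1706527945654272 : ℂ) * Complex.I * eu t ^ 9 * ev x ^ 7 * (t : ℂ) ^ 2 + (132110032929030144 : ℂ) * Complex.I * eu t ^ 9 * ev x ^ 7 * (t : ℂ) ^ 3 + (-1320944473517064192 : ℂ) * Complex.I * eu t ^ 9 * ev x ^ 7 * (t : ℂ) ^ 4 + (4616893305496535040 : ℂ) * Complex.I * eu t ^ 9 * ev x ^ 7 * (t : ℂ) ^ 5 + (21533892280320 : ℂ) * Complex.I * eu t ^ 9 * ev x ^ 7 * (x : ℂ) + (284421324275712 : ℂ) * Complex.I * eu t ^ 9 * ev x ^ 7 * (x : ℂ) * (t : ℂ) + (-33027508232257536 : ℂ) * Complex.I * eu t ^ 9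 * ev x ^ 7 * (x : ℂ) * (t : ℂ) ^ 2 + (440314824505688064 : ℂ) * Complex.I * eu t ^ 9 * ev x ^ 7 * (x : ℂ) * (t : ℂ) ^ 3 + (-1923705543956889600 : ℂ) * Complex.I * eu t ^ 9 * ev x ^ 7 * (x : ℂ) * (t : ℂ) ^ 4 + (-11850888511488 : ℂ) * Complex.I * eu t ^ 9 * ev x ^ 7 * (x : ℂ) ^ 2 + (2752292352688128 : ℂ) * Complex.I * eu t ^ 9 * ev x ^ 7 * (x : ℂ) ^ 2 * (t : ℂ) + (-55039353063211008 : ℂ) * Complex.I * eu t ^ 9 * ev x ^ 7 * (x : ℂ) ^ 2 * (t : ℂ) ^ 2 + (320617590659481600 : ℂ) * Complex.I * eu t ^ 9 * ev x ^ 7 * (x : ℂ) ^ 2 * (t : ℂ) ^ 3 + (-76452565352448 : ℂ) * Complex.I * eu t ^ 9 * ev x ^ 7 * (x : ℂ) ^ 3 + (3057741836845056 : ℂ) * Complex.I * eu t ^ 9 * ev x ^ 7 * (x : ℂ) ^ 3 * (t : ℂ) + (-26718132554956800 : ℂ) * Complex.I * eu t ^ 9 * ev x ^ 7 * (x : ℂ)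 ^ 3 * (t : ℂ) ^ 2 + (-63702954934272 : ℂ) * Complex.I * eu t ^ 9 * ev x ^ 7 * (x : ℂ) ^ 4 + (1113255523123200 : ℂ) * Complex.I * eu t ^ 9 * ev x ^ 7 * (x : ℂ) ^ 4 * (t : ℂ) + (-18554258718720 : ℂ) * Complex.I * eu t ^ 9 * ev x ^ 7 * (x : ℂ) ^ 5 + (1041053515776 : ℂ) * Complex.I * eu t ^ 11 * ev x ^ 5 + (-130679782244352 : ℂ) * Complex.I * eu t ^ 11 * ev x ^ 5 * (t : ℂ) + (4352292761370624 : ℂ) * Complex.I * eu t ^ 11 * ev x ^ 5 * (t : ℂ) ^ 2 + (-65112923978072064 : ℂ) * Complex.I * eu t ^ 11 * ev x ^ 5 * (t : ℂ) ^ 3 + (501365757393764352 : ℂ) * Complex.I * eu t ^ 11 * ev x ^ 5 * (t : ℂ) ^ 4 + (-1731334989561200640 : ℂ) * Complex.I * eu t ^ 11 * ev x ^ 5 * (t : ℂ) ^ 5 + (10889981853696 : ℂ) * Complex.I * eu t ^ 11 * ev x ^ 5 * (x : ℂ) + (-725382126895104 : ℂ) * Complex.I * eu t ^ 11 * ev x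 ^ 5 * (x : ℂ) * (t : ℂ) + (16278230994518016 : ℂ) * Complex.I * eu t ^ 11 * ev x ^ 5 * (x : ℂ) * (t : ℂ) ^ 2 + (-167121919131254784 : ℂ) * Complex.I * eu t ^ 11 * ev x ^ 5 * (x : ℂ) * (t : ℂ) ^ 3 + (721389578983833600 : ℂ) * Complex.I * eu t ^ 11 * ev x ^ 5 * (x : ℂ) * (t : ℂ) ^ 4 + (30224255287296 : ℂ) * Complex.I * eu t ^ 11 * ev x ^ 5 * (x : ℂ) ^ 2 + (-1356519249543168 : ℂ) * Complex.I * eu t ^ 11 * ev x ^ 5 * (x : ℂ) ^ 2 * (t : ℂ) + (20890239891406848 : ℂ) * Complex.I * eu t ^ 11 * ev x ^ 5 * (x : ℂ) ^ 2 * (t : ℂ) ^ 2 + (-120231596497305600 : ℂ) * Complex.I * eu t ^ 11 * ev x ^ 5 * (x : ℂ) ^ 2 * (t : ℂ) ^ 3 + (37681090265088 : ℂ) * Complex.I * eu t ^ 11 * ev x ^ 5 * (x : ℂ) ^ 3 + (-1160568882855936 : ℂ) * Complex.I * eu t ^ 11 * ev x ^ 5 * (x : ℂ) ^ 3 * (t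 : ℂ) + (10019299708108800 : ℂ) * Complex.I * eu t ^ 11 * ev x ^ 5 * (x : ℂ) ^ 3 * (t : ℂ) ^ 2 + (24178518392832 : ℂ) * Complex.I * eu t ^ 11 * ev x ^ 5 * (x : ℂ) ^ 4 + (-417470821171200 : ℂ) * Complex.I * eu t ^ 11 * ev x ^ 5 * (x : ℂ) ^ 4 * (t : ℂ) + (6957847019520 : ℂ) * Complex.I * eu t ^ 11 * ev x ^ 5 * (x : ℂ) ^ 5 + (-127613927424 : ℂ) * Complex.I * eu t ^ 13 * ev x ^ 3 + (5054291509248 : ℂ) * Complex.I * eu t ^ 13 * ev x ^ 3 * (t : ℂ) + (-65262430715904 : ℂ) * Complex.I * eu t ^ 13 * ev x ^ 3 * (t : ℂ) ^ 2 + (272399710814208 : ℂ) * Complex.I * eu t ^ 13 * ev x ^ 3 * (t : ℂ) ^ 3 + (-421190959104 : ℂ) * Complex.I * eu t ^ 13 * ev x ^ 3 * (x : ℂ) + (10877071785984 : ℂ) * Complex.I * eu t ^ 13 * ev x ^ 3 * (x : ℂ) * (t : ℂ) + (-68099927703552 : ℂ) * Complex.I * eu t ^ 13 * ev x ^ 3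 * (x : ℂ) * (t : ℂ) ^ 2 + (-453211324416 : ℂ) * Complex.I * eu t ^ 13 * ev x ^ 3 * (x : ℂ) ^ 2 + (5674993975296 : ℂ) * Complex.I * eu t ^ 13 * ev x ^ 3 * (x : ℂ) ^ 2 * (t : ℂ) + (-157638721536 : ℂ) * Complex.I * eu t ^ 13 * ev x ^ 3 * (x : ℂ) ^ 3) * Complex.I_sq

lemma sKeyB (x t : ℝ) : mkW1B x t * mkD x t ^ 2 + mkN3B x t
    + 3 * (mkA x t * -mkA x t + mkB x t * mkB x t) * mkN1B x t
    + 3 * (-mkA x t * mkN1A x t + mkB x t * mkN1B x t) * mkB x t = 0 := by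
  simp only [mkW1B, mkN3B_c0, mkN3B_c1, mkN3B_c2, mkN3B_c3, mkN3B_c4, mkN3B, mkN1A, mkN1B, mkA, mkB, mkD]
  linear_combination ((-206158430208 : ℂ) * eu t ^ 3 * ev x ^ 13 + (-39582418599936 : ℂ) * eu t ^ 3 * ev x ^ 13 * (t : ℂ) + (-1899956092796928 : ℂ) * eu t ^ 3 * ev x ^ 13 * (t : ℂ) ^ 2 + (-22799473113563136 : ℂ) * eu t ^ 3 * ev x ^ 13 * (t : ℂ) ^ 3 + (3298534883328 : ℂ) * eu t ^ 3 * ev x ^ 13 * (x : ℂ) + (316659348799488 : ℂ) * eu t ^ 3 * ev x ^ 13 * (x : ℂ) * (t : ℂ) + (5699868278390784 : ℂ) * eu t ^ 3 * ev x ^ 13 * (x : ℂ) * (t : ℂ) ^ 2 + (-13194139533312 : ℂ) * eu t ^ 3 * ev x ^ 13 * (x : ℂ) ^ 2 + (-474989023199232 : ℂ) * eu t ^ 3 * ev x ^ 13 * (x : ℂ) ^ 2 * (t : ℂ) + (13194139533312 : ℂ) * eu t ^ 3 * ev x ^ 13 * (x : ℂ) ^ 3 + (-1017907249152 : ℂ)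 * eu t ^ 5 * ev x ^ 11 + (-110707077021696 : ℂ) * eu t ^ 5 * ev x ^ 11 * (t : ℂ) + (-1009351674298368 : ℂ) * eu t ^ 5 * ev x ^ 11 * (t : ℂ) ^ 2 + (62698551062298624 : ℂ) * eu t ^ 5 * ev x ^ 11 * (t : ℂ) ^ 3 + (547187354725515264 : ℂ) * eu t ^ 5 * ev x ^ 11 * (t : ℂ) ^ 4 + (16415620641765457920 : ℂ) * eu t ^ 5 * ev x ^ 11 * (t : ℂ) ^ 5 + (9225589751808 : ℂ) * eu t ^ 5 * ev x ^ 11 * (x : ℂ) + (168225279049728 : ℂ) * eu t ^ 5 * ev x ^ 11 * (x : ℂ) * (t : ℂ) + (-15674637765574656 : ℂ) * eu t ^ 5 * ev x ^ 11 * (x : ℂ) * (t : ℂ) ^ 2 + (-182395784908505088 : ℂ) * eu t ^ 5 * ev x ^ 11 * (x : ℂ) * (t : ℂ) ^ 3 + (-6839841934068940800 : ℂ) * eu t ^ 5 * ev x ^ 11 * (x : ℂ) * (t : ℂ) ^ 4 + (-7009386627072 : ℂ) * eu t ^ 5 * ev x ^ 11 * (x : ℂ) ^ 2 + (1306219813797888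 : ℂ) * eu t ^ 5 * ev x ^ 11 * (x : ℂ) ^ 2 * (t : ℂ) + (22799473113563136 : ℂ) * eu t ^ 5 * ev x ^ 11 * (x : ℂ) ^ 2 * (t : ℂ) ^ 2 + (1139973655678156800 : ℂ) * eu t ^ 5 * ev x ^ 11 * (x : ℂ) ^ 2 * (t : ℂ) ^ 3 + (-36283883716608 : ℂ) * eu t ^ 5 * ev x ^ 11 * (x : ℂ) ^ 3 + (-1266637395197952 : ℂ) * eu t ^ 5 * ev x ^ 11 * (x : ℂ) ^ 3 * (t : ℂ) + (-94997804639846400 : ℂ) * eu t ^ 5 * ev x ^ 11 * (x : ℂ) ^ 3 * (t : ℂ) ^ 2 + (26388279066624 : ℂ) * eu t ^ 5 * ev x ^ 11 * (x : ℂ) ^ 4 + (3958241859993600 : ℂ) * eu t ^ 5 * ev x ^ 11 * (x : ℂ) ^ 4 * (t : ℂ) + (-65970697666560 : ℂ) * eu t ^ 5 * ev x ^ 11 * (x : ℂ) ^ 5 + (-1786169524224 : ℂ) * eu t ^ 7 * ev x ^ 9 + (-65403761983488 : ℂ) * eu t ^ 7 * ev x ^ 9 * (t : ℂ) + (3432537862963200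 : ℂ) * eu t ^ 7 * ev x ^ 9 * (t : ℂ) ^ 2 + (21018264276566016 : ℂ) * eu t ^ 7 * ev x ^ 9 * (t : ℂ) ^ 3 + (29924308461551616 : ℂ) * eu t ^ 7 * ev x ^ 9 * (t : ℂ) ^ 4 + (-6155857740662046720 : ℂ) * eu t ^ 7 * ev x ^ 9 * (t : ℂ) ^ 5 + (5450313498624 : ℂ) * eu t ^ 7 * ev x ^ 9 * (x : ℂ) + (-572089643827200 : ℂ) * eu t ^ 7 * ev x ^ 9 * (x : ℂ) * (t : ℂ) + (-5254566069141504 : ℂ) * eu t ^ 7 * ev x ^ 9 * (x : ℂ) * (t : ℂ) ^ 2 + (-9974769487183872 : ℂ) * eu t ^ 7 * ev x ^ 9 * (x : ℂ) * (t : ℂ) ^ 3 + (2564940725275852800 : ℂ) * eu t ^ 7 * ev x ^ 9 * (x : ℂ) * (t : ℂ) ^ 4 + (23837068492800 : ℂ) * eu t ^ 7 * ev x ^ 9 * (x : ℂ) ^ 2 + (437880505761792 : ℂ) * eu t ^ 7 * ev x ^ 9 * (x : ℂ) ^ 2 * (t : ℂ) + (1246846185897984 : ℂ) * eu t ^ 7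 * ev x ^ 9 * (x : ℂ) ^ 2 * (t : ℂ) ^ 2 + (-427490120879308800 : ℂ) * eu t ^ 7 * ev x ^ 9 * (x : ℂ) ^ 2 * (t : ℂ) ^ 3 + (-12163347382272 : ℂ) * eu t ^ 7 * ev x ^ 9 * (x : ℂ) ^ 3 + (-69269232549888 : ℂ) * eu t ^ 7 * ev x ^ 9 * (x : ℂ) ^ 3 * (t : ℂ) + (35624176739942400 : ℂ) * eu t ^ 7 * ev x ^ 9 * (x : ℂ) ^ 3 * (t : ℂ) ^ 2 + (1443109011456 : ℂ) * eu t ^ 7 * ev x ^ 9 * (x : ℂ) ^ 4 + (-1484340697497600 : ℂ) * eu t ^ 7 * ev x ^ 9 * (x : ℂ) ^ 4 * (t : ℂ) + (24739011624960 : ℂ) * eu t ^ 7 * ev x ^ 9 * (x : ℂ) ^ 5 + (-1306106265600 : ℂ) * eu t ^ 9 * ev x ^ 7 + (37722160889856 : ℂ) * eu t ^ 9 * ev x ^ 7 * (t : ℂ) + (1426590567235584 : ℂ) * eu t ^ 9 * ev x ^ 7 * (t : ℂ) ^ 2 + (-37294060024627200 : ℂ) * eu t ^ 9 * ev x ^ 7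 * (t : ℂ) ^ 3 + (228974395995979776 : ℂ) * eu t ^ 9 * ev x ^ 7 * (t : ℂ) ^ 4 + (-384741108791377920 : ℂ) * eu t ^ 9 * ev x ^ 7 * (t : ℂ) ^ 5 + (-3143513407488 : ℂ) * eu t ^ 9 * ev x ^ 7 * (x : ℂ) + (-237765094539264 : ℂ) * eu t ^ 9 * ev x ^ 7 * (x : ℂ) * (t : ℂ) + (9323515006156800 : ℂ) * eu t ^ 9 * ev x ^ 7 * (x : ℂ) * (t : ℂ) ^ 2 + (-76324798665326592 : ℂ) * eu t ^ 9 * ev x ^ 7 * (x : ℂ) * (t : ℂ) ^ 3 + (160308795329740800 : ℂ) * eu t ^ 9 * ev x ^ 7 * (x : ℂ) * (t : ℂ) ^ 4 + (9906878939136 : ℂ) * eu t ^ 9 * ev x ^ 7 * (x : ℂ) ^ 2 + (-776959583846400 : ℂ) * eu t ^ 9 * ev x ^ 7 * (x : ℂ) ^ 2 * (t : ℂ) + (9540599833165824 : ℂ) * eu t ^ 9 * ev x ^ 7 * (x : ℂ) ^ 2 * (t : ℂ) ^ 2 + (-26718132554956800 : ℂ) * eu t ^ 9 * ev x ^ 7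 * (x : ℂ) ^ 2 * (t : ℂ) ^ 3 + (21582210662400 : ℂ) * eu t ^ 9 * ev x ^ 7 * (x : ℂ) ^ 3 + (-530033324064768 : ℂ) * eu t ^ 9 * ev x ^ 7 * (x : ℂ) ^ 3 * (t : ℂ) + (2226511046246400 : ℂ) * eu t ^ 9 * ev x ^ 7 * (x : ℂ) ^ 3 * (t : ℂ) ^ 2 + (11042360918016 : ℂ) * eu t ^ 9 * ev x ^ 7 * (x : ℂ) ^ 4 + (-92771293593600 : ℂ) * eu t ^ 9 * ev x ^ 7 * (x : ℂ) ^ 4 * (t : ℂ) + (1546188226560 : ℂ) * eu t ^ 9 * ev x ^ 7 * (x : ℂ) ^ 5 + (-306837454848 : ℂ) * eu t ^ 11 * ev x ^ 5 + (30159126134784 : ℂ) * eu t ^ 11 * ev x ^ 5 * (t : ℂ) + (-812662036365312 : ℂ) * eu t ^ 11 * ev x ^ 5 * (t : ℂ) ^ 2 + (9582694807633920 : ℂ) * eu t ^ 11 * ev x ^ 5 * (t : ℂ) ^ 3 + (-56308464359571456 : ℂ) * eu t ^ 11 * ev x ^ 5 * (t : ℂ) ^ 4 + (144277915796766720 : ℂ)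 * eu t ^ 11 * ev x ^ 5 * (t : ℂ) ^ 5 + (-2513260511232 : ℂ) * eu t ^ 11 * ev x ^ 5 * (x : ℂ) + (135443672727552 : ℂ) * eu t ^ 11 * ev x ^ 5 * (x : ℂ) * (t : ℂ) + (-2395673701908480 : ℂ) * eu t ^ 11 * ev x ^ 5 * (x : ℂ) * (t : ℂ) ^ 2 + (18769488119857152 : ℂ) * eu t ^ 11 * ev x ^ 5 * (x : ℂ) * (t : ℂ) ^ 3 + (-60115798248652800 : ℂ) * eu t ^ 11 * ev x ^ 5 * (x : ℂ) * (t : ℂ) ^ 4 + (-5643486363648 : ℂ) * eu t ^ 11 * ev x ^ 5 * (x : ℂ) ^ 2 + (199639475159040 : ℂ) * eu t ^ 11 * ev x ^ 5 * (x : ℂ) ^ 2 * (t : ℂ) + (-2346186014982144 : ℂ) * eu t ^ 11 * ev x ^ 5 * (x : ℂ) ^ 2 * (t : ℂ) ^ 2 + (10019299708108800 : ℂ) * eu t ^ 11 * ev x ^ 5 * (x : ℂ) ^ 2 * (t : ℂ) ^ 3 + (-5545540976640 : ℂ) * eu t ^ 11 * ev x ^ 5 * (x : ℂ) ^ 3 +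 (130343667499008 : ℂ) * eu t ^ 11 * ev x ^ 5 * (x : ℂ) ^ 3 * (t : ℂ) + (-834941642342400 : ℂ) * eu t ^ 11 * ev x ^ 5 * (x : ℂ) ^ 3 * (t : ℂ) ^ 2 + (-2715493072896 : ℂ) * eu t ^ 11 * ev x ^ 5 * (x : ℂ) ^ 4 + (34789235097600 : ℂ) * eu t ^ 11 * ev x ^ 5 * (x : ℂ) ^ 4 * (t : ℂ) + (-579820584960 : ℂ) * eu t ^ 11 * ev x ^ 5 * (x : ℂ) ^ 5 + (23724490752 : ℂ) * eu t ^ 13 * ev x ^ 3 + (-770404515840 : ℂ) * eu t ^ 13 * ev x ^ 3 * (t : ℂ) + (7724297355264 : ℂ) * eu t ^ 13 * ev x ^ 3 * (t : ℂ) ^ 2 + (-22699975901184 : ℂ) * eu t ^ 13 * ev x ^ 3 * (t : ℂ) ^ 3 + (64200376320 : ℂ) * eu t ^ 13 * ev x ^ 3 * (x : ℂ) + (-1287382892544 : ℂ) * eu t ^ 13 * ev x ^ 3 * (x : ℂ) * (t : ℂ) + (5674993975296 : ℂ) * eu t ^ 13 * ev x ^ 3 * (x : ℂ) * (t : ℂ)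 ^ 2 + (53640953856 : ℂ) * eu t ^ 13 * ev x ^ 3 * (x : ℂ) ^ 2 + (-472916164608 : ℂ) * eu t ^ 13 * ev x ^ 3 * (x : ℂ) ^ 2 * (t : ℂ) + (13136560128 : ℂ) * eu t ^ 13 * ev x ^ 3 * (x : ℂ) ^ 3) * Complex.I_sq

lemma mkKeyA (x t : ℝ) : (mkAt x t * mkD x t - mkA x t * mkDt x t) * mkD x t ^ 2
      + (((mkAxxx x t * mkD x t + mkAxx x t * mkDx x t - mkAx x t * mkDxx x t - mkA x t * mkDxxx x t) * mkD x t - (mkAxx x t * mkD x t - mkA x t * mkDxx x t) * mkDx x t - 2 * ((mkAx x t * mkD x t - mkA x t * mkDx x t) * mkDxx x t)) * mkD x t - 3 * (((mkAxx x t * mkD x t - mkA x t * mkDxx x t) * mkD x t - 2 * ((mkAx x t * mkD x t - mkA x t * mkDx x t) * mkDx x t)) * mkDx x t))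
      + 3 * (mkA x t * -mkA x t + mkB x t * mkB x t) * (mkAx x t * mkD x t - mkA x t * mkDx x t)
      + 3 * (-mkA x t * (mkAx x t * mkD x t - mkA x t * mkDx x t) + mkB x t * (mkBx x t * mkD x t - mkB x t * mkDx x t)) * mkA x t = 0 := by
  rw [sN1A, sN1B, sMA, sMpA, sN2A, sN3A, sW1A]
  linear_combination sKeyA x t

lemma mkKeyB (x t : ℝ) : (mkBt x t * mkD x t - mkB x t * mkDt x t) * mkD x t ^ 2
      + (((mkBxxx x t * mkD x t + mkBxx x t * mkDx x t - mkBx x t * mkDxx x t - mkB x t * mkDxxx x t) * mkD x t - (mkBxx x t * mkD x t - mkB x t * mkDxx x t) * mkDx x t - 2 * ((mkBx x t * mkD x t - mkB x t * mkDx x t) * mkDxx x t)) * mkD x t - 3 * (((mkBxx x t * mkD x t - mkB x t * mkDxx x t) * mkD x t - 2 * ((mkBx x t * mkD x t - mkB x t * mkDx x t) * mkDx x t)) * mkDx x t))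
      + 3 * (mkA x t * -mkA x t + mkB x t * mkB x t) * (mkBx x t * mkD x t - mkB x t * mkDx x t)
      + 3 * (-mkA x t * (mkAx x t * mkD x t - mkA x t * mkDx x t) + mkB x t * (mkBx x t * mkD x t - mkB x t * mkDx x t)) * mkB x t = 0 := by
  rw [sN1A, sN1B, sMB, sMpB, sN2B, sN3B, sW1B]
  linear_combination sKeyB x t

set_option maxHeartbeats 4000000 in
theorem second_order_pole_solution_mKdV
    (D : ℝ → ℝ → ℝ)
    (hD : ∀ x t : ℝ, D x t =
      32 * Real.exp (4 * (4 * t + x)) * (5760 * t ^ 2 - 96 * t * (10 * x + 3)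
        + 8 * x * (5 * x + 3) + 9) + 29 * Real.exp (32 * t)
        + 256 * Real.exp (8 * x))
    (q₁ q₂ : ℝ → ℝ → ℂ)
    (hq₁ : ∀ x t : ℝ, q₁ x t =
      32 * Complex.I * Complex.exp (8 * (t : ℂ) + 2 * (x : ℂ)) *
        (Complex.exp (16 * (t : ℂ)) * (-288 * (t : ℂ) + 24 * (x : ℂ) + 19)
          + 16 * Complex.exp (4 * (x : ℂ)) *
            (48 * (t : ℂ) - 4 * (x : ℂ) + 1)) / ((D x t : ℝ) : ℂ))
    (hq₂ : ∀ x t : ℝ, q₂ x t =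
      (1024 * Complex.exp (8 * (t : ℂ) + 6 * (x : ℂ)) * ((x : ℂ) - 12 * (t : ℂ))
        - 64 * Complex.exp (24 * (t : ℂ) + 2 * (x : ℂ)) *
            (-12 * (t : ℂ) + (x : ℂ) + 2)) / ((D x t : ℝ) : ℂ)) :
    (∀ x t : ℝ, 0 < D x t) ∧
    (∀ x t : ℝ, ∀ q ∈ ([q₁, q₂] : List (ℝ → ℝ → ℂ)),
      deriv (fun t' : ℝ => q x t') t
        + iteratedDeriv 3 (fun x' : ℝ => q x' t) x
        + 3 * (((‖q₁ x t‖ : ℝ) : ℂ) ^ 2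
            + ((‖q₂ x t‖ : ℝ) : ℂ) ^ 2) *
            deriv (fun x' : ℝ => q x' t) x
        + 3 * ((starRingEnd ℂ) (q₁ x t) * deriv (fun x' : ℝ => q₁ x' t) x
            + (starRingEnd ℂ) (q₂ x t) * deriv (fun x' : ℝ => q₂ x' t) x) *
            q x t = 0) := by
  have hDC : ∀ x t : ℝ, ((D x t : ℝ) : ℂ) = mkD x t := by
    intro x t
    rw [hD]
    push_cast
    rw [cexp_two (8*t) (2*x) 2 2 (4*(4*(t:ℂ)+(x:ℂ))) (by push_cast; ring),
      cexp_pow (8*t) 4 (32*(t:ℂ)) (by push_cast; ring),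
      cexp_pow (2*x) 4 (8*(x:ℂ)) (by push_cast; ring)]
    simp only [mkD, eu, ev]
    push_cast
    ring
  have hDpos : ∀ x t : ℝ, 0 < D x t := by
    intro x t
    have h := mkD_pos_aux x t
    have h2 : ((D x t : ℝ) : ℂ) = _ := (hDC x t).trans (mkD_real x t)
    have h3 : D x t = 32 * Real.exp (8*t) ^ 2 * Real.exp (2*x) ^ 2 *
      (5760*t^2 - 960*t*x - 288*t + 40*x^2 + 24*x + 9)
      + 29 * Real.exp (8*t) ^ 4 + 256 * Real.exp (2*x) ^ 4 := by exact_mod_cast h2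
    rw [h3]; exact h
  have hq1e : ∀ x t : ℝ, q₁ x t = mkA x t / mkD x t := by
    intro x t
    rw [hq₁, hDC]
    rw [cexp_two (8*t) (2*x) 1 1 (8*(t:ℂ)+2*(x:ℂ)) (by push_cast; ring),
      cexp_pow (8*t) 2 (16*(t:ℂ)) (by push_cast; ring),
      cexp_pow (2*x) 2 (4*(x:ℂ)) (by push_cast; ring)]
    simp only [mkA, eu, ev]
    ring
  have hq2e : ∀ x t : ℝ, q₂ x t = mkB x t / mkD x t := by
    intro x t
    rw [hq₂, hDC]
    rw [cexp_two (8*t) (2*x) 1 3 (8*(t:ℂ)+6*(x:ℂ)) (by push_cast; ring),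
      cexp_two (8*t) (2*x) 3 1 (24*(t:ℂ)+2*(x:ℂ)) (by push_cast; ring)]
    simp only [mkB, eu, ev]
    ring
  refine ⟨hDpos, ?_⟩
  intro x t q hq
  have e1A : (fun x' : ℝ => q₁ x' t) = fun x' => mkA x' t / mkD x' t :=
    funext fun x' => hq1e x' t
  have e1B : (fun x' : ℝ => q₂ x' t) = fun x' => mkB x' t / mkD x' t :=
    funext fun x' => hq2e x' t
  have hd1A : deriv (fun x' : ℝ => q₁ x' t) = fun x' => mkG1A x' t := by
    rw [e1A]; exact funext fun y => (hQ1A y t).deriv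
  have hd1B : deriv (fun x' : ℝ => q₂ x' t) = fun x' => mkG1B x' t := by
    rw [e1B]; exact funext fun y => (hQ1B y t).deriv
  have hq1x : deriv (fun x' : ℝ => q₁ x' t) x = mkG1A x t := by rw [hd1A]
  have hq2x : deriv (fun x' : ℝ => q₂ x' t) x = mkG1B x t := by rw [hd1B]
  have ht1 : deriv (fun t' : ℝ => q₁ x t') t = mkGtA x t := by
    rw [show (fun t' : ℝ => q₁ x t') = fun t' => mkA x t' / mkD x t' from
      funext fun t' => hq1e x t']
    exact (hQtA x t).deriv
  have ht2 : deriv (fun t' : ℝ => q₂ x t') t = mkGtB x t := by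
    rw [show (fun t' : ℝ => q₂ x t') = fun t' => mkB x t' / mkD x t' from
      funext fun t' => hq2e x t']
    exact (hQtB x t).deriv
  have h3A : iteratedDeriv 3 (fun x' : ℝ => q₁ x' t) x = mkG3A x t := by
    rw [show (3:ℕ) = 2+1 from rfl, iteratedDeriv_succ,
      show (2:ℕ) = 1+1 from rfl, iteratedDeriv_succ, iteratedDeriv_one,
      hd1A, show deriv (fun x' : ℝ => mkG1A x' t) = fun x' => mkG2A x' t from
        funext fun y => (hQ2A y t).deriv]
    exact (hQ3A x t).deriv
  have h3B : iteratedDeriv 3 (fun x' : ℝ => q₂ x' t) x = mkG3B x t := by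
    rw [show (3:ℕ) = 2+1 from rfl, iteratedDeriv_succ,
      show (2:ℕ) = 1+1 from rfl, iteratedDeriv_succ, iteratedDeriv_one,
      hd1B, show deriv (fun x' : ℝ => mkG1B x' t) = fun x' => mkG2B x' t from
        funext fun y => (hQ2B y t).deriv]
    exact (hQ3B x t).deriv
  have hDn := mkD_ne x t
  simp only [List.mem_cons, List.not_mem_nil, or_false] at hq
  rcases hq with h | h
  · rw [h, ht1, h3A, hq1x, hq2x, habs (q₁ x t), habs (q₂ x t), hq1e x t, hq2e x t,
      map_div₀, map_div₀, mkA_conj, mkB_conj, mkD_conj]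
    simp only [mkGtA, mkG3A, mkG1A, mkG1B]
    have h2 : ((mkAt x t * mkD x t - mkA x t * mkDt x t) * mkD x t ^ 2
      + (((mkAxxx x t * mkD x t + mkAxx x t * mkDx x t - mkAx x t * mkDxx x t - mkA x t * mkDxxx x t) * mkD x t - (mkAxx x t * mkD x t - mkA x t * mkDxx x t) * mkDx x t - 2 * ((mkAx x t * mkD x t - mkA x t * mkDx x t) * mkDxx x t)) * mkD x t - 3 * (((mkAxx x t * mkD x t - mkA x t * mkDxx x t) * mkD x t - 2 * ((mkAx x t * mkD x t - mkA x t * mkDx x t) * mkDx x t)) * mkDx x t))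
      + 3 * (mkA x t * -mkA x t + mkB x t * mkB x t) * (mkAx x t * mkD x t - mkA x t * mkDx x t)
      + 3 * (-mkA x t * (mkAx x t * mkD x t - mkA x t * mkDx x t) + mkB x t * (mkBx x t * mkD x t - mkB x t * mkDx x t)) * mkA x t) / mkD x t ^ 4 = (0 : ℂ) := by
      rw [mkKeyA x t]; exact zero_div _
    have hinv : mkD x t * (mkD x t)⁻¹ = 1 := mul_inv_cancel₀ hDn
    linear_combination (mkD x t ^ 4)⁻¹ * mkKeyA x t
      - ((mkAt x t * mkD x t - mkA x t * mkDt x t) * (mkD x t)⁻¹ ^ 2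
        * (mkD x t * (mkD x t)⁻¹ + 1)) * hinv
  · rw [h, ht2, h3B, hq1x, hq2x, habs (q₁ x t), habs (q₂ x t), hq1e x t, hq2e x t,
      map_div₀, map_div₀, mkA_conj, mkB_conj, mkD_conj]
    simp only [mkGtB, mkG3B, mkG1A, mkG1B]
    have h2 : ((mkBt x t * mkD x t - mkB x t * mkDt x t) * mkD x t ^ 2
      + (((mkBxxx x t * mkD x t + mkBxx x t * mkDx x t - mkBx x t * mkDxx x t - mkB x t * mkDxxx x t) * mkD x t - (mkBxx x t * mkD x t - mkB x t * mkDxx x t) * mkDx x t - 2 * ((mkBx x t * mkD x t - mkB x t * mkDx x t) * mkDxx x t)) * mkD x t - 3 * (((mkBxx x t * mkD x t - mkB x t * mkDxx x t) * mkD x t - 2 * ((mkBx x t * mkD x t - mkB x t * mkDx x t) * mkDx x t)) * mkDx x t))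
      + 3 * (mkA x t * -mkA x t + mkB x t * mkB x t) * (mkBx x t * mkD x t - mkB x t * mkDx x t)
      + 3 * (-mkA x t * (mkAx x t * mkD x t - mkA x t * mkDx x t) + mkB x t * (mkBx x t * mkD x t - mkB x t * mkDx x t)) * mkB x t) / mkD x t ^ 4 = (0 : ℂ) := by
      rw [mkKeyB x t]; exact zero_div _
    have hinv : mkD x t * (mkD x t)⁻¹ = 1 := mul_inv_cancel₀ hDn
    linear_combination (mkD x t ^ 4)⁻¹ * mkKeyB x t
      - ((mkBt x t * mkD x t - mkB x t * mkDt x t) * (mkD x t)⁻¹ ^ 2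
        * (mkD x t * (mkD x t)⁻¹ + 1)) * hinv
end
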